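/- arXiv:0705.3076 — 2 statements merged into one kernel-verified Lean document; each statement's English description precedes it below -/
import Mathlib

section
/- Let p and q be positive integers, n = p + q, and let τ be a permutation in S^B_nc(p,q). Then τ cannot have an orbit which is both γ-connected and inversion-invariant; that is, no orbit A of τ satisfies simultaneously A = −A and A ∩ Y ≠ ∅ ≠ A ∩ Z. -/
open Equiv

noncomputable section

open scoped Classical

namespace AnnularNC

/-- The ground set `X = {1,…,n} ∪ {−1,…,−n}`, as a set of integers. -/
def Xset (n : ℕ) : Set ℤ := {i : ℤ | i ≠ 0 ∧ i.natAbs ≤ n}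

/-- `Y = {1,…,p} ∪ {−1,…,−p}` (outer circle of the annulus). -/
def Yset (p : ℕ) : Set ℤ := Xset p

/-- `Z = {p+1,…,n} ∪ {−(p+1),…,−n}` (inner circle of the annulus), where `n = p+q`. -/
def Zset (p q : ℕ) : Set ℤ := Xset (p + q) \ Xset p

/-- The image `−A` of a set `A ⊆ ℤ` under negation. -/
def negSet (A : Set ℤ) : Set ℤ := (fun x : ℤ => -x) '' A

/-- Permutations of `ℤ` supported in `Xset n`; these model the permutations of `X`. -/
def SX (n : ℕ) : Set (Equiv.Perm ℤ) := {τ | ∀ i : ℤ, i ∉ Xset n → τ i = i}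

/-- The hyperoctahedral group `B_n`: permutations `τ` of `X` with `τ(−i) = −τ(i)`. -/
def Bgrp (n : ℕ) : Set (Equiv.Perm ℤ) :=
  {τ | τ ∈ SX n ∧ ∀ i : ℤ, τ (-i) = -(τ i)}

/-- Orbit equivalence relation generated by a function `f : ℤ → ℤ`. -/
def orbRel (f : ℤ → ℤ) : ℤ → ℤ → Prop := Relation.EqvGen (fun x y => f x = y)

/-- Joint orbit equivalence relation generated by two functions. -/
def orbRel2 (f g : ℤ → ℤ) : ℤ → ℤ → Prop :=
  Relation.EqvGen (fun x y => f x = y ∨ g x = y)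

/-- The orbit of `a` under `f`. -/
def orbOf (f : ℤ → ℤ) (a : ℤ) : Set ℤ := {b | orbRel f a b}

/-- The set of orbits of `f` meeting the ground set `A`. -/
def orbSet (f : ℤ → ℤ) (A : Set ℤ) : Set (Set ℤ) := {O | ∃ a ∈ A, O = orbOf f a}

/-- The set of joint orbits of `f` and `g` meeting the ground set `A`. -/
def orbSet2 (f g : ℤ → ℤ) (A : Set ℤ) : Set (Set ℤ) :=
  {O | ∃ a ∈ A, O = {b | orbRel2 f g a b}}

/-- `#(f)` : the number of orbits of `f` on the ground set `A`. -/
def nOrb (f : ℤ → ℤ) (A : Set ℤ) : ℕ := (orbSet f A).ncard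

/-- `#(f,g)` : the number of orbits on `A` of the group generated by `f` and `g`. -/
def nOrb2 (f g : ℤ → ℤ) (A : Set ℤ) : ℕ := (orbSet2 f g A).ncard

/-- The permutation `γ = (1,…,p,−1,…,−p)(p+1,…,n,−(p+1),…,−n)`. -/
def gammaB (p q : ℕ) : Equiv.Perm ℤ :=
  (((List.range p).map (fun k : ℕ => ((k + 1 : ℕ) : ℤ))) ++
      ((List.range p).map (fun k : ℕ => -((k + 1 : ℕ) : ℤ)))).formPerm *
    (((List.range q).map (fun k : ℕ => ((p + k + 1 : ℕ) : ℤ))) ++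
      ((List.range q).map (fun k : ℕ => -((p + k + 1 : ℕ) : ℤ)))).formPerm

/-- The set `S_nc(X,γ)` of annular non-crossing permutations (genus-zero condition):
`#(τ) + #(τ⁻¹γ) + #(γ) = |X| + 2·#(τ,γ)`, with `|X| = 2(p+q)`. -/
def Snc (p q : ℕ) : Set (Equiv.Perm ℤ) :=
  {τ | τ ∈ SX (p + q) ∧
    nOrb ⇑τ (Xset (p + q)) + nOrb ⇑(τ⁻¹ * gammaB p q) (Xset (p + q)) +
        nOrb ⇑(gammaB p q) (Xset (p + q)) =
      2 * (p + q) + 2 * nOrb2 ⇑τ ⇑(gammaB p q) (Xset (p + q))}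

/-- `S^B_nc(p,q) = S_nc(X,γ) ∩ B_n`. -/
def SBnc (p q : ℕ) : Set (Equiv.Perm ℤ) := Snc p q ∩ Bgrp (p + q)

/-- The generating set of `B_n` used to define the length function `ℓ_B`. -/
def genB (n : ℕ) : Set (Equiv.Perm ℤ) :=
  {g | ∃ i j : ℤ, 1 ≤ i ∧ i < j ∧ j ≤ (n : ℤ) ∧
      (g = Equiv.swap i j * Equiv.swap (-i) (-j) ∨
        g = Equiv.swap i (-j) * Equiv.swap (-i) j)} ∪
  {g | ∃ i : ℤ, 1 ≤ i ∧ i ≤ (n : ℤ) ∧ g = Equiv.swap i (-i)}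

/-- The length function `ℓ_B` on `B_n`. -/
def lenB (n : ℕ) (τ : Equiv.Perm ℤ) : ℕ :=
  sInf {k | ∃ l : List (Equiv.Perm ℤ), l.length = k ∧ (∀ g ∈ l, g ∈ genB n) ∧ l.prod = τ}

/-- The partial order on `B_n` induced by `ℓ_B`. -/
def leB (n : ℕ) (σ τ : Equiv.Perm ℤ) : Prop :=
  lenB n τ = lenB n σ + lenB n (σ⁻¹ * τ)

/-- `Ω(τ)` : the partition of `X` into the orbits of `τ`. -/
def Om (n : ℕ) (τ : Equiv.Perm ℤ) : Set (Set ℤ) := orbSet ⇑τ (Xset n)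

/-- A zero-block (inversion-invariant set): `A = −A`. -/
def IsZeroBlock (A : Set ℤ) : Prop := negSet A = A

/-- `Ω̃(τ)` : the partition obtained from `Ω(τ)` by merging all of its
zero-blocks into a single block. -/
def Omt (n : ℕ) (τ : Equiv.Perm ℤ) : Set (Set ℤ) :=
  {A | A ∈ Om n τ ∧ ¬ IsZeroBlock A} ∪
    {B | B = ⋃₀ {A | A ∈ Om n τ ∧ IsZeroBlock A} ∧ B ≠ ∅}

/-- Reverse refinement order: `π ≤ ρ` iff every block of `ρ` is a union of blocks of `π`. -/
def refLe (π ρ : Set (Set ℤ)) : Prop := ∀ B ∈ ρ, ∃ S ⊆ π, ⋃₀ S = B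

/-- `NC^B(p,q) = { Ω̃(τ) : τ ∈ S^B_nc(p,q) }`. -/
def NCB (p q : ℕ) : Set (Set (Set ℤ)) := {π | ∃ τ ∈ SBnc p q, π = Omt (p + q) τ}

/-- A `γ`-connected subset of `X`: it meets both `Y` and `Z`. -/
def GConn (p q : ℕ) (A : Set ℤ) : Prop :=
  (A ∩ Yset p).Nonempty ∧ (A ∩ Zset p q).Nonempty

/-- The induced ("first return") permutation `f ↓ A`, as a function on `ℤ`
which is the identity outside `A`. -/
def dArrow (f : ℤ → ℤ) (A : Set ℤ) : ℤ → ℤ := fun a =>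
  if a ∈ A then f^[sInf {k : ℕ | 0 < k ∧ f^[k] a ∈ A}] a else a

/-- `O^B_nc(p,q)` : the subsets of `X` which are an orbit of some permutation
in `S^B_nc(p,q)`. -/
def OncB (p q : ℕ) : Set (Set ℤ) := {A | ∃ τ ∈ SBnc p q, A ∈ Om (p + q) τ}

/-- The canonical permutation `μ_A` of a set `A ∈ O^B_nc(p,q)` (as a function on `ℤ`,
identity outside `A`): `μ_A = τ ↓ A` for any `τ ∈ S^B_nc(p,q)` having `A` as an orbit. -/
noncomputable def muA (p q : ℕ) (A : Set ℤ) : ℤ → ℤ :=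
  dArrow ⇑(Classical.epsilon fun τ : Equiv.Perm ℤ => τ ∈ SBnc p q ∧ A ∈ Om (p + q) τ) A

/-- The AC-test permutation `λ_{y,z}`, for `y ∈ Y` and `z ∈ Z`: it fixes `y,z` and has the
single cycle `(γ(y),…,γ^{|Y|-1}(y),γ(z),…,γ^{|Z|-1}(z))`. -/
def lamYZ (p q : ℕ) (y z : ℤ) : Equiv.Perm ℤ :=
  (((List.range (2 * p - 1)).map fun k : ℕ => ((gammaB p q) ^ (k + 1)) y) ++
    ((List.range (2 * q - 1)).map fun k : ℕ => ((gammaB p q) ^ (k + 1)) z)).formPerm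

/-- The intersection meet of two partitions: the blocks are the nonempty
intersections of a block of `π` with a block of `ρ`. -/
def interMeet (π ρ : Set (Set ℤ)) : Set (Set ℤ) :=
  {C | C.Nonempty ∧ ∃ A ∈ π, ∃ B ∈ ρ, C = A ∩ B}

/-- Even permutations of `ℤ`: products of an even number of transpositions. -/
def IsEvenPerm (τ : Equiv.Perm ℤ) : Prop :=
  ∃ l : List (Equiv.Perm ℤ),
    (∀ g ∈ l, ∃ a b : ℤ, a ≠ b ∧ g = Equiv.swap a b) ∧ l.prod = τ ∧ Even l.length

/-- The Weyl group `D_n`: even permutations in `B_n`. -/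
def Dgrp (n : ℕ) : Set (Equiv.Perm ℤ) := {τ | τ ∈ Bgrp n ∧ IsEvenPerm τ}

/-- The generating set of `D_n` used to define the length function `ℓ_D`. -/
def genD (n : ℕ) : Set (Equiv.Perm ℤ) :=
  {g | ∃ i j : ℤ, 1 ≤ i ∧ i < j ∧ j ≤ (n : ℤ) ∧
      (g = Equiv.swap i j * Equiv.swap (-i) (-j) ∨
        g = Equiv.swap i (-j) * Equiv.swap (-i) j)}

/-- The length function `ℓ_D` on `D_n`. -/
def lenD (n : ℕ) (τ : Equiv.Perm ℤ) : ℕ :=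
  sInf {k | ∃ l : List (Equiv.Perm ℤ), l.length = k ∧ (∀ g ∈ l, g ∈ genD n) ∧ l.prod = τ}

/-- The partial order on `D_n` induced by `ℓ_D`. -/
def leD (n : ℕ) (σ τ : Equiv.Perm ℤ) : Prop :=
  lenD n τ = lenD n σ + lenD n (σ⁻¹ * τ)

/-- `S^D_nc(p,q) = S_nc(X,γ) ∩ D_n`. -/
def SDnc (p q : ℕ) : Set (Equiv.Perm ℤ) := Snc p q ∩ Dgrp (p + q)

/-- `NC^D(p,q) = { Ω̃(τ) : τ ∈ S^D_nc(p,q) }`. -/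
def NCD (p q : ℕ) : Set (Set (Set ℤ)) := {π | ∃ τ ∈ SDnc p q, π = Omt (p + q) τ}

end AnnularNC

namespace NCProof

open AnnularNC Equiv Relation

/-! ### Generic facts about `EqvGen`-classes and their counting -/

lemma orbRel_equivalence (f : ℤ → ℤ) : Equivalence (orbRel f) :=
  Relation.EqvGen.is_equivalence _

lemma orbRel2_equivalence (f g : ℤ → ℤ) : Equivalence (orbRel2 f g) :=
  Relation.EqvGen.is_equivalence _

lemma eqvGen_le {r R : ℤ → ℤ → Prop} (hR : Equivalence R)
    (h : ∀ a b, r a b → R a b) {a b : ℤ} (hab : Relation.EqvGen r a b) : R a b := by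
  induction hab with
  | rel x y h' => exact h _ _ h'
  | refl x => exact hR.refl x
  | symm x y _ ih => exact hR.symm ih
  | trans x y z _ _ ih1 ih2 => exact hR.trans ih1 ih2

lemma orbRel_step (f : ℤ → ℤ) (a : ℤ) : orbRel f a (f a) := Relation.EqvGen.rel _ _ rfl

lemma orbRel_le {f : ℤ → ℤ} {R : ℤ → ℤ → Prop} (hR : Equivalence R)
    (h : ∀ z, R z (f z)) {a b : ℤ} (hab : orbRel f a b) : R a b :=
  eqvGen_le (r := fun x y => f x = y) hR (fun x y hxy => hxy ▸ h x) hab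

lemma orbRel2_step_left (f g : ℤ → ℤ) (a : ℤ) : orbRel2 f g a (f a) :=
  Relation.EqvGen.rel _ _ (Or.inl rfl)

lemma orbRel2_step_right (f g : ℤ → ℤ) (a : ℤ) : orbRel2 f g a (g a) :=
  Relation.EqvGen.rel _ _ (Or.inr rfl)

lemma orbRel2_le {f g : ℤ → ℤ} {R : ℤ → ℤ → Prop} (hR : Equivalence R)
    (hf : ∀ z, R z (f z)) (hg : ∀ z, R z (g z)) {a b : ℤ}
    (hab : orbRel2 f g a b) : R a b := by
  refine eqvGen_le hR ?_ hab
  rintro x y (rfl | rfl)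
  exacts [hf x, hg x]

lemma orbRel_le_orbRel2_left (f g : ℤ → ℤ) {a b : ℤ} (h : orbRel f a b) :
    orbRel2 f g a b := Relation.EqvGen.mono (fun _ _ h' => Or.inl h') _ _ h

lemma orbRel_le_orbRel2_right (f g : ℤ → ℤ) {a b : ℤ} (h : orbRel g a b) :
    orbRel2 f g a b := Relation.EqvGen.mono (fun _ _ h' => Or.inr h') _ _ h

lemma perm_inv_apply_self (σ : Equiv.Perm ℤ) (x : ℤ) : σ⁻¹ (σ x) = x :=
  σ.symm_apply_apply x

lemma perm_apply_inv_self (σ : Equiv.Perm ℤ) (x : ℤ) : σ (σ⁻¹ x) = x :=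
  σ.apply_symm_apply x

def clSet (E : ℤ → ℤ → Prop) (S : Set ℤ) : Set (Set ℤ) := (fun a => {b | E a b}) '' S

lemma orbSet_eq_clSet (f : ℤ → ℤ) (S : Set ℤ) : orbSet f S = clSet (orbRel f) S := by
  ext O
  constructor
  · rintro ⟨a, ha, rfl⟩; exact ⟨a, ha, rfl⟩
  · rintro ⟨a, ha, rfl⟩; exact ⟨a, ha, rfl⟩

lemma orbSet2_eq_clSet (f g : ℤ → ℤ) (S : Set ℤ) :
    orbSet2 f g S = clSet (orbRel2 f g) S := by
  ext O
  constructor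
  · rintro ⟨a, ha, rfl⟩; exact ⟨a, ha, rfl⟩
  · rintro ⟨a, ha, rfl⟩; exact ⟨a, ha, rfl⟩

lemma nOrb_eq_clSet (f : ℤ → ℤ) (S : Set ℤ) : nOrb f S = (clSet (orbRel f) S).ncard := by
  rw [nOrb, orbSet_eq_clSet]

lemma nOrb2_eq_clSet (f g : ℤ → ℤ) (S : Set ℤ) :
    nOrb2 f g S = (clSet (orbRel2 f g) S).ncard := by
  rw [nOrb2, orbSet2_eq_clSet]

lemma clSet_finite {E : ℤ → ℤ → Prop} {S : Set ℤ} (hS : S.Finite) : (clSet E S).Finite :=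
  hS.image _

lemma mem_clSet {E : ℤ → ℤ → Prop} {S : Set ℤ} {a : ℤ} (ha : a ∈ S) :
    {b | E a b} ∈ clSet E S := ⟨a, ha, rfl⟩

lemma clSet_congr {E E' : ℤ → ℤ → Prop} (h : ∀ a b, E a b ↔ E' a b) (S : Set ℤ) :
    clSet E S = clSet E' S := by
  have hfun : (fun a : ℤ => {b | E a b}) = fun a : ℤ => {b | E' a b} := by
    funext a
    ext b
    exact h a b
  unfold clSet
  rw [hfun]

lemma cl_eq {E : ℤ → ℤ → Prop} (hE : Equivalence E) {a b : ℤ} (h : E a b) :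
    {c | E a c} = {c | E b c} :=
  Set.ext fun c => ⟨fun h' => hE.trans (hE.symm h) h', fun h' => hE.trans h h'⟩

lemma rel_of_cl_eq {E : ℤ → ℤ → Prop} (hE : Equivalence E) {a b : ℤ}
    (h : {c | E a c} = {c | E b c}) : E a b := by
  have hb : b ∈ {c | E b c} := hE.refl b
  rw [← h] at hb
  exact hb

def thetaMap (E : ℤ → ℤ → Prop) : Set ℤ → Set ℤ := fun C => {b | ∃ a ∈ C, E a b}

lemma theta_cl {E₁ E₂ : ℤ → ℤ → Prop} (hE₁ : Equivalence E₁) (hE₂ : Equivalence E₂)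
    (hle : ∀ a b, E₁ a b → E₂ a b) (a : ℤ) :
    thetaMap E₂ {c | E₁ a c} = {b | E₂ a b} := by
  ext b
  constructor
  · rintro ⟨a', ha', hb⟩; exact hE₂.trans (hle _ _ ha') hb
  · intro hb; exact ⟨a, hE₁.refl a, hb⟩

lemma ncard_clSet_mono {E₁ E₂ : ℤ → ℤ → Prop} {S : Set ℤ} (hE₁ : Equivalence E₁)
    (hE₂ : Equivalence E₂) (hle : ∀ a b, E₁ a b → E₂ a b) (hS : S.Finite) :
    (clSet E₂ S).ncard ≤ (clSet E₁ S).ncard := by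
  have himg : clSet E₂ S = thetaMap E₂ '' clSet E₁ S := by
    ext O
    constructor
    · rintro ⟨a, ha, rfl⟩
      exact ⟨{c | E₁ a c}, mem_clSet ha, theta_cl hE₁ hE₂ hle a⟩
    · rintro ⟨C, ⟨a, ha, rfl⟩, rfl⟩
      rw [theta_cl hE₁ hE₂ hle a]
      exact mem_clSet ha
  rw [himg]
  exact Set.ncard_image_le (clSet_finite hS)

def jp (E : ℤ → ℤ → Prop) (x y : ℤ) : ℤ → ℤ → Prop :=
  Relation.EqvGen fun a b => E a b ∨ (a = x ∧ b = y)

lemma jp_equivalence (E : ℤ → ℤ → Prop) (x y : ℤ) : Equivalence (jp E x y) :=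
  Relation.EqvGen.is_equivalence _

lemma le_jp (E : ℤ → ℤ → Prop) (x y : ℤ) {a b : ℤ} (h : E a b) : jp E x y a b :=
  Relation.EqvGen.rel _ _ (Or.inl h)

lemma jp_pair (E : ℤ → ℤ → Prop) (x y : ℤ) : jp E x y x y :=
  Relation.EqvGen.rel _ _ (Or.inr ⟨rfl, rfl⟩)

lemma jp_iff {E : ℤ → ℤ → Prop} (hE : Equivalence E) {x y a b : ℤ} :
    jp E x y a b ↔ E a b ∨ (E a x ∧ E y b) ∨ (E a y ∧ E x b) := by
  constructor
  · intro h
    induction h with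
    | rel u v huv =>
      rcases huv with h' | ⟨rfl, rfl⟩
      · exact Or.inl h'
      · exact Or.inr (Or.inl ⟨hE.refl _, hE.refl _⟩)
    | refl u => exact Or.inl (hE.refl u)
    | symm u v _ ih =>
      rcases ih with h' | ⟨h1, h2⟩ | ⟨h1, h2⟩
      · exact Or.inl (hE.symm h')
      · exact Or.inr (Or.inr ⟨hE.symm h2, hE.symm h1⟩)
      · exact Or.inr (Or.inl ⟨hE.symm h2, hE.symm h1⟩)
    | trans u v w _ _ ih1 ih2 =>
      rcases ih1 with h1 | ⟨h1a, h1b⟩ | ⟨h1a, h1b⟩ <;>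
        rcases ih2 with h2 | ⟨h2a, h2b⟩ | ⟨h2a, h2b⟩
      · exact Or.inl (hE.trans h1 h2)
      · exact Or.inr (Or.inl ⟨hE.trans h1 h2a, h2b⟩)
      · exact Or.inr (Or.inr ⟨hE.trans h1 h2a, h2b⟩)
      · exact Or.inr (Or.inl ⟨h1a, hE.trans h1b h2⟩)
      · exact Or.inl (hE.trans (hE.trans h1a (hE.symm (hE.trans h1b h2a))) h2b)
      · exact Or.inl (hE.trans h1a h2b)
      · exact Or.inr (Or.inr ⟨h1a, hE.trans h1b h2⟩)
      · exact Or.inl (hE.trans h1a h2b)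
      · exact Or.inr (Or.inl ⟨hE.trans h1a (hE.symm (hE.trans h1b h2a)),
          hE.trans (hE.symm (hE.trans h1b h2a)) h2b⟩)
  · rintro (h' | ⟨h1, h2⟩ | ⟨h1, h2⟩)
    · exact le_jp E x y h'
    · exact (jp_equivalence E x y).trans (le_jp E x y h1)
        ((jp_equivalence E x y).trans (jp_pair E x y) (le_jp E x y h2))
    · exact (jp_equivalence E x y).trans (le_jp E x y h1)
        ((jp_equivalence E x y).trans ((jp_equivalence E x y).symm (jp_pair E x y))
          (le_jp E x y h2))

lemma jp_iff_of_rel {E : ℤ → ℤ → Prop} (hE : Equivalence E) {x y : ℤ} (hxy : E x y)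
    (a b : ℤ) : jp E x y a b ↔ E a b := by
  rw [jp_iff hE]
  constructor
  · rintro (h | ⟨h1, h2⟩ | ⟨h1, h2⟩)
    · exact h
    · exact hE.trans (hE.trans h1 hxy) h2
    · exact hE.trans (hE.trans h1 (hE.symm hxy)) h2
  · exact Or.inl

lemma ncard_clSet_le_jp {E : ℤ → ℤ → Prop} {S : Set ℤ} (hE : Equivalence E)
    (hS : S.Finite) (x y : ℤ) :
    (clSet E S).ncard ≤ (clSet (jp E x y) S).ncard + 1 := by
  have hJ : Equivalence (jp E x y) := jp_equivalence E x y
  have hle : ∀ a b, E a b → jp E x y a b := fun a b => le_jp E x y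
  have hWinj : Set.InjOn (thetaMap (jp E x y)) (clSet E S \ {{c | E y c}}) := by
    rintro C₁ ⟨⟨a, ha, rfl⟩, hC₁⟩ C₂ ⟨⟨b, hb, rfl⟩, hC₂⟩ heq
    rw [theta_cl hE hJ hle a, theta_cl hE hJ hle b] at heq
    rcases (jp_iff hE).1 (rel_of_cl_eq hJ heq) with h | ⟨h1, h2⟩ | ⟨h1, h2⟩
    · exact cl_eq hE h
    · exact absurd (cl_eq hE h2) (fun hh => hC₂ (Set.mem_singleton_iff.2 hh.symm))
    · exact absurd (cl_eq hE h1) (fun hh => hC₁ (Set.mem_singleton_iff.2 hh))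
  have h1 : (clSet E S).ncard ≤ (clSet E S \ {{c | E y c}}).ncard + 1 := by
    have hsub : clSet E S ⊆ (clSet E S \ {{c | E y c}}) ∪ {{c | E y c}} := by
      intro O hO
      by_cases hOy : O ∈ ({{c | E y c}} : Set (Set ℤ))
      · exact Or.inr hOy
      · exact Or.inl ⟨hO, hOy⟩
    calc (clSet E S).ncard ≤ ((clSet E S \ {{c | E y c}}) ∪ {{c | E y c}}).ncard :=
          Set.ncard_le_ncard hsub (((clSet_finite hS).diff).union (Set.finite_singleton _))
      _ ≤ (clSet E S \ {{c | E y c}}).ncard + 1 := by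
          simpa using Set.ncard_union_le (clSet E S \ {{c | E y c}}) {{c | E y c}}
  have h2 : (clSet E S \ {{c | E y c}}).ncard ≤ (clSet (jp E x y) S).ncard := by
    rw [← Set.ncard_image_of_injOn hWinj]
    refine Set.ncard_le_ncard ?_ (clSet_finite hS)
    rintro _ ⟨C, ⟨⟨a, ha, rfl⟩, -⟩, rfl⟩
    rw [theta_cl hE hJ hle a]
    exact mem_clSet ha
  omega

lemma ncard_clSet_split {E₁ E₂ : ℤ → ℤ → Prop} {S : Set ℤ} (hE₁ : Equivalence E₁)
    (hE₂ : Equivalence E₂) (hle : ∀ a b, E₁ a b → E₂ a b) {x y : ℤ}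
    (hx : x ∈ S) (hy : y ∈ S) (h2 : E₂ x y) (h1 : ¬ E₁ x y) (hS : S.Finite) :
    (clSet E₂ S).ncard + 1 ≤ (clSet E₁ S).ncard := by
  have hfin : (clSet E₁ S).Finite := clSet_finite hS
  have hsub : clSet E₂ S ⊆ thetaMap E₂ '' (clSet E₁ S \ {{c | E₁ x c}}) := by
    rintro O ⟨a, ha, rfl⟩
    by_cases hax : E₁ a x
    · refine ⟨{c | E₁ y c}, ⟨mem_clSet hy, ?_⟩, ?_⟩
      · intro hmem
        rw [Set.mem_singleton_iff] at hmem
        exact h1 (hE₁.symm (rel_of_cl_eq hE₁ hmem))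
      · rw [theta_cl hE₁ hE₂ hle y]
        exact cl_eq hE₂ (hE₂.symm (hE₂.trans (hle _ _ hax) h2))
    · refine ⟨{c | E₁ a c}, ⟨mem_clSet ha, ?_⟩, theta_cl hE₁ hE₂ hle a⟩
      intro hmem
      rw [Set.mem_singleton_iff] at hmem
      exact hax (rel_of_cl_eq hE₁ hmem)
  have h3 : (clSet E₂ S).ncard ≤ (clSet E₁ S \ {{c | E₁ x c}}).ncard :=
    le_trans (Set.ncard_le_ncard hsub (hfin.diff.image _))
      (Set.ncard_image_le hfin.diff)
  have h4 : (clSet E₁ S \ {{c | E₁ x c}}).ncard + 1 = (clSet E₁ S).ncard :=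
    Set.ncard_diff_singleton_add_one (mem_clSet hx) hfin
  omega

/-! ### Iterates, periods, and the effect of a swap on orbits -/

lemma orbRel_zpow (ρ : Equiv.Perm ℤ) (a : ℤ) : ∀ j : ℤ, orbRel ⇑ρ a ((ρ ^ j) a) := by
  intro j
  induction j using Int.induction_on with
  | zero => simpa using (orbRel_equivalence ⇑ρ).refl a
  | succ i ih =>
    have hstep := orbRel_step ⇑ρ ((ρ ^ (i : ℤ)) a)
    have hpow : ρ ((ρ ^ (i : ℤ)) a) = (ρ ^ ((i : ℤ) + 1)) a := by
      have h0 : ((i : ℤ) + 1) = 1 + (i : ℤ) := by ring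
      rw [h0, zpow_one_add]
      rfl
    rw [hpow] at hstep
    exact (orbRel_equivalence ⇑ρ).trans ih hstep
  | pred i ih =>
    have hstep := orbRel_step ⇑ρ ((ρ ^ (-(i : ℤ) - 1)) a)
    have hpow : ρ ((ρ ^ (-(i : ℤ) - 1)) a) = (ρ ^ (-(i : ℤ))) a := by
      have h0 : -(i : ℤ) = 1 + (-(i : ℤ) - 1) := by ring
      conv_rhs => rw [h0, zpow_one_add]
      rfl
    rw [hpow] at hstep
    exact (orbRel_equivalence ⇑ρ).trans ih ((orbRel_equivalence ⇑ρ).symm hstep)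

lemma orbRel_iff_zpow (ρ : Equiv.Perm ℤ) (a b : ℤ) :
    orbRel ⇑ρ a b ↔ ∃ j : ℤ, (ρ ^ j) a = b := by
  constructor
  · intro h
    induction h with
    | rel u v huv => exact ⟨1, by simpa using huv⟩
    | refl u => exact ⟨0, by simp⟩
    | symm u v _ ih =>
      obtain ⟨j, hj⟩ := ih
      refine ⟨-j, ?_⟩
      rw [← hj, ← Equiv.Perm.mul_apply, ← zpow_add, neg_add_cancel, zpow_zero,
        Equiv.Perm.one_apply]
    | trans u v w _ _ ih1 ih2 =>
      obtain ⟨j, hj⟩ := ih1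
      obtain ⟨k, hk⟩ := ih2
      refine ⟨k + j, ?_⟩
      rw [zpow_add, Equiv.Perm.mul_apply, hj, hk]
  · rintro ⟨j, rfl⟩
    exact orbRel_zpow ρ a j

lemma apply_mem_of_fix {σ : Equiv.Perm ℤ} {S : Set ℤ} (hfix : ∀ x ∉ S, σ x = x)
    {x : ℤ} (hx : x ∈ S) : σ x ∈ S := by
  by_contra h
  have h2 := hfix _ h
  have h3 : σ x = x := σ.injective h2
  rw [← h3] at hx
  exact h hx

lemma exists_pos_pow_eq {σ : Equiv.Perm ℤ} {S : Set ℤ} (hS : S.Finite)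
    (hfix : ∀ x ∉ S, σ x = x) (x : ℤ) : ∃ m : ℕ, 0 < m ∧ (σ ^ m) x = x := by
  by_cases hx : x ∈ S
  · have hmem : ∀ i : ℕ, (σ ^ i) x ∈ S := by
      intro i
      induction i with
      | zero => simpa using hx
      | succ i ih =>
        have hstep : (σ ^ (i + 1)) x = σ ((σ ^ i) x) := by rw [pow_succ']; rfl
        rw [hstep]
        exact apply_mem_of_fix hfix ih
    obtain ⟨i, -, j, -, hij, heq⟩ :=
      Set.infinite_univ.exists_ne_map_eq_of_mapsTo (f := fun i : ℕ => (σ ^ i) x)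
        (fun i _ => hmem i) hS
    rcases hij.lt_or_gt with h | h
    · refine ⟨j - i, by omega, ?_⟩
      have hkey : (σ ^ i) ((σ ^ (j - i)) x) = (σ ^ i) x := by
        rw [← Equiv.Perm.mul_apply, ← pow_add, show i + (j - i) = j from by omega]
        exact heq.symm
      exact (σ ^ i).injective hkey
    · refine ⟨i - j, by omega, ?_⟩
      have hkey : (σ ^ j) ((σ ^ (i - j)) x) = (σ ^ j) x := by
        rw [← Equiv.Perm.mul_apply, ← pow_add, show j + (i - j) = i from by omega]
        exact heq
      exact (σ ^ j).injective hkey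
  · exact ⟨1, one_pos, by simpa using hfix x hx⟩

lemma zpow_reduce {ρ : Equiv.Perm ℤ} {x : ℤ} {k : ℕ} (hk : 0 < k)
    (hx : (ρ ^ k) x = x) (j : ℤ) : ∃ i : ℕ, i < k ∧ (ρ ^ j) x = (ρ ^ i) x := by
  have hxz : (ρ ^ (k : ℤ)) x = x := by rw [zpow_natCast]; exact hx
  have hmul : ∀ m : ℤ, (ρ ^ ((k : ℤ) * m)) x = x := by
    intro m
    induction m using Int.induction_on with
    | zero => simp
    | succ i ih =>
      have h0 : (k : ℤ) * ((i : ℤ) + 1) = (k : ℤ) + (k : ℤ) * (i : ℤ) := by ring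
      rw [h0, zpow_add, Equiv.Perm.mul_apply, ih]
      exact hxz
    | pred i ih =>
      have hneg : (ρ ^ (-(k : ℤ))) x = x := by
        have h' := congrArg (⇑(ρ ^ k)⁻¹) hx
        rw [perm_inv_apply_self] at h'
        rw [zpow_neg, zpow_natCast]
        exact h'.symm
      have h0 : (k : ℤ) * (-(i : ℤ) - 1) = -(k : ℤ) + (k : ℤ) * (-(i : ℤ)) := by ring
      rw [h0, zpow_add, Equiv.Perm.mul_apply, ih]
      exact hneg
  have hb1 : 0 ≤ j % (k : ℤ) := Int.emod_nonneg j (by exact_mod_cast hk.ne')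
  have hb2 : j % (k : ℤ) < (k : ℤ) := Int.emod_lt_of_pos j (by exact_mod_cast hk)
  refine ⟨(j % (k : ℤ)).toNat, by omega, ?_⟩
  have hsplit : j = j % (k : ℤ) + (k : ℤ) * (j / (k : ℤ)) := by
    have := Int.mul_ediv_add_emod j (k : ℤ)
    omega
  have hcast : ((ρ : Equiv.Perm ℤ) ^ ((j % (k : ℤ)).toNat : ℕ)) = ρ ^ (j % (k : ℤ)) := by
    rw [← zpow_natCast, Int.toNat_of_nonneg hb1]
  rw [hcast]
  conv_lhs => rw [hsplit, zpow_add, Equiv.Perm.mul_apply]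
  rw [hmul]

lemma swap_pow_agree {ρ : Equiv.Perm ℤ} {x y : ℤ} {k : ℕ}
    (hmin : ∀ i : ℕ, 0 < i → i < k → (ρ ^ i) x ≠ x ∧ (ρ ^ i) x ≠ y) :
    ∀ i : ℕ, i < k → ((Equiv.swap x y * ρ) ^ i) x = (ρ ^ i) x := by
  intro i
  induction i with
  | zero => intro _; simp
  | succ i ih =>
    intro hik
    have h1 := ih (by omega)
    have h2 : ((Equiv.swap x y * ρ) ^ (i + 1)) x = Equiv.swap x y (ρ ((ρ ^ i) x)) := by
      rw [pow_succ', Equiv.Perm.mul_apply, h1]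
      rfl
    have h3 : (ρ ^ (i + 1)) x = ρ ((ρ ^ i) x) := by rw [pow_succ']; rfl
    have h4 := hmin (i + 1) (by omega) hik
    rw [h2, ← h3]
    exact Equiv.swap_apply_of_ne_of_ne h4.1 h4.2

lemma key_swap_split {ρ : Equiv.Perm ℤ} {x y : ℤ} (hxy : x ≠ y)
    (hper : ∃ m : ℕ, 0 < m ∧ (ρ ^ m) x = x) (hrel : orbRel ⇑ρ x y) :
    ¬ orbRel ⇑(Equiv.swap x y * ρ) x y := by
  obtain ⟨m, hm, hmx⟩ := hper
  have hQex : ∃ i : ℕ, 0 < i ∧ ((ρ ^ i) x = x ∨ (ρ ^ i) x = y) := ⟨m, hm, Or.inl hmx⟩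
  obtain ⟨k, ⟨hkpos, hkor⟩, hmin'⟩ : ∃ k : ℕ, (0 < k ∧ ((ρ ^ k) x = x ∨ (ρ ^ k) x = y)) ∧
      ∀ i < k, ¬(0 < i ∧ ((ρ ^ i) x = x ∨ (ρ ^ i) x = y)) :=
    ⟨Nat.find hQex, Nat.find_spec hQex, fun i hik => Nat.find_min hQex hik⟩
  have hmin : ∀ i : ℕ, 0 < i → i < k → (ρ ^ i) x ≠ x ∧ (ρ ^ i) x ≠ y := by
    intro i hi hik
    have h' := hmin' i hik
    push_neg at h'
    exact h' hi
  have hagree := swap_pow_agree (ρ := ρ) (x := x) (y := y) hmin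
  have hk1 : ((Equiv.swap x y * ρ) ^ k) x = Equiv.swap x y ((ρ ^ k) x) := by
    have hk' : k - 1 + 1 = k := by omega
    rw [← hk', pow_succ', pow_succ', Equiv.Perm.mul_apply, hagree (k - 1) (by omega)]
    rfl
  intro hrel'
  have hky : (ρ ^ k) x = y := by
    rcases hkor with h | h
    · exfalso
      obtain ⟨j, hj⟩ := (orbRel_iff_zpow ρ x y).1 hrel
      obtain ⟨i, hik, hieq⟩ := zpow_reduce hkpos h j
      rw [hj] at hieq
      rcases Nat.eq_zero_or_pos i with rfl | hi
      · simp at hieq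
        exact hxy hieq.symm
      · exact (hmin i hi hik).2 hieq.symm
    · exact h
  have hfx : ((Equiv.swap x y * ρ) ^ k) x = x := by
    rw [hk1, hky, Equiv.swap_apply_right]
  obtain ⟨j, hj⟩ := (orbRel_iff_zpow (Equiv.swap x y * ρ) x y).1 hrel'
  obtain ⟨i, hik, hieq⟩ := zpow_reduce hkpos hfx j
  rw [hj] at hieq
  rcases Nat.eq_zero_or_pos i with rfl | hi
  · simp at hieq
    exact hxy hieq.symm
  · rw [hagree i hik] at hieq
    exact (hmin i hi hik).2 hieq.symm

lemma key_swap_join {ρ : Equiv.Perm ℤ} {x y : ℤ} (hxy : x ≠ y)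
    (hper : ∃ m : ℕ, 0 < m ∧ (ρ ^ m) x = x) (hrel : ¬ orbRel ⇑ρ x y) :
    orbRel ⇑(Equiv.swap x y * ρ) x y := by
  obtain ⟨m, hm, hmx⟩ := hper
  have hQex : ∃ i : ℕ, 0 < i ∧ ((ρ ^ i) x = x ∨ (ρ ^ i) x = y) := ⟨m, hm, Or.inl hmx⟩
  obtain ⟨k, ⟨hkpos, hkor⟩, hmin'⟩ : ∃ k : ℕ, (0 < k ∧ ((ρ ^ k) x = x ∨ (ρ ^ k) x = y)) ∧
      ∀ i < k, ¬(0 < i ∧ ((ρ ^ i) x = x ∨ (ρ ^ i) x = y)) :=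
    ⟨Nat.find hQex, Nat.find_spec hQex, fun i hik => Nat.find_min hQex hik⟩
  have hmin : ∀ i : ℕ, 0 < i → i < k → (ρ ^ i) x ≠ x ∧ (ρ ^ i) x ≠ y := by
    intro i hi hik
    have h' := hmin' i hik
    push_neg at h'
    exact h' hi
  have hagree := swap_pow_agree (ρ := ρ) (x := x) (y := y) hmin
  have hk1 : ((Equiv.swap x y * ρ) ^ k) x = Equiv.swap x y ((ρ ^ k) x) := by
    have hk' : k - 1 + 1 = k := by omega
    rw [← hk', pow_succ', pow_succ', Equiv.Perm.mul_apply, hagree (k - 1) (by omega)]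
    rfl
  have hkx : (ρ ^ k) x = x := by
    rcases hkor with h | h
    · exact h
    · exact absurd ((orbRel_iff_zpow ρ x y).2 ⟨(k : ℤ), by rw [zpow_natCast]; exact h⟩) hrel
  refine (orbRel_iff_zpow _ x y).2 ⟨(k : ℤ), ?_⟩
  rw [zpow_natCast, hk1, hkx, Equiv.swap_apply_left]

lemma orbRel_swap_le {ρ : Equiv.Perm ℤ} {x y : ℤ} (h : orbRel ⇑ρ x y) {z w : ℤ}
    (hzw : orbRel ⇑(Equiv.swap x y * ρ) z w) : orbRel ⇑ρ z w := by
  refine orbRel_le (orbRel_equivalence ⇑ρ) (fun z => ?_) hzw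
  show orbRel ⇑ρ z (Equiv.swap x y (ρ z))
  rcases eq_or_ne (ρ z) x with h1 | h1
  · rw [h1, Equiv.swap_apply_left]
    exact (orbRel_equivalence ⇑ρ).trans (h1 ▸ orbRel_step ⇑ρ z) h
  rcases eq_or_ne (ρ z) y with h2 | h2
  · rw [h2, Equiv.swap_apply_right]
    exact (orbRel_equivalence ⇑ρ).trans (h2 ▸ orbRel_step ⇑ρ z)
      ((orbRel_equivalence ⇑ρ).symm h)
  · rw [Equiv.swap_apply_of_ne_of_ne h1 h2]
    exact orbRel_step ⇑ρ z

lemma orbRel_le_jp_swap (ρ : Equiv.Perm ℤ) (x y : ℤ) {z w : ℤ} (h : orbRel ⇑ρ z w) :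
    jp (orbRel ⇑(Equiv.swap x y * ρ)) x y z w := by
  refine orbRel_le (jp_equivalence _ x y) (fun z => ?_) h
  have hstep : orbRel ⇑(Equiv.swap x y * ρ) z (Equiv.swap x y (ρ z)) :=
    orbRel_step ⇑(Equiv.swap x y * ρ) z
  show jp (orbRel ⇑(Equiv.swap x y * ρ)) x y z (ρ z)
  rcases eq_or_ne (ρ z) x with h1 | h1
  · rw [h1]
    rw [h1, Equiv.swap_apply_left] at hstep
    exact (jp_equivalence _ x y).trans (le_jp _ x y hstep)
      ((jp_equivalence _ x y).symm (jp_pair _ x y))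
  rcases eq_or_ne (ρ z) y with h2 | h2
  · rw [h2]
    rw [h2, Equiv.swap_apply_right] at hstep
    exact (jp_equivalence _ x y).trans (le_jp _ x y hstep) (jp_pair _ x y)
  · rw [← Equiv.swap_apply_of_ne_of_ne h1 h2]
    exact le_jp _ x y hstep

lemma orbRel2_le_jp_swap (σ δ : Equiv.Perm ℤ) (x y : ℤ) {z w : ℤ}
    (h : orbRel2 ⇑σ ⇑δ z w) :
    jp (orbRel2 ⇑(Equiv.swap x y * σ) ⇑δ) x y z w := by
  refine orbRel2_le (jp_equivalence _ x y) (fun z => ?_) (fun z => ?_) h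
  · have hstep : orbRel2 ⇑(Equiv.swap x y * σ) ⇑δ z (Equiv.swap x y (σ z)) :=
      orbRel2_step_left ⇑(Equiv.swap x y * σ) ⇑δ z
    show jp (orbRel2 ⇑(Equiv.swap x y * σ) ⇑δ) x y z (σ z)
    rcases eq_or_ne (σ z) x with h1 | h1
    · rw [h1]
      rw [h1, Equiv.swap_apply_left] at hstep
      exact (jp_equivalence _ x y).trans (le_jp _ x y hstep)
        ((jp_equivalence _ x y).symm (jp_pair _ x y))
    rcases eq_or_ne (σ z) y with h2 | h2
    · rw [h2]
      rw [h2, Equiv.swap_apply_right] at hstep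
      exact (jp_equivalence _ x y).trans (le_jp _ x y hstep) (jp_pair _ x y)
    · rw [← Equiv.swap_apply_of_ne_of_ne h1 h2]
      exact le_jp _ x y hstep
  · exact le_jp _ x y (orbRel2_step_right ⇑(Equiv.swap x y * σ) ⇑δ z)

lemma orbRel2_swap_ge {σ δ : Equiv.Perm ℤ} {x y : ℤ} (hxy2 : orbRel2 ⇑σ ⇑δ x y)
    {z w : ℤ} (h : orbRel2 ⇑(Equiv.swap x y * σ) ⇑δ z w) : orbRel2 ⇑σ ⇑δ z w := by
  refine orbRel2_le (orbRel2_equivalence ⇑σ ⇑δ) (fun z => ?_) (fun z => ?_) h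
  · show orbRel2 ⇑σ ⇑δ z (Equiv.swap x y (σ z))
    have hstep : orbRel2 ⇑σ ⇑δ z (σ z) := orbRel2_step_left ⇑σ ⇑δ z
    rcases eq_or_ne (σ z) x with h1 | h1
    · rw [h1, Equiv.swap_apply_left]
      exact (orbRel2_equivalence _ _).trans (h1 ▸ hstep) hxy2
    rcases eq_or_ne (σ z) y with h2 | h2
    · rw [h2, Equiv.swap_apply_right]
      exact (orbRel2_equivalence _ _).trans (h2 ▸ hstep)
        ((orbRel2_equivalence _ _).symm hxy2)
    · rw [Equiv.swap_apply_of_ne_of_ne h1 h2]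
      exact hstep
  · exact orbRel2_step_right ⇑σ ⇑δ z

lemma jp_rel2_iff {σ δ : Equiv.Perm ℤ} {x y : ℤ} (hxy2 : orbRel2 ⇑σ ⇑δ x y) (z w : ℤ) :
    jp (orbRel2 ⇑(Equiv.swap x y * σ) ⇑δ) x y z w ↔ orbRel2 ⇑σ ⇑δ z w := by
  constructor
  · intro h
    refine eqvGen_le (orbRel2_equivalence ⇑σ ⇑δ) ?_ h
    rintro a b (hab | ⟨rfl, rfl⟩)
    · exact orbRel2_swap_ge hxy2 hab
    · exact hxy2
  · exact orbRel2_le_jp_swap σ δ x y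

lemma nOrb_le_swap_add_one (ρ : Equiv.Perm ℤ) {S : Set ℤ} (hS : S.Finite) (x y : ℤ) :
    nOrb ⇑ρ S ≤ nOrb ⇑(Equiv.swap x y * ρ) S + 1 := by
  rw [nOrb_eq_clSet, nOrb_eq_clSet]
  have h1 : (clSet (orbRel ⇑ρ) S).ncard ≤ (clSet (jp (orbRel ⇑ρ) x y) S).ncard + 1 :=
    ncard_clSet_le_jp (orbRel_equivalence ⇑ρ) hS x y
  have hcan : Equiv.swap x y * (Equiv.swap x y * ρ) = ρ := by
    rw [← mul_assoc, Equiv.swap_mul_self, one_mul]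
  have h2 : ∀ z w, orbRel ⇑(Equiv.swap x y * ρ) z w → jp (orbRel ⇑ρ) x y z w := by
    intro z w hzw
    have h' := orbRel_le_jp_swap (Equiv.swap x y * ρ) x y hzw
    rwa [hcan] at h'
  have h3 : (clSet (jp (orbRel ⇑ρ) x y) S).ncard ≤
      (clSet (orbRel ⇑(Equiv.swap x y * ρ)) S).ncard :=
    ncard_clSet_mono (orbRel_equivalence _) (jp_equivalence _ x y) h2 hS
  omega

lemma nOrb_swap_split (ρ : Equiv.Perm ℤ) {S : Set ℤ} (hS : S.Finite)
    (hfix : ∀ z ∉ S, ρ z = z) {x y : ℤ} (hx : x ∈ S) (hy : y ∈ S) (hxy : x ≠ y)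
    (h : orbRel ⇑ρ x y) :
    nOrb ⇑ρ S + 1 ≤ nOrb ⇑(Equiv.swap x y * ρ) S := by
  rw [nOrb_eq_clSet, nOrb_eq_clSet]
  exact ncard_clSet_split (orbRel_equivalence _) (orbRel_equivalence _)
    (fun a b hab => orbRel_swap_le h hab) hx hy h
    (key_swap_split hxy (exists_pos_pow_eq hS hfix x) h) hS

lemma nOrb2_swap_le (σ δ : Equiv.Perm ℤ) {S : Set ℤ} (hS : S.Finite) (x : ℤ) :
    nOrb2 ⇑(Equiv.swap x (σ x) * σ) ⇑δ S ≤ nOrb2 ⇑σ ⇑δ S + 1 := by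
  have hxy2 : orbRel2 ⇑σ ⇑δ x (σ x) := orbRel2_step_left ⇑σ ⇑δ x
  rw [nOrb2_eq_clSet, nOrb2_eq_clSet]
  have h1 := ncard_clSet_le_jp (E := orbRel2 ⇑(Equiv.swap x (σ x) * σ) ⇑δ)
    (orbRel2_equivalence _ _) hS x (σ x)
  have h2 : clSet (jp (orbRel2 ⇑(Equiv.swap x (σ x) * σ) ⇑δ) x (σ x)) S =
      clSet (orbRel2 ⇑σ ⇑δ) S := clSet_congr (jp_rel2_iff hxy2) S
  rw [h2] at h1
  exact h1

lemma nOrb2_swap_eq (σ δ : Equiv.Perm ℤ) (S : Set ℤ) {x : ℤ}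
    (h' : orbRel2 ⇑(Equiv.swap x (σ x) * σ) ⇑δ x (σ x)) :
    nOrb2 ⇑(Equiv.swap x (σ x) * σ) ⇑δ S = nOrb2 ⇑σ ⇑δ S := by
  have hxy2 : orbRel2 ⇑σ ⇑δ x (σ x) := orbRel2_step_left ⇑σ ⇑δ x
  rw [nOrb2_eq_clSet, nOrb2_eq_clSet]
  have hcl : clSet (orbRel2 ⇑(Equiv.swap x (σ x) * σ) ⇑δ) S =
      clSet (orbRel2 ⇑σ ⇑δ) S := by
    refine clSet_congr (fun a b => ?_) S
    rw [← jp_iff_of_rel (orbRel2_equivalence _ _) h' a b]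
    exact jp_rel2_iff hxy2 a b
  rw [hcl]

/-! ### The genus-zero (Jacques) inequality -/

lemma orbRel_one (a b : ℤ) : orbRel ⇑(1 : Equiv.Perm ℤ) a b ↔ a = b := by
  constructor
  · intro h
    refine eqvGen_le eq_equivalence (fun x y hxy => ?_) h
    simpa using hxy
  · rintro rfl
    exact (orbRel_equivalence _).refl a

lemma nOrb_one (S : Set ℤ) (hS : S.Finite) : nOrb ⇑(1 : Equiv.Perm ℤ) S = S.ncard := by
  rw [nOrb_eq_clSet]
  have h1 : clSet (orbRel ⇑(1 : Equiv.Perm ℤ)) S = (fun a : ℤ => ({a} : Set ℤ)) '' S := by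
    have hfun : (fun a : ℤ => {b | orbRel ⇑(1 : Equiv.Perm ℤ) a b}) =
        fun a : ℤ => ({a} : Set ℤ) := by
      funext a
      ext b
      rw [Set.mem_setOf_eq, Set.mem_singleton_iff, orbRel_one]
      exact eq_comm
    unfold clSet
    rw [hfun]
  rw [h1, Set.ncard_image_of_injOn (fun a _ b _ h => by
    simpa using Set.singleton_eq_singleton_iff.1 h)]

lemma nOrb2_one (δ : Equiv.Perm ℤ) (S : Set ℤ) :
    nOrb2 ⇑(1 : Equiv.Perm ℤ) ⇑δ S = nOrb ⇑δ S := by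
  rw [nOrb2_eq_clSet, nOrb_eq_clSet]
  refine congrArg Set.ncard (clSet_congr (fun a b => ⟨fun h => ?_, fun h => ?_⟩) S)
  · refine orbRel2_le (orbRel_equivalence ⇑δ) (fun z => ?_) (fun z => orbRel_step ⇑δ z) h
    simpa using (orbRel_equivalence ⇑δ).refl z
  · exact orbRel_le_orbRel2_right _ _ h

lemma jacques_aux : ∀ N : ℕ, ∀ σ δ : Equiv.Perm ℤ, ∀ S : Set ℤ, S.Finite →
    {z : ℤ | σ z ≠ z}.ncard ≤ N → (∀ z ∉ S, σ z = z) → (∀ z ∉ S, δ z = z) →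
    nOrb ⇑σ S + nOrb ⇑(σ⁻¹ * δ) S + nOrb ⇑δ S ≤ S.ncard + 2 * nOrb2 ⇑σ ⇑δ S := by
  intro N
  induction N with
  | zero =>
    intro σ δ S hS hcard hfixσ hfixδ
    have hsfin : {z : ℤ | σ z ≠ z}.Finite :=
      hS.subset (fun z hz => by by_contra hzS; exact hz (hfixσ z hzS))
    have hempty : {z : ℤ | σ z ≠ z} = ∅ :=
      (Set.ncard_eq_zero hsfin).1 (Nat.le_zero.1 hcard)
    have hid : ∀ z : ℤ, σ z = z := by
      intro z
      by_contra h
      have hmem : z ∈ {z : ℤ | σ z ≠ z} := h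
      rw [hempty] at hmem
      exact hmem
    have hσ : σ = 1 := Equiv.ext hid
    subst hσ
    rw [nOrb_one S hS, inv_one, one_mul, nOrb2_one]
    omega
  | succ N ih =>
    intro σ δ S hS hcard hfixσ hfixδ
    by_cases hid : ∀ z : ℤ, σ z = z
    · have hσ : σ = 1 := Equiv.ext hid
      subst hσ
      rw [nOrb_one S hS, inv_one, one_mul, nOrb2_one]
      omega
    push_neg at hid
    obtain ⟨a, ha⟩ := hid
    have hane : a ≠ σ a := fun h => ha h.symm
    have haS : a ∈ S := by by_contra h; exact ha (hfixσ a h)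
    have hbS : σ a ∈ S := apply_mem_of_fix hfixσ haS
    set σ' := Equiv.swap a (σ a) * σ with hσ'def
    have hσ'a : σ' a = a := by
      rw [hσ'def, Equiv.Perm.mul_apply, Equiv.swap_apply_right]
    have hsupp : {z : ℤ | σ' z ≠ z} ⊆ {z : ℤ | σ z ≠ z} \ {a} := by
      intro z hz
      have hz' : σ' z ≠ z := hz
      refine ⟨?_, ?_⟩
      · intro hzz
        apply hz'
        have hza : z ≠ a := fun h => ha (h ▸ hzz)
        have hzb : z ≠ σ a := fun h => ha (σ.injective (h ▸ hzz))
        rw [hσ'def, Equiv.Perm.mul_apply, hzz, Equiv.swap_apply_of_ne_of_ne hza hzb]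
      · intro hmem
        rw [Set.mem_singleton_iff] at hmem
        exact hz' (by rw [hmem]; exact hσ'a)
    have hsfin : {z : ℤ | σ z ≠ z}.Finite :=
      hS.subset (fun z hz => by by_contra hzS; exact hz (hfixσ z hzS))
    have hamem : a ∈ {z : ℤ | σ z ≠ z} := ha
    have hcard' : {z : ℤ | σ' z ≠ z}.ncard ≤ N := by
      have h1 : {z : ℤ | σ' z ≠ z}.ncard ≤ ({z : ℤ | σ z ≠ z} \ {a}).ncard :=
        Set.ncard_le_ncard hsupp hsfin.diff
      have h2 : ({z : ℤ | σ z ≠ z} \ {a}).ncard + 1 = {z : ℤ | σ z ≠ z}.ncard :=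
        Set.ncard_diff_singleton_add_one hamem hsfin
      omega
    have hfixσ' : ∀ z ∉ S, σ' z = z := by
      intro z hz
      by_contra h
      exact (hsupp h).1 (hfixσ z hz)
    have IH := ih σ' δ S hS hcard' hfixσ' hfixδ
    have key1 : nOrb ⇑σ S + 1 ≤ nOrb ⇑σ' S := by
      rw [hσ'def]
      exact nOrb_swap_split σ hS hfixσ haS hbS hane (orbRel_step ⇑σ a)
    have hform : σ'⁻¹ * δ = Equiv.swap (σ⁻¹ a) a * (σ⁻¹ * δ) := by
      have h1 : Equiv.swap (σ⁻¹ a) a = σ⁻¹ * Equiv.swap a (σ a) * σ := by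
        have h0 := Equiv.swap_apply_apply σ⁻¹ a (σ a)
        rw [perm_inv_apply_self, inv_inv] at h0
        exact h0
      rw [hσ'def, mul_inv_rev, Equiv.swap_inv, h1]
      group
    have hinva : σ⁻¹ a ≠ a := by
      intro h
      apply ha
      have h' := congrArg σ h
      rw [perm_apply_inv_self] at h'
      exact h'.symm
    have hinvaS : σ⁻¹ a ∈ S := by
      by_contra h
      have h2 := hfixσ _ h
      rw [perm_apply_inv_self] at h2
      exact hinva h2.symm
    have hfix2 : ∀ z ∉ S, (σ⁻¹ * δ) z = z := by
      intro z hz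
      have h1 : δ z = z := hfixδ z hz
      have h2 : σ⁻¹ z = z := by
        have h3 := hfixσ z hz
        conv_lhs => rw [← h3]
        rw [perm_inv_apply_self]
      show σ⁻¹ (δ z) = z
      rw [h1, h2]
    by_cases hc : orbRel ⇑(σ⁻¹ * δ) (σ⁻¹ a) a
    · have key2 : nOrb ⇑(σ⁻¹ * δ) S + 1 ≤ nOrb ⇑(σ'⁻¹ * δ) S := by
        rw [hform]
        exact nOrb_swap_split (σ⁻¹ * δ) hS hfix2 hinvaS haS hinva hc
      have key3 : nOrb2 ⇑σ' ⇑δ S ≤ nOrb2 ⇑σ ⇑δ S + 1 := by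
        rw [hσ'def]
        exact nOrb2_swap_le σ δ hS a
      omega
    · have key2 : nOrb ⇑(σ⁻¹ * δ) S ≤ nOrb ⇑(σ'⁻¹ * δ) S + 1 := by
        rw [hform]
        exact nOrb_le_swap_add_one (σ⁻¹ * δ) hS (σ⁻¹ a) a
      have hjoin : orbRel ⇑(σ'⁻¹ * δ) (σ⁻¹ a) a := by
        rw [hform]
        exact key_swap_join hinva (exists_pos_pow_eq hS hfix2 (σ⁻¹ a)) hc
      have hrel2 : orbRel2 ⇑σ' ⇑δ (σ⁻¹ a) a := by
        refine orbRel_le (orbRel2_equivalence ⇑σ' ⇑δ) (fun z => ?_) hjoin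
        show orbRel2 ⇑σ' ⇑δ z (σ'⁻¹ (δ z))
        have h1 : orbRel2 ⇑σ' ⇑δ z (δ z) := orbRel2_step_right ⇑σ' ⇑δ z
        have h2 : orbRel2 ⇑σ' ⇑δ (σ'⁻¹ (δ z)) (δ z) := by
          have h3 := orbRel2_step_left ⇑σ' ⇑δ (σ'⁻¹ (δ z))
          rwa [perm_apply_inv_self] at h3
        exact (orbRel2_equivalence _ _).trans h1 ((orbRel2_equivalence _ _).symm h2)
      have h2' : orbRel2 ⇑σ' ⇑δ a (σ a) := by
        have h3 : orbRel2 ⇑σ' ⇑δ (σ⁻¹ a) (σ a) := by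
          have h4 := orbRel2_step_left ⇑σ' ⇑δ (σ⁻¹ a)
          have h5 : σ' (σ⁻¹ a) = σ a := by
            rw [hσ'def, Equiv.Perm.mul_apply, perm_apply_inv_self,
              Equiv.swap_apply_left]
          rwa [h5] at h4
        exact (orbRel2_equivalence _ _).trans ((orbRel2_equivalence _ _).symm hrel2) h3
      have key3 : nOrb2 ⇑σ' ⇑δ S = nOrb2 ⇑σ ⇑δ S := by
        rw [hσ'def]
        refine nOrb2_swap_eq σ δ S ?_
        rw [← hσ'def]
        exact h2'
      omega

lemma jacques {S : Set ℤ} (hS : S.Finite) (σ δ : Equiv.Perm ℤ)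
    (hfixσ : ∀ z ∉ S, σ z = z) (hfixδ : ∀ z ∉ S, δ z = z) :
    nOrb ⇑σ S + nOrb ⇑(σ⁻¹ * δ) S + nOrb ⇑δ S ≤ S.ncard + 2 * nOrb2 ⇑σ ⇑δ S :=
  jacques_aux {z : ℤ | σ z ≠ z}.ncard σ δ S hS le_rfl hfixσ hfixδ

/-! ### The quotient by the inversion -/

def barFun (σ : Equiv.Perm ℤ) : ℤ → ℤ := fun x => if 0 < x then |σ x| else x

lemma equivar_inv {σ : Equiv.Perm ℤ} (hB : ∀ i : ℤ, σ (-i) = -σ i) (i : ℤ) :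
    σ⁻¹ (-i) = -σ⁻¹ i := by
  apply σ.injective
  rw [perm_apply_inv_self, hB, perm_apply_inv_self]

lemma equivar_zero {σ : Equiv.Perm ℤ} (hB : ∀ i : ℤ, σ (-i) = -σ i) : σ 0 = 0 := by
  have h := hB 0
  rw [neg_zero] at h
  omega

lemma equivar_mul {σ δ : Equiv.Perm ℤ} (h1 : ∀ i : ℤ, σ (-i) = -σ i)
    (h2 : ∀ i : ℤ, δ (-i) = -δ i) (i : ℤ) : (σ * δ) (-i) = -(σ * δ) i := by
  rw [Equiv.Perm.mul_apply, Equiv.Perm.mul_apply, h2, h1]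

lemma barFun_abs {σ : Equiv.Perm ℤ} (hB : ∀ i : ℤ, σ (-i) = -σ i) (x : ℤ) :
    barFun σ |x| = |σ x| := by
  rcases lt_trichotomy x 0 with h | rfl | h
  · have h2 : (0 : ℤ) < -x := by omega
    rw [abs_of_neg h]
    show (if 0 < -x then |σ (-x)| else -x) = |σ x|
    rw [if_pos h2, hB, abs_neg]
  · simp [barFun, equivar_zero hB]
  · rw [abs_of_pos h]
    show (if 0 < x then |σ x| else x) = |σ x|
    rw [if_pos h]

lemma barFun_leftInv {σ : Equiv.Perm ℤ} (hB : ∀ i : ℤ, σ (-i) = -σ i) :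
    Function.LeftInverse (barFun σ⁻¹) (barFun σ) := by
  intro x
  by_cases hx : 0 < x
  · have h1 : barFun σ x = |σ x| := if_pos hx
    rw [h1, barFun_abs (equivar_inv hB) (σ x), perm_inv_apply_self, abs_of_pos hx]
  · have h1 : barFun σ x = x := if_neg hx
    rw [h1]
    exact if_neg hx

def barPerm (σ : Equiv.Perm ℤ) (hB : ∀ i : ℤ, σ (-i) = -σ i) : Equiv.Perm ℤ where
  toFun := barFun σ
  invFun := barFun σ⁻¹
  left_inv := barFun_leftInv hB
  right_inv := by
    have h := barFun_leftInv (σ := σ⁻¹) (equivar_inv hB)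
    rwa [inv_inv] at h

@[simp] lemma coe_barPerm (σ : Equiv.Perm ℤ) (hB : ∀ i : ℤ, σ (-i) = -σ i) :
    ⇑(barPerm σ hB) = barFun σ := rfl

@[simp] lemma coe_barPerm_inv (σ : Equiv.Perm ℤ) (hB : ∀ i : ℤ, σ (-i) = -σ i) :
    ⇑(barPerm σ hB)⁻¹ = barFun σ⁻¹ := rfl

lemma barFun_comp {τ γ : Equiv.Perm ℤ} (hτ : ∀ i : ℤ, τ (-i) = -τ i)
    (hγ : ∀ i : ℤ, γ (-i) = -γ i) :
    ⇑((barPerm τ hτ)⁻¹ * barPerm γ hγ) = barFun (τ⁻¹ * γ) := by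
  funext x
  rw [Equiv.Perm.mul_apply, coe_barPerm_inv, coe_barPerm]
  by_cases hx : 0 < x
  · have h1 : barFun γ x = |γ x| := if_pos hx
    rw [h1, barFun_abs (equivar_inv hτ) (γ x)]
    have h2 : barFun (τ⁻¹ * γ) x = |(τ⁻¹ * γ) x| := if_pos hx
    rw [h2, Equiv.Perm.mul_apply]
  · have h1 : barFun γ x = x := if_neg hx
    have h2 : barFun τ⁻¹ x = x := if_neg hx
    have h3 : barFun (τ⁻¹ * γ) x = x := if_neg hx
    rw [h1, h2, h3]

lemma barFun_fix {σ : Equiv.Perm ℤ} {n : ℕ} (hfix : ∀ x ∉ Xset n, σ x = x) :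
    ∀ x ∉ Set.Icc (1 : ℤ) (n : ℤ), barFun σ x = x := by
  intro x hx
  by_cases h0 : 0 < x
  · have hxn : ¬x ≤ (n : ℤ) := fun h => hx (Set.mem_Icc.2 ⟨by omega, h⟩)
    have hX : x ∉ Xset n := fun h => hxn (by have h2 := h.2; omega)
    have h1 : barFun σ x = |σ x| := if_pos h0
    rw [h1, hfix x hX, abs_of_pos h0]
  · exact if_neg h0

lemma orbRel_neg {σ : Equiv.Perm ℤ} (hB : ∀ i : ℤ, σ (-i) = -σ i) {a b : ℤ}
    (h : orbRel ⇑σ a b) : orbRel ⇑σ (-a) (-b) := by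
  induction h with
  | rel u v huv => exact Relation.EqvGen.rel _ _ (by rw [hB, huv])
  | refl u => exact (orbRel_equivalence ⇑σ).refl _
  | symm u v _ ih => exact (orbRel_equivalence ⇑σ).symm ih
  | trans u v w _ _ ih1 ih2 => exact (orbRel_equivalence ⇑σ).trans ih1 ih2

lemma orbRel_abs {σ : Equiv.Perm ℤ} (hB : ∀ i : ℤ, σ (-i) = -σ i) {a b : ℤ}
    (h : orbRel ⇑σ a b) : orbRel (barFun σ) |a| |b| := by
  induction h with
  | rel u v huv => exact Relation.EqvGen.rel _ _ (by rw [barFun_abs hB u, huv])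
  | refl u => exact (orbRel_equivalence _).refl _
  | symm u v _ ih => exact (orbRel_equivalence _).symm ih
  | trans u v w _ _ ih1 ih2 => exact (orbRel_equivalence _).trans ih1 ih2

lemma orbRel2_abs {σ δ : Equiv.Perm ℤ} (hBσ : ∀ i : ℤ, σ (-i) = -σ i)
    (hBδ : ∀ i : ℤ, δ (-i) = -δ i) {a b : ℤ} (h : orbRel2 ⇑σ ⇑δ a b) :
    orbRel2 (barFun σ) (barFun δ) |a| |b| := by
  induction h with
  | rel u v huv =>
    rcases huv with huv | huv
    · exact Relation.EqvGen.rel _ _ (Or.inl (by rw [barFun_abs hBσ u, huv]))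
    · exact Relation.EqvGen.rel _ _ (Or.inr (by rw [barFun_abs hBδ u, huv]))
  | refl u => exact (orbRel2_equivalence _ _).refl _
  | symm u v _ ih => exact (orbRel2_equivalence _ _).symm ih
  | trans u v w _ _ ih1 ih2 => exact (orbRel2_equivalence _ _).trans ih1 ih2

lemma orbRel_abs_back {σ : Equiv.Perm ℤ} (hB : ∀ i : ℤ, σ (-i) = -σ i) {c d : ℤ}
    (h : orbRel (barFun σ) c d) (a : ℤ) (ha : |a| = c) :
    ∃ b : ℤ, orbRel ⇑σ a b ∧ |b| = d := by
  have hequiv : Equivalence (fun c d : ℤ =>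
      c = d ∨ ∃ u v : ℤ, |u| = c ∧ |v| = d ∧ orbRel ⇑σ u v) := by
    constructor
    · intro x; exact Or.inl rfl
    · rintro x y (rfl | ⟨u, v, hu, hv, huv⟩)
      · exact Or.inl rfl
      · exact Or.inr ⟨v, u, hv, hu, (orbRel_equivalence _).symm huv⟩
    · rintro x y z h1 h2
      rcases h1 with rfl | ⟨u, v, hu, hv, huv⟩
      · exact h2
      · rcases h2 with rfl | ⟨u', v', hu', hv', huv'⟩
        · exact Or.inr ⟨u, v, hu, hv, huv⟩
        · have habs : |v| = |u'| := hv.trans hu'.symm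
          rcases abs_eq_abs.1 habs with heq | heq
          · exact Or.inr ⟨u, v', hu, hv', (orbRel_equivalence _).trans huv (heq ▸ huv')⟩
          · refine Or.inr ⟨u, -v', hu, by rw [abs_neg]; exact hv', ?_⟩
            have hneg := orbRel_neg hB huv'
            rw [← heq] at hneg
            exact (orbRel_equivalence _).trans huv hneg
  have hS : c = d ∨ ∃ u v : ℤ, |u| = c ∧ |v| = d ∧ orbRel ⇑σ u v := by
    refine orbRel_le hequiv (fun z => ?_) h
    by_cases hz : 0 < z
    · refine Or.inr ⟨z, σ z, abs_of_pos hz, ?_, orbRel_step ⇑σ z⟩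
      show |σ z| = if 0 < z then |σ z| else z
      rw [if_pos hz]
    · refine Or.inl ?_
      show z = if 0 < z then |σ z| else z
      rw [if_neg hz]
  rcases hS with rfl | ⟨u, v, hu, hv, huv⟩
  · exact ⟨a, (orbRel_equivalence _).refl a, ha⟩
  · have habs : |a| = |u| := ha.trans hu.symm
    rcases abs_eq_abs.1 habs with rfl | heq
    · exact ⟨v, huv, hv⟩
    · refine ⟨-v, ?_, by rw [abs_neg]; exact hv⟩
      have hneg := orbRel_neg hB huv
      rw [← heq] at hneg
      exact hneg

lemma absImage_orbOf {σ : Equiv.Perm ℤ} (hB : ∀ i : ℤ, σ (-i) = -σ i) (a : ℤ) :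
    (fun x : ℤ => |x|) '' orbOf ⇑σ a = orbOf (barFun σ) |a| := by
  ext c
  constructor
  · rintro ⟨b, hb, rfl⟩
    exact orbRel_abs hB hb
  · intro hc
    obtain ⟨b, hb1, hb2⟩ := orbRel_abs_back hB hc a rfl
    exact ⟨b, hb1, hb2⟩

lemma mem_negSet {A : Set ℤ} {x : ℤ} : x ∈ negSet A ↔ -x ∈ A := by
  constructor
  · rintro ⟨y, hy, rfl⟩; simpa using hy
  · intro h; exact ⟨-x, h, by simp⟩

lemma negSet_negSet (A : Set ℤ) : negSet (negSet A) = A := by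
  ext x; rw [mem_negSet, mem_negSet, neg_neg]

lemma orbOf_neg {σ : Equiv.Perm ℤ} (hB : ∀ i : ℤ, σ (-i) = -σ i) (a : ℤ) :
    orbOf ⇑σ (-a) = negSet (orbOf ⇑σ a) := by
  ext b
  rw [mem_negSet]
  constructor
  · intro h
    have h2 := orbRel_neg hB h
    rwa [neg_neg] at h2
  · intro h
    have h2 := orbRel_neg hB h
    rwa [neg_neg] at h2

lemma orbOf_congr {f : ℤ → ℤ} {a b : ℤ} (h : orbRel f a b) : orbOf f a = orbOf f b :=
  cl_eq (orbRel_equivalence f) h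

lemma Xset_finite (n : ℕ) : (Xset n).Finite := by
  apply (Set.finite_Icc (-(n : ℤ)) (n : ℤ)).subset
  rintro x ⟨hx0, hxn⟩
  rw [Set.mem_Icc]
  omega

lemma bar_count {σ : Equiv.Perm ℤ} {n : ℕ} (hB : ∀ i : ℤ, σ (-i) = -σ i)
    (hfix : ∀ x ∉ Xset n, σ x = x) :
    nOrb ⇑σ (Xset n) + {A ∈ orbSet ⇑σ (Xset n) | negSet A = A}.ncard ≤
      2 * nOrb (barFun σ) (Set.Icc 1 (n : ℤ)) := by
  classical
  set U := orbSet ⇑σ (Xset n) with hU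
  set D := orbSet (barFun σ) (Set.Icc 1 (n : ℤ)) with hD
  have hXfin := Xset_finite n
  have hUfin : U.Finite := by rw [hU, orbSet_eq_clSet]; exact clSet_finite hXfin
  have hDfin : D.Finite := by
    rw [hD, orbSet_eq_clSet]; exact clSet_finite (Set.finite_Icc _ _)
  set g : Set ℤ → Set ℤ := fun O => (fun x : ℤ => |x|) '' O with hg
  have hgD : ∀ O ∈ U, g O ∈ D := by
    rintro O ⟨a, ha, rfl⟩
    show (fun x : ℤ => |x|) '' orbOf ⇑σ a ∈ D
    rw [absImage_orbOf hB a]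
    refine ⟨|a|, ?_, rfl⟩
    obtain ⟨ha0, han⟩ := ha
    have habs : |a| = ((a.natAbs : ℕ) : ℤ) := Int.abs_eq_natAbs a
    rw [Set.mem_Icc]
    constructor <;> omega
  have hfib : ∀ O₁ ∈ U, ∀ O₂ ∈ U, g O₁ = g O₂ → O₂ = O₁ ∨ O₂ = negSet O₁ := by
    rintro O₁ ⟨a₁, ha₁, rfl⟩ O₂ ⟨a₂, ha₂, rfl⟩ heq
    have heq' : orbOf (barFun σ) |a₁| = orbOf (barFun σ) |a₂| := by
      rw [← absImage_orbOf hB a₁, ← absImage_orbOf hB a₂]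
      exact heq
    have hrelbar : orbRel (barFun σ) |a₁| |a₂| := by
      have hm : |a₂| ∈ orbOf (barFun σ) |a₂| := (orbRel_equivalence _).refl _
      rw [← heq'] at hm
      exact hm
    obtain ⟨b, hb1, hb2⟩ := orbRel_abs_back hB hrelbar a₁ rfl
    rcases abs_eq_abs.1 hb2 with rfl | hbneg
    · exact Or.inl (orbOf_congr hb1).symm
    · have h3 : orbOf ⇑σ a₁ = orbOf ⇑σ (-a₂) := orbOf_congr (hbneg ▸ hb1)
      rw [orbOf_neg hB] at h3
      refine Or.inr ?_
      calc orbOf ⇑σ a₂ = negSet (negSet (orbOf ⇑σ a₂)) := (negSet_negSet _).symm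
        _ = negSet (orbOf ⇑σ a₁) := by rw [← h3]
  set F := {A ∈ U | negSet A = A} with hF
  have hFU : F ⊆ U := fun A hA => hA.1
  have hFfin : F.Finite := hUfin.subset hFU
  set M := U \ F with hM
  have hMfin : M.Finite := hUfin.diff
  have hujoin : U = F ∪ M := (Set.union_diff_cancel hFU).symm
  have hcardU : U.ncard = F.ncard + M.ncard := by
    rw [hujoin]
    exact Set.ncard_union_eq Set.disjoint_sdiff_right hFfin hMfin
  have hMcount : M.ncard ≤ 2 * (g '' M).ncard := by
    set Mf := hMfin.toFinset with hMfdef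
    have hcoe : (Mf : Set (Set ℤ)) = M := hMfin.coe_toFinset
    have hkey : Mf.card ≤ 2 * (Mf.image g).card := by
      refine Finset.card_le_mul_card_image Mf 2 ?_
      intro b hb
      obtain ⟨O₀, hO₀, rfl⟩ := Finset.mem_image.1 hb
      have hO₀M : O₀ ∈ M := by rw [← hcoe]; exact hO₀
      have hsub : (Mf.filter fun O => g O = g O₀) ⊆ {O₀, negSet O₀} := by
        intro O hO
        rw [Finset.mem_filter] at hO
        have hOM : O ∈ M := by rw [← hcoe]; exact hO.1
        rcases hfib O₀ hO₀M.1 O hOM.1 hO.2.symm with h | h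
        · simp [h]
        · simp [h]
      calc (Mf.filter fun O => g O = g O₀).card ≤ ({O₀, negSet O₀} : Finset (Set ℤ)).card :=
            Finset.card_le_card hsub
        _ ≤ 2 := (Finset.card_insert_le _ _).trans (by simp)
    calc M.ncard = Mf.card := by rw [← hcoe, Set.ncard_coe_finset]
      _ ≤ 2 * (Mf.image g).card := hkey
      _ = 2 * (g '' M).ncard := by
          rw [← Set.ncard_coe_finset (Mf.image g), Finset.coe_image, hcoe]
  have hFinj : Set.InjOn g F := by
    intro O₁ h₁ O₂ h₂ heq
    rcases hfib O₁ (hFU h₁) O₂ (hFU h₂) heq with h | h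
    · exact h.symm
    · rw [h₁.2] at h
      exact h.symm
  have hgFcard : (g '' F).ncard = F.ncard := Set.ncard_image_of_injOn hFinj
  have hdisj : Disjoint (g '' F) (g '' M) := by
    rw [Set.disjoint_left]
    rintro x ⟨O₁, hO₁, rfl⟩ ⟨O₂, hO₂, heq⟩
    rcases hfib O₁ (hFU hO₁) O₂ hO₂.1 heq.symm with h | h
    · exact hO₂.2 (h.symm ▸ hO₁)
    · rw [hO₁.2] at h
      exact hO₂.2 (h.symm ▸ hO₁)
  have hgU : g '' F ∪ g '' M ⊆ D := by
    rintro x (⟨O, hO, rfl⟩ | ⟨O, hO, rfl⟩)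
    · exact hgD O (hFU hO)
    · exact hgD O hO.1
  have hunion : (g '' F ∪ g '' M).ncard = (g '' F).ncard + (g '' M).ncard :=
    Set.ncard_union_eq hdisj (hFfin.image g) (hMfin.image g)
  have hle : (g '' F ∪ g '' M).ncard ≤ D.ncard := Set.ncard_le_ncard hgU hDfin
  have hidU : nOrb ⇑σ (Xset n) = U.ncard := rfl
  have hidD : nOrb (barFun σ) (Set.Icc 1 (n : ℤ)) = D.ncard := rfl
  omega

lemma nOrb2_eq_one {f g : ℤ → ℤ} {S : Set ℤ} (hne : S.Nonempty)
    (hall : ∀ a ∈ S, ∀ b ∈ S, orbRel2 f g a b) : nOrb2 f g S = 1 := by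
  obtain ⟨a₀, ha₀⟩ := hne
  have hset : orbSet2 f g S = {{b | orbRel2 f g a₀ b}} := by
    ext O
    constructor
    · rintro ⟨a, ha, rfl⟩
      rw [Set.mem_singleton_iff]
      exact (cl_eq (orbRel2_equivalence f g) (hall a₀ ha₀ a ha)).symm
    · intro h
      rw [Set.mem_singleton_iff] at h
      exact ⟨a₀, ha₀, h⟩
  rw [nOrb2, hset, Set.ncard_singleton]

lemma orbRel_mem_iff {f : ℤ → ℤ} {T : Set ℤ} (hT : ∀ x, x ∈ T ↔ f x ∈ T) {a b : ℤ}
    (h : orbRel f a b) : (a ∈ T ↔ b ∈ T) := by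
  induction h with
  | rel u v huv => exact huv ▸ hT u
  | refl u => exact Iff.rfl
  | symm u v _ ih => exact ih.symm
  | trans u v w _ _ ih1 ih2 => exact ih1.trans ih2

lemma orbRel_transfer {f g : ℤ → ℤ} {T : Set ℤ} (hfixf : ∀ x ∉ T, f x = x)
    (hinvf : ∀ x ∈ T, f x ∈ T) (hagree : ∀ x ∈ T, f x = g x) {u v : ℤ}
    (h : orbRel f u v) (hu : u ∈ T) : orbRel g u v := by
  have main : ∀ {a b : ℤ}, orbRel f a b → ((a ∈ T ↔ b ∈ T) ∧ (a ∈ T → orbRel g a b)) := by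
    intro a b hab
    induction hab with
    | rel a b hab =>
      constructor
      · constructor
        · intro haT
          rw [← hab]
          exact hinvf a haT
        · intro hbT
          by_contra haT
          rw [hfixf a haT] at hab
          exact haT (by rw [hab]; exact hbT)
      · intro haT
        rw [← hab, hagree a haT]
        exact orbRel_step g a
    | refl a => exact ⟨Iff.rfl, fun _ => (orbRel_equivalence g).refl a⟩
    | symm a b _ ih =>
      exact ⟨ih.1.symm, fun hbT => (orbRel_equivalence g).symm (ih.2 (ih.1.mpr hbT))⟩
    | trans a b c _ _ ih1 ih2 =>
      exact ⟨ih1.1.trans ih2.1, fun haT =>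
        (orbRel_equivalence g).trans (ih1.2 haT) (ih2.2 (ih1.1.mp haT))⟩
  exact (main h).2 hu

/-! ### Concrete facts about `gammaB` -/

def posL (p : ℕ) : List ℤ := (List.range p).map fun k : ℕ => ((k + 1 : ℕ) : ℤ)
def negL (p : ℕ) : List ℤ := (List.range p).map fun k : ℕ => -((k + 1 : ℕ) : ℤ)
def LY (p : ℕ) : List ℤ := posL p ++ negL p
def posLZ (p q : ℕ) : List ℤ := (List.range q).map fun k : ℕ => ((p + k + 1 : ℕ) : ℤ)
def negLZ (p q : ℕ) : List ℤ := (List.range q).map fun k : ℕ => -((p + k + 1 : ℕ) : ℤ)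
def LZ (p q : ℕ) : List ℤ := posLZ p q ++ negLZ p q

lemma gammaB_def (p q : ℕ) : gammaB p q = (LY p).formPerm * (LZ p q).formPerm := rfl

lemma mem_posL {p : ℕ} {x : ℤ} : x ∈ posL p ↔ 1 ≤ x ∧ x ≤ (p : ℤ) := by
  simp only [posL, List.mem_map, List.mem_range]
  constructor
  · rintro ⟨k, hk, rfl⟩
    omega
  · intro hx
    exact ⟨x.toNat - 1, by omega, by omega⟩

lemma mem_negL {p : ℕ} {x : ℤ} : x ∈ negL p ↔ 1 ≤ -x ∧ -x ≤ (p : ℤ) := by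
  simp only [negL, List.mem_map, List.mem_range]
  constructor
  · rintro ⟨k, hk, rfl⟩
    omega
  · intro hx
    exact ⟨(-x).toNat - 1, by omega, by omega⟩

lemma mem_posLZ {p q : ℕ} {x : ℤ} :
    x ∈ posLZ p q ↔ (p : ℤ) + 1 ≤ x ∧ x ≤ (p : ℤ) + (q : ℤ) := by
  simp only [posLZ, List.mem_map, List.mem_range]
  constructor
  · rintro ⟨k, hk, rfl⟩
    omega
  · intro hx
    exact ⟨(x - p - 1).toNat, by omega, by omega⟩

lemma mem_negLZ {p q : ℕ} {x : ℤ} :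
    x ∈ negLZ p q ↔ (p : ℤ) + 1 ≤ -x ∧ -x ≤ (p : ℤ) + (q : ℤ) := by
  simp only [negLZ, List.mem_map, List.mem_range]
  constructor
  · rintro ⟨k, hk, rfl⟩
    omega
  · intro hx
    exact ⟨(-x - p - 1).toNat, by omega, by omega⟩

lemma mem_LY {p : ℕ} {x : ℤ} : x ∈ LY p ↔ x ∈ Yset p := by
  rw [LY, List.mem_append, mem_posL, mem_negL]
  show _ ↔ x ≠ 0 ∧ x.natAbs ≤ p
  omega

lemma mem_LZ {p q : ℕ} {x : ℤ} : x ∈ LZ p q ↔ x ∈ Zset p q := by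
  rw [LZ, List.mem_append, mem_posLZ, mem_negLZ]
  show _ ↔ x ∈ Xset (p + q) \ Xset p
  rw [Set.mem_diff]
  show _ ↔ (x ≠ 0 ∧ x.natAbs ≤ p + q) ∧ ¬(x ≠ 0 ∧ x.natAbs ≤ p)
  omega

lemma nodup_LY (p : ℕ) : (LY p).Nodup := by
  refine List.Nodup.append ?_ ?_ ?_
  · exact List.Nodup.map (fun a b h => by omega) List.nodup_range
  · exact List.Nodup.map (fun a b h => by omega) List.nodup_range
  · intro x hx hx'
    rw [mem_posL] at hx
    rw [mem_negL] at hx'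
    omega

lemma nodup_LZ (p q : ℕ) : (LZ p q).Nodup := by
  refine List.Nodup.append ?_ ?_ ?_
  · exact List.Nodup.map (fun a b h => by omega) List.nodup_range
  · exact List.Nodup.map (fun a b h => by omega) List.nodup_range
  · intro x hx hx'
    rw [mem_posLZ] at hx
    rw [mem_negLZ] at hx'
    omega

lemma gamma_apply_Y {p q : ℕ} {x : ℤ} (hx : x ∈ Yset p) :
    gammaB p q x = (LY p).formPerm x := by
  rw [gammaB_def, Equiv.Perm.mul_apply]
  congr 1
  apply List.formPerm_apply_of_notMem
  rw [mem_LZ]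
  exact fun h => h.2 hx

lemma gamma_mem_Y {p q : ℕ} {x : ℤ} (hx : x ∈ Yset p) : gammaB p q x ∈ Yset p := by
  rw [gamma_apply_Y hx, ← mem_LY]
  exact List.formPerm_apply_mem_of_mem (mem_LY.2 hx)

lemma gamma_apply_Z {p q : ℕ} {x : ℤ} (hx : x ∈ Zset p q) :
    gammaB p q x = (LZ p q).formPerm x := by
  rw [gammaB_def, Equiv.Perm.mul_apply]
  apply List.formPerm_apply_of_notMem
  rw [mem_LY]
  have h1 : (LZ p q).formPerm x ∈ LZ p q := List.formPerm_apply_mem_of_mem (mem_LZ.2 hx)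
  rw [mem_LZ] at h1
  exact h1.2

lemma gamma_mem_Z {p q : ℕ} {x : ℤ} (hx : x ∈ Zset p q) : gammaB p q x ∈ Zset p q := by
  rw [gamma_apply_Z hx, ← mem_LZ]
  exact List.formPerm_apply_mem_of_mem (mem_LZ.2 hx)

lemma Yset_subset_Xset {p q : ℕ} : Yset p ⊆ Xset (p + q) :=
  fun x hx => ⟨hx.1, le_trans hx.2 (Nat.le_add_right p q)⟩

lemma mem_Y_or_Z {p q : ℕ} {x : ℤ} (hx : x ∈ Xset (p + q)) :
    x ∈ Yset p ∨ x ∈ Zset p q := by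
  by_cases h : x ∈ Xset p
  · exact Or.inl h
  · exact Or.inr ⟨hx, h⟩

lemma gamma_fix {p q : ℕ} {x : ℤ} (hx : x ∉ Xset (p + q)) : gammaB p q x = x := by
  rw [gammaB_def, Equiv.Perm.mul_apply]
  have h2 : (LZ p q).formPerm x = x :=
    List.formPerm_apply_of_notMem (by rw [mem_LZ]; exact fun h => hx h.1)
  rw [h2]
  exact List.formPerm_apply_of_notMem
    (by rw [mem_LY]; exact fun h => hx (Yset_subset_Xset h))

lemma gamma_Y_iff {p q : ℕ} (x : ℤ) : x ∈ Yset p ↔ gammaB p q x ∈ Yset p := by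
  constructor
  · exact gamma_mem_Y
  · intro h
    by_contra hx
    rcases em (x ∈ Xset (p + q)) with hX | hX
    · have hZ : x ∈ Zset p q := ⟨hX, hx⟩
      exact (gamma_mem_Z hZ).2 h
    · rw [gamma_fix hX] at h
      exact hx h

lemma gamma_Z_iff {p q : ℕ} (x : ℤ) : x ∈ Zset p q ↔ gammaB p q x ∈ Zset p q := by
  constructor
  · exact gamma_mem_Z
  · intro h
    by_contra hx
    rcases em (x ∈ Xset (p + q)) with hX | hX
    · have hY : x ∈ Yset p := (mem_Y_or_Z hX).resolve_right hx
      exact h.2 (gamma_mem_Y hY)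
    · rw [gamma_fix hX] at h
      exact hx h

lemma Y_cyc {p q : ℕ} {u v : ℤ} (hu : u ∈ Yset p) (hv : v ∈ Yset p) :
    orbRel ⇑(gammaB p q) u v := by
  have hcy := (nodup_LY p).isCycleOn_formPerm
  have hsc : (LY p).formPerm.SameCycle u v := hcy.2 (mem_LY.2 hu) (mem_LY.2 hv)
  obtain ⟨i, hi⟩ := hsc
  have h1 : orbRel ⇑(LY p).formPerm u v := (orbRel_iff_zpow _ u v).2 ⟨i, hi⟩
  refine orbRel_transfer (f := ⇑(LY p).formPerm) (g := ⇑(gammaB p q)) (T := Yset p)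
    ?_ ?_ ?_ h1 hu
  · intro x hx
    exact List.formPerm_apply_of_notMem (fun h => hx (mem_LY.1 h))
  · intro x hx
    exact mem_LY.1 (List.formPerm_apply_mem_of_mem (mem_LY.2 hx))
  · intro x hx
    exact (gamma_apply_Y hx).symm

lemma Z_cyc {p q : ℕ} {u v : ℤ} (hu : u ∈ Zset p q) (hv : v ∈ Zset p q) :
    orbRel ⇑(gammaB p q) u v := by
  have hcy := (nodup_LZ p q).isCycleOn_formPerm
  have hsc : (LZ p q).formPerm.SameCycle u v := hcy.2 (mem_LZ.2 hu) (mem_LZ.2 hv)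
  obtain ⟨i, hi⟩ := hsc
  have h1 : orbRel ⇑(LZ p q).formPerm u v := (orbRel_iff_zpow _ u v).2 ⟨i, hi⟩
  refine orbRel_transfer (f := ⇑(LZ p q).formPerm) (g := ⇑(gammaB p q)) (T := Zset p q)
    ?_ ?_ ?_ h1 hu
  · intro x hx
    exact List.formPerm_apply_of_notMem (fun h => hx (mem_LZ.1 h))
  · intro x hx
    exact mem_LZ.1 (List.formPerm_apply_mem_of_mem (mem_LZ.2 hx))
  · intro x hx
    exact (gamma_apply_Z hx).symm

lemma orbOf_gamma_Y {p q : ℕ} {u : ℤ} (hu : u ∈ Yset p) :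
    orbOf ⇑(gammaB p q) u = Yset p := by
  ext b
  constructor
  · intro hb
    exact (orbRel_mem_iff (gamma_Y_iff (p := p) (q := q)) hb).1 hu
  · intro hb
    exact Y_cyc hu hb

lemma orbOf_gamma_Z {p q : ℕ} {u : ℤ} (hu : u ∈ Zset p q) :
    orbOf ⇑(gammaB p q) u = Zset p q := by
  ext b
  constructor
  · intro hb
    exact (orbRel_mem_iff (gamma_Z_iff (p := p) (q := q)) hb).1 hu
  · intro hb
    exact Z_cyc hu hb

lemma one_mem_Y {p : ℕ} (hp : 0 < p) : (1 : ℤ) ∈ Yset p :=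
  ⟨one_ne_zero, by simp; omega⟩

lemma pp1_mem_Z {p q : ℕ} (hq : 0 < q) : ((p : ℤ) + 1) ∈ Zset p q := by
  constructor
  · refine ⟨by omega, ?_⟩
    show ((p : ℤ) + 1).natAbs ≤ p + q
    omega
  · intro h
    have h2 := h.2
    have h3 : ((p : ℤ) + 1).natAbs = p + 1 := by omega
    omega

lemma nOrb_gamma {p q : ℕ} (hp : 0 < p) (hq : 0 < q) :
    nOrb ⇑(gammaB p q) (Xset (p + q)) = 2 := by
  have hYZ : Yset p ≠ Zset p q := by
    intro h
    have h1 : (1 : ℤ) ∈ Yset p := one_mem_Y hp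
    rw [h] at h1
    exact h1.2 (one_mem_Y hp)
  have hset : orbSet ⇑(gammaB p q) (Xset (p + q)) = {Yset p, Zset p q} := by
    ext O
    constructor
    · rintro ⟨a, ha, rfl⟩
      rcases mem_Y_or_Z ha with h | h
      · exact Or.inl (orbOf_gamma_Y h)
      · exact Or.inr (orbOf_gamma_Z h)
    · rintro (rfl | rfl)
      · exact ⟨1, Yset_subset_Xset (one_mem_Y hp), (orbOf_gamma_Y (one_mem_Y hp)).symm⟩
      · exact ⟨(p : ℤ) + 1, (pp1_mem_Z hq).1, (orbOf_gamma_Z (pp1_mem_Z hq)).symm⟩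
  rw [nOrb, hset, Set.ncard_pair hYZ]

lemma formPerm_map_conj (e : Equiv.Perm ℤ) : ∀ l : List ℤ,
    (l.map ⇑e).formPerm = e * l.formPerm * e⁻¹ := by
  intro l
  induction l with
  | nil => simp [List.formPerm_nil]
  | cons x xs ih =>
    cases xs with
    | nil => simp [List.formPerm_singleton]
    | cons y ys =>
      rw [List.map_cons, List.map_cons, List.formPerm_cons_cons,
        List.formPerm_cons_cons, ← List.map_cons, ih, Equiv.swap_apply_apply]
      group

lemma posL_map_neg (p : ℕ) : (posL p).map (fun x : ℤ => -x) = negL p := by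
  rw [posL, negL, List.map_map]
  congr 1

lemma negL_map_neg (p : ℕ) : (negL p).map (fun x : ℤ => -x) = posL p := by
  rw [negL, posL, List.map_map]
  congr 1

lemma posLZ_map_neg (p q : ℕ) : (posLZ p q).map (fun x : ℤ => -x) = negLZ p q := by
  rw [posLZ, negLZ, List.map_map]
  congr 1

lemma negLZ_map_neg (p q : ℕ) : (negLZ p q).map (fun x : ℤ => -x) = posLZ p q := by
  rw [negLZ, posLZ, List.map_map]
  congr 1

lemma LY_map_neg (p : ℕ) : (LY p).map (fun x : ℤ => -x) = (LY p).rotate p := by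
  have hlen : (posL p).length = p := by simp [posL]
  have hlen2 : (negL p).length = p := by simp [negL]
  rw [LY, List.map_append, posL_map_neg, negL_map_neg,
    List.rotate_eq_drop_append_take (by rw [List.length_append, hlen, hlen2]; omega)]
  have hdrop := List.drop_left (l₁ := posL p) (l₂ := negL p)
  rw [hlen] at hdrop
  have htake := List.take_left (l₁ := posL p) (l₂ := negL p)
  rw [hlen] at htake
  rw [hdrop, htake]

lemma LZ_map_neg (p q : ℕ) : (LZ p q).map (fun x : ℤ => -x) = (LZ p q).rotate q := by
  have hlen : (posLZ p q).length = q := by simp [posLZ]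
  have hlen2 : (negLZ p q).length = q := by simp [negLZ]
  rw [LZ, List.map_append, posLZ_map_neg, negLZ_map_neg,
    List.rotate_eq_drop_append_take (by rw [List.length_append, hlen, hlen2]; omega)]
  have hdrop := List.drop_left (l₁ := posLZ p q) (l₂ := negLZ p q)
  rw [hlen] at hdrop
  have htake := List.take_left (l₁ := posLZ p q) (l₂ := negLZ p q)
  rw [hlen] at htake
  rw [hdrop, htake]

lemma formPerm_neg_comm {l : List ℤ} {m : ℕ} (hl : l.Nodup)
    (hrot : l.map (fun x : ℤ => -x) = l.rotate m) (i : ℤ) :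
    l.formPerm (-i) = -(l.formPerm i) := by
  have hneg : (fun x : ℤ => -x) = ⇑(Equiv.neg ℤ) := rfl
  have h1 : (l.map ⇑(Equiv.neg ℤ)).formPerm = l.formPerm := by
    rw [← hneg, hrot, List.formPerm_rotate l hl m]
  rw [formPerm_map_conj] at h1
  have h2 : Equiv.neg ℤ * l.formPerm = l.formPerm * Equiv.neg ℤ := by
    have h1' := congrArg (fun e : Equiv.Perm ℤ => e * Equiv.neg ℤ) h1
    simp only [mul_assoc, inv_mul_cancel, mul_one] at h1'
    exact h1'
  have h3 := congrArg (fun e : Equiv.Perm ℤ => e i) h2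
  simp only [Equiv.Perm.mul_apply, Equiv.neg_apply] at h3
  exact h3.symm

lemma gamma_equivar (p q : ℕ) : ∀ i : ℤ, gammaB p q (-i) = -gammaB p q i := by
  intro i
  rw [gammaB_def, Equiv.Perm.mul_apply, Equiv.Perm.mul_apply,
    formPerm_neg_comm (nodup_LZ p q) (LZ_map_neg p q) i,
    formPerm_neg_comm (nodup_LY p) (LY_map_neg p) _]

lemma Icc_ncard (n : ℕ) : (Set.Icc (1 : ℤ) (n : ℤ)).ncard = n := by
  rw [← Finset.coe_Icc, Set.ncard_coe_finset, Int.card_Icc]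
  omega

end NCProof

open AnnularNC NCProof in
/-- **Lemma 3.3.** A permutation `τ ∈ S^B_nc(p,q)` cannot have an orbit which is both
`γ`-connected and inversion-invariant. -/
theorem no_gamma_connected_zero_orbit (p q : ℕ) (hp : 0 < p) (hq : 0 < q)
    (τ : Equiv.Perm ℤ) (hτ : τ ∈ AnnularNC.SBnc p q) :
    ∀ A ∈ AnnularNC.Om (p + q) τ, ¬ (AnnularNC.IsZeroBlock A ∧ AnnularNC.GConn p q A) := by
  classical
  rintro A hA ⟨hzero, hconn⟩
  obtain ⟨⟨hτSX, heq⟩, -, hτeq⟩ := hτ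
  have hγeq : ∀ i : ℤ, gammaB p q (-i) = -gammaB p q i := gamma_equivar p q
  have hγfix : ∀ x ∉ Xset (p + q), gammaB p q x = x := fun x hx => gamma_fix hx
  have hXfin := Xset_finite (p + q)
  obtain ⟨a₀, ha₀, hA₀⟩ := hA
  obtain ⟨⟨y₀, hy₀A, hy₀Y⟩, z₀, hz₀A, hz₀Z⟩ := hconn
  subst hA₀
  have hyz : orbRel ⇑τ y₀ z₀ :=
    (orbRel_equivalence ⇑τ).trans ((orbRel_equivalence ⇑τ).symm hy₀A) hz₀A
  have hall : ∀ a ∈ Xset (p + q), ∀ b ∈ Xset (p + q), orbRel2 ⇑τ ⇑(gammaB p q) a b := by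
    have hreach : ∀ a ∈ Xset (p + q), orbRel2 ⇑τ ⇑(gammaB p q) a y₀ := by
      intro a ha
      rcases mem_Y_or_Z ha with h | h
      · exact orbRel_le_orbRel2_right _ _ (Y_cyc h hy₀Y)
      · exact (orbRel2_equivalence _ _).trans
          (orbRel_le_orbRel2_right _ _ (Z_cyc h hz₀Z))
          (orbRel_le_orbRel2_left _ _ ((orbRel_equivalence ⇑τ).symm hyz))
    intro a ha b hb
    exact (orbRel2_equivalence _ _).trans (hreach a ha)
      ((orbRel2_equivalence _ _).symm (hreach b hb))
  have h1X : (1 : ℤ) ∈ Xset (p + q) := Yset_subset_Xset (one_mem_Y hp)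
  have hnorb2 : nOrb2 ⇑τ ⇑(gammaB p q) (Xset (p + q)) = 1 := nOrb2_eq_one ⟨1, h1X⟩ hall
  have hγ2 : nOrb ⇑(gammaB p q) (Xset (p + q)) = 2 := nOrb_gamma hp hq
  have hmain : nOrb ⇑τ (Xset (p + q)) + nOrb ⇑(τ⁻¹ * gammaB p q) (Xset (p + q)) =
      2 * (p + q) := by
    rw [hnorb2, hγ2] at heq
    omega
  have hτγeq : ∀ i : ℤ, (τ⁻¹ * gammaB p q) (-i) = -(τ⁻¹ * gammaB p q) i :=
    equivar_mul (equivar_inv hτeq) hγeq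
  have hτγfix : ∀ x ∉ Xset (p + q), (τ⁻¹ * gammaB p q) x = x := by
    intro x hx
    rw [Equiv.Perm.mul_apply, hγfix x hx]
    have h := hτSX x hx
    conv_lhs => rw [← h]
    rw [perm_inv_apply_self]
  have hbar1 : nOrb ⇑τ (Xset (p + q)) + 1 ≤
      2 * nOrb (barFun τ) (Set.Icc 1 ((p + q : ℕ) : ℤ)) := by
    have hb := bar_count hτeq hτSX
    have hFfin : {B ∈ orbSet ⇑τ (Xset (p + q)) | negSet B = B}.Finite := by
      refine Set.Finite.subset ?_ (Set.sep_subset _ _)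
      rw [orbSet_eq_clSet]
      exact clSet_finite hXfin
    have hF : 0 < {B ∈ orbSet ⇑τ (Xset (p + q)) | negSet B = B}.ncard :=
      (Set.ncard_pos hFfin).2 ⟨orbOf ⇑τ a₀, ⟨a₀, ha₀, rfl⟩, hzero⟩
    omega
  have hbar2 : nOrb ⇑(τ⁻¹ * gammaB p q) (Xset (p + q)) ≤
      2 * nOrb (barFun (τ⁻¹ * gammaB p q)) (Set.Icc 1 ((p + q : ℕ) : ℤ)) := by
    have hb := bar_count hτγeq hτγfix
    omega
  have hbar3 : 2 ≤ nOrb (barFun (gammaB p q)) (Set.Icc 1 ((p + q : ℕ) : ℤ)) := by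
    have hT : ∀ x : ℤ, x ∈ Set.Icc (1 : ℤ) (p : ℤ) ↔
        barFun (gammaB p q) x ∈ Set.Icc (1 : ℤ) (p : ℤ) := by
      intro x
      constructor
      · intro hx
        rw [Set.mem_Icc] at hx
        have hxY : x ∈ Yset p := ⟨by omega, by omega⟩
        have h2 : gammaB p q x ∈ Yset p := gamma_mem_Y hxY
        have h3 : barFun (gammaB p q) x = |gammaB p q x| := if_pos (by omega)
        rw [h3, Set.mem_Icc]
        have h4 := h2.1
        have h5 := h2.2
        have habs : |gammaB p q x| = (((gammaB p q x).natAbs : ℕ) : ℤ) :=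
          Int.abs_eq_natAbs _
        constructor <;> omega
      · intro hx
        by_contra hxn
        rcases lt_or_ge 0 x with h0 | h0
        · have h3 : barFun (gammaB p q) x = |gammaB p q x| := if_pos h0
          rw [h3] at hx
          rcases le_or_gt x ((p + q : ℕ) : ℤ) with hxle | hxgt
          · have hxZ : x ∈ Zset p q := by
              refine ⟨⟨by omega, by omega⟩, ?_⟩
              intro hmem
              apply hxn
              rw [Set.mem_Icc]
              have h6 := hmem.2
              omega
            have h2 := gamma_mem_Z (q := q) hxZ
            rw [Set.mem_Icc] at hx
            apply h2.2
            refine ⟨h2.1.1, ?_⟩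
            have habs : |gammaB p q x| = (((gammaB p q x).natAbs : ℕ) : ℤ) :=
              Int.abs_eq_natAbs _
            omega
          · have hxX : x ∉ Xset (p + q) := fun hmem => by
              have h6 := hmem.2; omega
            rw [hγfix x hxX, abs_of_pos h0, Set.mem_Icc] at hx
            omega
        · have h3 : barFun (gammaB p q) x = x := if_neg (by omega)
          rw [h3] at hx
          exact hxn hx
    have h1P : (1 : ℤ) ∈ Set.Icc (1 : ℤ) ((p + q : ℕ) : ℤ) :=
      Set.mem_Icc.2 ⟨le_refl _, by omega⟩
    have hp1P : ((p : ℤ) + 1) ∈ Set.Icc (1 : ℤ) ((p + q : ℕ) : ℤ) :=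
      Set.mem_Icc.2 ⟨by omega, by omega⟩
    have hdist : orbOf (barFun (gammaB p q)) 1 ≠ orbOf (barFun (gammaB p q)) ((p : ℤ) + 1) := by
      intro h
      have hmem : ((p : ℤ) + 1) ∈ orbOf (barFun (gammaB p q)) ((p : ℤ) + 1) :=
        (orbRel_equivalence _).refl _
      rw [← h] at hmem
      have h6 := (orbRel_mem_iff hT hmem).1 (Set.mem_Icc.2 ⟨le_refl _, by omega⟩)
      rw [Set.mem_Icc] at h6
      omega
    have hfinD : (orbSet (barFun (gammaB p q)) (Set.Icc (1 : ℤ) ((p + q : ℕ) : ℤ))).Finite := by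
      rw [orbSet_eq_clSet]
      exact clSet_finite (Set.finite_Icc _ _)
    have h2 : 1 < (orbSet (barFun (gammaB p q)) (Set.Icc (1 : ℤ) ((p + q : ℕ) : ℤ))).ncard := by
      rw [Set.one_lt_ncard_iff hfinD]
      exact ⟨orbOf (barFun (gammaB p q)) 1, orbOf (barFun (gammaB p q)) ((p : ℤ) + 1),
        ⟨1, h1P, rfl⟩, ⟨(p : ℤ) + 1, hp1P, rfl⟩, hdist⟩
    exact h2
  have hbar4 : nOrb2 (barFun τ) (barFun (gammaB p q)) (Set.Icc 1 ((p + q : ℕ) : ℤ)) = 1 := by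
    refine nOrb2_eq_one ⟨1, Set.mem_Icc.2 ⟨le_refl _, by omega⟩⟩ ?_
    intro a ha b hb
    rw [Set.mem_Icc] at ha hb
    have haX : a ∈ Xset (p + q) := ⟨by omega, by omega⟩
    have hbX : b ∈ Xset (p + q) := ⟨by omega, by omega⟩
    have h := orbRel2_abs hτeq hγeq (hall a haX b hbX)
    rwa [abs_of_pos (by omega : (0:ℤ) < a), abs_of_pos (by omega : (0:ℤ) < b)] at h
  have hJ := jacques (Set.finite_Icc (1 : ℤ) ((p + q : ℕ) : ℤ)) (barPerm τ hτeq)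
    (barPerm (gammaB p q) hγeq)
    (fun z hz => barFun_fix hτSX z hz) (fun z hz => barFun_fix hγfix z hz)
  rw [Icc_ncard] at hJ
  have hmid : nOrb ⇑((barPerm τ hτeq)⁻¹ * barPerm (gammaB p q) hγeq)
      (Set.Icc 1 ((p + q : ℕ) : ℤ)) =
      nOrb (barFun (τ⁻¹ * gammaB p q)) (Set.Icc 1 ((p + q : ℕ) : ℤ)) := by
    rw [barFun_comp hτeq hγeq]
  rw [hmid, coe_barPerm, coe_barPerm, hbar4] at hJ
  omega
end
end

section
/- Let p and q be positive integers, n = p + q. Let B and C be sets in O^B_nc(p,q) with B = −B ⊆ Y and C = −C ⊆ Z, and set A = B ∪ C. Suppose σ ∈ S^B_nc(p,q) is such that A is a union of orbits of σ. Then σ ↓ A ∈ S_nc(A, γ ↓ A), i.e. the induced permutation σ ↓ A is annular non-crossing with respect to the two-cycle reference permutation γ ↓ A (whose orbits on A are B and C): #(σ ↓ A) + #((σ ↓ A)⁻¹ ∘ (γ ↓ A)) + 2 = |A| + 2·#(σ ↓ A, γ ↓ A). -/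
open Equiv

noncomputable section

open scoped Classical

namespace NCAux

/-- generator relation of a function -/
def gr (f : ℤ → ℤ) : ℤ → ℤ → Prop := fun x y => f x = y

/-- orbit relation -/
def R (f : ℤ → ℤ) : ℤ → ℤ → Prop := Relation.EqvGen (gr f)

def gr2 (f g : ℤ → ℤ) : ℤ → ℤ → Prop := fun x y => f x = y ∨ g x = y

def R2 (f g : ℤ → ℤ) : ℤ → ℤ → Prop := Relation.EqvGen (gr2 f g)

lemma R_equiv (f : ℤ → ℤ) : Equivalence (R f) := Relation.EqvGen.is_equivalence _

lemma R2_equiv (f g : ℤ → ℤ) : Equivalence (R2 f g) := Relation.EqvGen.is_equivalence _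

/-- class of x under relation r -/
def cls (r : ℤ → ℤ → Prop) (x : ℤ) : Set ℤ := {y | r x y}

/-- number of classes meeting A -/
def cnt (r : ℤ → ℤ → Prop) (A : Set ℤ) : ℕ := (cls r '' A).ncard

variable {r s : ℤ → ℤ → Prop} {A B : Set ℤ}

lemma mem_cls_iff {x y : ℤ} : y ∈ cls r x ↔ r x y := Iff.rfl

lemma mem_cls_self (hr : Equivalence r) (x : ℤ) : x ∈ cls r x := hr.refl x

lemma cls_eq_of_rel (hr : Equivalence r) {x y : ℤ} (h : r x y) : cls r x = cls r y := by
  ext z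
  exact ⟨fun hz => hr.trans (hr.symm h) hz, fun hz => hr.trans h hz⟩

lemma rel_of_cls_eq (hr : Equivalence r) {x y : ℤ} (h : cls r x = cls r y) : r x y := by
  have : y ∈ cls r y := hr.refl y
  rw [← h] at this
  exact this

lemma cnt_congr (h : ∀ x y, r x y ↔ s x y) : cnt r A = cnt s A := by
  have : r = s := by funext x y; exact propext (h x y)
  rw [this]

lemma cnt_congr_on (h : ∀ x ∈ A, ∀ y, (r x y ↔ s x y)) : cnt r A = cnt s A := by
  unfold cnt
  congr 1
  apply Set.image_congr
  intro x hx
  ext y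
  exact h x hx y

lemma cnt_le_of_le (hr : Equivalence r) (hs : Equivalence s)
    (hrs : ∀ x y, r x y → s x y) (hA : A.Finite) : cnt s A ≤ cnt r A := by
  have himg : cls s '' A = (fun S : Set ℤ => {y | ∃ x ∈ S, s x y}) '' (cls r '' A) := by
    rw [← Set.image_comp]
    apply Set.image_congr
    intro a _
    ext y
    simp only [Function.comp_apply, Set.mem_setOf_eq]
    constructor
    · intro hy
      exact ⟨a, hr.refl a, hy⟩
    · rintro ⟨x, hx, hxy⟩
      exact hs.trans (hrs _ _ hx) hxy
  show (cls s '' A).ncard ≤ (cls r '' A).ncard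
  rw [himg]
  calc ((fun S : Set ℤ => {y | ∃ x ∈ S, s x y}) '' (cls r '' A)).ncard
      ≤ (cls r '' A).ncard := Set.ncard_image_le (hA.image _)
  _ = cnt r A := rfl

/-- the join of an equivalence with one extra pair (c,d) -/
def joinRel (r : ℤ → ℤ → Prop) (c d : ℤ) : ℤ → ℤ → Prop :=
  fun x y => r x y ∨ (r x c ∧ r d y) ∨ (r x d ∧ r c y)

lemma joinRel_equivalence (hr : Equivalence r) (c d : ℤ) : Equivalence (joinRel r c d) := by
  constructor
  · intro x
    exact Or.inl (hr.refl x)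
  · rintro x y (h | ⟨h1, h2⟩ | ⟨h1, h2⟩)
    · exact Or.inl (hr.symm h)
    · exact Or.inr (Or.inr ⟨hr.symm h2, hr.symm h1⟩)
    · exact Or.inr (Or.inl ⟨hr.symm h2, hr.symm h1⟩)
  · rintro x y z (h | ⟨h1, h2⟩ | ⟨h1, h2⟩) (h' | ⟨h1', h2'⟩ | ⟨h1', h2'⟩)
    · exact Or.inl (hr.trans h h')
    · exact Or.inr (Or.inl ⟨hr.trans h h1', h2'⟩)
    · exact Or.inr (Or.inr ⟨hr.trans h h1', h2'⟩)
    · exact Or.inr (Or.inl ⟨h1, hr.trans h2 h'⟩)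
    · exact Or.inr (Or.inl ⟨h1, h2'⟩)
    · exact Or.inl (hr.trans h1 h2')
    · exact Or.inr (Or.inr ⟨h1, hr.trans h2 h'⟩)
    · exact Or.inl (hr.trans h1 h2')
    · exact Or.inr (Or.inr ⟨h1, h2'⟩)

lemma joinRel_self (hr : Equivalence r) {c d : ℤ} : joinRel r c d c d :=
  Or.inr (Or.inl ⟨hr.refl c, hr.refl d⟩)

lemma le_joinRel {c d : ℤ} : ∀ x y, r x y → joinRel r c d x y := fun _ _ h => Or.inl h

lemma joinRel_eq_of_rel (hr : Equivalence r) {c d : ℤ} (hcd : r c d) {x y : ℤ} :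
    joinRel r c d x y ↔ r x y := by
  constructor
  · rintro (h | ⟨h1, h2⟩ | ⟨h1, h2⟩)
    · exact h
    · exact hr.trans (hr.trans h1 hcd) h2
    · exact hr.trans (hr.trans h1 (hr.symm hcd)) h2
  · exact Or.inl

lemma cnt_joinRel_of_rel (hr : Equivalence r) {c d : ℤ} (hcd : r c d) :
    cnt (joinRel r c d) A = cnt r A :=
  cnt_congr fun _ _ => joinRel_eq_of_rel hr hcd

lemma cls_joinRel_of_not_rel (hr : Equivalence r) {c d x : ℤ} (hxc : ¬ r x c) (hxd : ¬ r x d) :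
    cls (joinRel r c d) x = cls r x := by
  ext y
  simp only [mem_cls_iff, joinRel]
  constructor
  · rintro (h | ⟨h1, _⟩ | ⟨h1, _⟩)
    · exact h
    · exact absurd h1 hxc
    · exact absurd h1 hxd
  · exact Or.inl

lemma cls_joinRel_of_rel_c (hr : Equivalence r) {c d x : ℤ} (hxc : r x c) :
    cls (joinRel r c d) x = cls r c ∪ cls r d := by
  ext y
  simp only [mem_cls_iff, joinRel, Set.mem_union]
  constructor
  · rintro (h | ⟨_, h2⟩ | ⟨h1, h2⟩)
    · exact Or.inl (hr.trans (hr.symm hxc) h)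
    · exact Or.inr h2
    · exact Or.inl h2
  · rintro (h | h)
    · exact Or.inl (hr.trans hxc h)
    · exact Or.inr (Or.inl ⟨hxc, h⟩)

lemma cls_joinRel_of_rel_d (hr : Equivalence r) {c d x : ℤ} (hxd : r x d) :
    cls (joinRel r c d) x = cls r c ∪ cls r d := by
  ext y
  simp only [mem_cls_iff, joinRel, Set.mem_union]
  constructor
  · rintro (h | ⟨h1, h2⟩ | ⟨_, h2⟩)
    · exact Or.inr (hr.trans (hr.symm hxd) h)
    · exact Or.inr h2
    · exact Or.inl h2
  · rintro (h | h)
    · exact Or.inr (Or.inr ⟨hxd, h⟩)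
    · exact Or.inl (hr.trans hxd h)

lemma cnt_joinRel_of_not_rel (hr : Equivalence r) {c d : ℤ} (hc : c ∈ A) (hd : d ∈ A)
    (hA : A.Finite) (hcd : ¬ r c d) : cnt (joinRel r c d) A + 1 = cnt r A := by
  classical
  set O : Set ℤ := cls r c ∪ cls r d with hO
  have hmemO : ∀ x, x ∈ O ↔ (r x c ∨ r x d) := by
    intro x
    simp only [hO, Set.mem_union, mem_cls_iff]
    constructor
    · rintro (h | h)
      · exact Or.inl (hr.symm h)
      · exact Or.inr (hr.symm h)
    · rintro (h | h)
      · exact Or.inl (hr.symm h)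
      · exact Or.inr (hr.symm h)
  have himg1 : cls (joinRel r c d) '' A = insert (cls r c ∪ cls r d) (cls r '' (A \ O)) := by
    ext S
    simp only [Set.mem_image, Set.mem_insert_iff, Set.mem_diff]
    constructor
    · rintro ⟨x, hx, rfl⟩
      by_cases hxO : x ∈ O
      · rcases (hmemO x).1 hxO with h | h
        · exact Or.inl (cls_joinRel_of_rel_c hr h)
        · exact Or.inl (cls_joinRel_of_rel_d hr h)
      · have hxc : ¬ r x c := fun h => hxO ((hmemO x).2 (Or.inl h))
        have hxd : ¬ r x d := fun h => hxO ((hmemO x).2 (Or.inr h))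
        exact Or.inr ⟨x, ⟨hx, hxO⟩, (cls_joinRel_of_not_rel hr hxc hxd).symm⟩
    · rintro (rfl | ⟨x, ⟨hx, hxO⟩, rfl⟩)
      · exact ⟨c, hc, cls_joinRel_of_rel_c hr (hr.refl c)⟩
      · have hxc : ¬ r x c := fun h => hxO ((hmemO x).2 (Or.inl h))
        have hxd : ¬ r x d := fun h => hxO ((hmemO x).2 (Or.inr h))
        exact ⟨x, hx, cls_joinRel_of_not_rel hr hxc hxd⟩
  have himg2 : cls r '' A = insert (cls r c) (insert (cls r d) (cls r '' (A \ O))) := by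
    ext S
    simp only [Set.mem_image, Set.mem_insert_iff, Set.mem_diff]
    constructor
    · rintro ⟨x, hx, rfl⟩
      by_cases hxO : x ∈ O
      · rcases (hmemO x).1 hxO with h | h
        · exact Or.inl (cls_eq_of_rel hr h)
        · exact Or.inr (Or.inl (cls_eq_of_rel hr h))
      · exact Or.inr (Or.inr ⟨x, ⟨hx, hxO⟩, rfl⟩)
    · rintro (rfl | rfl | ⟨x, ⟨hx, _⟩, rfl⟩)
      · exact ⟨c, hc, rfl⟩
      · exact ⟨d, hd, rfl⟩
      · exact ⟨x, hx, rfl⟩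
  have hEfin : (cls r '' (A \ O)).Finite := hA.diff.image _
  have hcE : cls r c ∉ cls r '' (A \ O) := by
    rintro ⟨x, ⟨_, hxO⟩, hx⟩
    exact hxO ((hmemO x).2 (Or.inl (rel_of_cls_eq hr hx)))
  have hdE : cls r d ∉ cls r '' (A \ O) := by
    rintro ⟨x, ⟨_, hxO⟩, hx⟩
    exact hxO ((hmemO x).2 (Or.inr (rel_of_cls_eq hr hx)))
  have hcdE : cls r c ∪ cls r d ∉ cls r '' (A \ O) := by
    rintro ⟨x, ⟨_, hxO⟩, hx⟩
    have : c ∈ cls r x := by rw [hx]; exact Or.inl (mem_cls_self hr c)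
    exact hxO ((hmemO x).2 (Or.inl this))
  have hcd' : cls r c ≠ cls r d := fun h => hcd (rel_of_cls_eq hr h)
  unfold cnt
  rw [himg1, himg2]
  have e1 : (insert (cls r c ∪ cls r d) (cls r '' (A \ O))).ncard
      = (cls r '' (A \ O)).ncard + 1 := Set.ncard_insert_of_notMem hcdE hEfin
  have e2 : (insert (cls r c) (insert (cls r d) (cls r '' (A \ O)))).ncard
      = (cls r '' (A \ O)).ncard + 2 := by
    rw [Set.ncard_insert_of_notMem (by simp [hcd', hcE]) (hEfin.insert _),
        Set.ncard_insert_of_notMem hdE hEfin]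
  rw [e1, e2]

lemma cnt_union_of_sep (hr : Equivalence r) (hA : A.Finite) (hB : B.Finite)
    (hsep : ∀ x ∈ A, ∀ y ∈ B, ¬ r x y) : cnt r (A ∪ B) = cnt r A + cnt r B := by
  unfold cnt
  rw [Set.image_union]
  apply Set.ncard_union_eq _ (hA.image _) (hB.image _)
  rw [Set.disjoint_left]
  rintro S ⟨x, hx, rfl⟩ ⟨y, hy, hxy⟩
  exact hsep x hx y hy (rel_of_cls_eq hr hxy.symm)

lemma cnt_of_singletons (h : ∀ x ∈ A, cls r x = {x}) : cnt r A = A.ncard := by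
  unfold cnt
  apply Set.ncard_image_of_injOn
  intro x hx y hy hxy
  rw [h x hx, h y hy] at hxy
  simpa using hxy

lemma cnt_pair (hr : Equivalence r) {b c : ℤ} (hb : b ∈ A) (hc : c ∈ A)
    (hpart : ∀ x ∈ A, r b x ∨ r c x) (hbc : ¬ r b c) : cnt r A = 2 := by
  have himg : cls r '' A = {cls r b, cls r c} := by
    ext S
    simp only [Set.mem_image, Set.mem_insert_iff, Set.mem_singleton_iff]
    constructor
    · rintro ⟨x, hx, rfl⟩
      rcases hpart x hx with h | h
      · exact Or.inl (cls_eq_of_rel hr h).symm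
      · exact Or.inr (cls_eq_of_rel hr h).symm
    · rintro (rfl | rfl)
      · exact ⟨b, hb, rfl⟩
      · exact ⟨c, hc, rfl⟩
  rw [cnt, himg]
  exact Set.ncard_pair (fun h => hbc (rel_of_cls_eq hr h))

/-- push EqvGen into an equivalence -/
lemma eqvGen_le {t : ℤ → ℤ → Prop} (hs : Equivalence s) (h : ∀ x y, t x y → s x y)
    {x y : ℤ} (hxy : Relation.EqvGen t x y) : s x y :=
  hs.eqvGen_iff.1 (Relation.EqvGen.mono h _ _ hxy)


end NCAux

namespace NCAux

variable {A B W : Set ℤ}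

lemma R_gen {f : ℤ → ℤ} (x : ℤ) : R f x (f x) := Relation.EqvGen.rel _ _ rfl

lemma R_iterate (f : ℤ → ℤ) (x : ℤ) (k : ℕ) : R f x (f^[k] x) := by
  induction k with
  | zero => exact (R_equiv f).refl x
  | succ n ih =>
      rw [Function.iterate_succ_apply']
      exact (R_equiv f).trans ih (R_gen _)

lemma R_mem_iff {f : ℤ → ℤ} {T : Set ℤ} (hT : ∀ x, x ∈ T ↔ f x ∈ T) {x y : ℤ}
    (h : R f x y) : (x ∈ T ↔ y ∈ T) := by
  induction h with
  | rel a b hab => rw [← hab]; exact hT a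
  | refl a => exact Iff.rfl
  | symm a b _ ih => exact ih.symm
  | trans a b c _ _ ih1 ih2 => exact ih1.trans ih2

lemma R2_mem_iff {f g : ℤ → ℤ} {T : Set ℤ} (hf : ∀ x, x ∈ T ↔ f x ∈ T)
    (hg : ∀ x, x ∈ T ↔ g x ∈ T) {x y : ℤ} (h : R2 f g x y) : (x ∈ T ↔ y ∈ T) := by
  induction h with
  | rel a b hab =>
      rcases hab with hab | hab
      · rw [← hab]; exact hf a
      · rw [← hab]; exact hg a
  | refl a => exact Iff.rfl
  | symm a b _ ih => exact ih.symm
  | trans a b c _ _ ih1 ih2 => exact ih1.trans ih2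

/-- locality for single orbit relation -/
lemma R_congr_on {f g : ℤ → ℤ} (hfg : ∀ x ∈ A, f x = g x)
    (hf : ∀ x, x ∈ A ↔ f x ∈ A) (hg : ∀ x, x ∈ A ↔ g x ∈ A) {x y : ℤ} (hx : x ∈ A) :
    (R f x y ↔ R g x y) := by
  have main : ∀ (f g : ℤ → ℤ), (∀ x ∈ A, f x = g x) → (∀ x, x ∈ A ↔ f x ∈ A) →
      (∀ x, x ∈ A ↔ g x ∈ A) → ∀ x y, R f x y → x ∈ A → R g x y := by
    intro f g hfg hf hg x y h
    induction h with
    | rel a b hab =>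
        intro ha
        rw [← hab, hfg a ha]
        exact R_gen a
    | refl a => intro _; exact (R_equiv g).refl a
    | symm a b hab ih =>
        intro hb
        have ha : a ∈ A := (R_mem_iff hf hab).2 hb
        exact (R_equiv g).symm (ih ha)
    | trans a b c hab _ ih1 ih2 =>
        intro ha
        have hb : b ∈ A := (R_mem_iff hf hab).1 ha
        exact (R_equiv g).trans (ih1 ha) (ih2 hb)
  constructor
  · intro h; exact main f g hfg hf hg x y h hx
  · intro h; exact main g f (fun x hx => (hfg x hx).symm) hg hf x y h hx

lemma cnt_R_congr_on {f g : ℤ → ℤ} (hfg : ∀ x ∈ A, f x = g x)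
    (hf : ∀ x, x ∈ A ↔ f x ∈ A) (hg : ∀ x, x ∈ A ↔ g x ∈ A) :
    cnt (R f) A = cnt (R g) A :=
  cnt_congr_on (fun x hx y => R_congr_on hfg hf hg hx)

/-- locality for joint orbit relation -/
lemma R2_congr_on {f g f' g' : ℤ → ℤ} (hff' : ∀ x ∈ A, f x = f' x) (hgg' : ∀ x ∈ A, g x = g' x)
    (hf : ∀ x, x ∈ A ↔ f x ∈ A) (hg : ∀ x, x ∈ A ↔ g x ∈ A)
    (hf' : ∀ x, x ∈ A ↔ f' x ∈ A) (hg' : ∀ x, x ∈ A ↔ g' x ∈ A) {x y : ℤ} (hx : x ∈ A) :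
    (R2 f g x y ↔ R2 f' g' x y) := by
  have main : ∀ (f g f' g' : ℤ → ℤ), (∀ x ∈ A, f x = f' x) → (∀ x ∈ A, g x = g' x) →
      (∀ x, x ∈ A ↔ f x ∈ A) → (∀ x, x ∈ A ↔ g x ∈ A) →
      ∀ x y, R2 f g x y → x ∈ A → R2 f' g' x y := by
    intro f g f' g' hff' hgg' hf hg x y h
    induction h with
    | rel a b hab =>
        intro ha
        rcases hab with hab | hab
        · rw [← hab, hff' a ha]
          exact Relation.EqvGen.rel _ _ (Or.inl rfl)
        · rw [← hab, hgg' a ha]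
          exact Relation.EqvGen.rel _ _ (Or.inr rfl)
    | refl a => intro _; exact (R2_equiv f' g').refl a
    | symm a b hab ih =>
        intro hb
        have ha : a ∈ A := (R2_mem_iff hf hg hab).2 hb
        exact (R2_equiv f' g').symm (ih ha)
    | trans a b c hab _ ih1 ih2 =>
        intro ha
        have hb : b ∈ A := (R2_mem_iff hf hg hab).1 ha
        exact (R2_equiv f' g').trans (ih1 ha) (ih2 hb)
  constructor
  · intro h; exact main f g f' g' hff' hgg' hf hg x y h hx
  · intro h
    exact main f' g' f g (fun x hx => (hff' x hx).symm) (fun x hx => (hgg' x hx).symm)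
      hf' hg' x y h hx

lemma cnt_R2_congr_on {f g f' g' : ℤ → ℤ} (hff' : ∀ x ∈ A, f x = f' x)
    (hgg' : ∀ x ∈ A, g x = g' x)
    (hf : ∀ x, x ∈ A ↔ f x ∈ A) (hg : ∀ x, x ∈ A ↔ g x ∈ A)
    (hf' : ∀ x, x ∈ A ↔ f' x ∈ A) (hg' : ∀ x, x ∈ A ↔ g' x ∈ A) :
    cnt (R2 f g) A = cnt (R2 f' g') A :=
  cnt_congr_on (fun x hx y => R2_congr_on hff' hgg' hf hg hf' hg' hx)

/-- class of a fixed point of an injective map is a singleton -/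
lemma cls_R_fixed {f : ℤ → ℤ} (hinj : Function.Injective f) {c : ℤ} (hc : f c = c) :
    cls (R f) c = {c} := by
  have main : ∀ x y, R f x y → ((x = c → y = c) ∧ (y = c → x = c)) := by
    intro x y h
    induction h with
    | rel a b hab =>
        constructor
        · rintro rfl; rw [← hab, hc]
        · rintro rfl; exact hinj (hab.trans hc.symm)
    | refl a => exact ⟨id, id⟩
    | symm a b _ ih => exact ⟨ih.2, ih.1⟩
    | trans a b c' _ _ ih1 ih2 => exact ⟨fun h => ih2.1 (ih1.1 h), fun h => ih1.2 (ih2.2 h)⟩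
  ext y
  simp only [mem_cls_iff, Set.mem_singleton_iff]
  constructor
  · intro h; exact (main c y h).1 rfl
  · rintro rfl; exact (R_equiv f).refl _

lemma not_R_of_fixed {f : ℤ → ℤ} (hinj : Function.Injective f) {c d : ℤ} (hc : f c = c)
    (hd : d ≠ c) : ¬ R f c d := by
  intro h
  have := cls_R_fixed hinj hc
  have hdmem : d ∈ cls (R f) c := h
  rw [this] at hdmem
  exact hd hdmem

/-- invariance iff from mapsTo on a finite set, for injective maps -/
lemma mem_iff_of_mapsTo {f : ℤ → ℤ} (hinj : Function.Injective f) (hW : W.Finite)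
    (h : ∀ x ∈ W, f x ∈ W) (hout : ∀ x ∉ W, f x = x) : ∀ x, x ∈ W ↔ f x ∈ W := by
  intro x
  constructor
  · exact h x
  · intro hfx
    by_contra hx
    rw [hout x hx] at hfx
    exact hx hfx

/-- image equality: an injective map sending finite W into W is onto W -/
lemma image_eq_of_mapsTo {f : ℤ → ℤ} (hinj : Function.Injective f) (hW : W.Finite)
    (h : ∀ x ∈ W, f x ∈ W) : f '' W = W := by
  apply Set.eq_of_subset_of_ncard_le
  · rintro y ⟨x, hx, rfl⟩; exact h x hx
  · rw [Set.ncard_image_of_injective _ hinj]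
  · exact hW

lemma mem_iff_of_mapsTo' {f : ℤ → ℤ} (hinj : Function.Injective f) (hW : W.Finite)
    (h : ∀ x ∈ W, f x ∈ W) : ∀ x, x ∈ W ↔ f x ∈ W := by
  intro x
  constructor
  · exact h x
  · intro hfx
    have : f x ∈ f '' W := by rw [image_eq_of_mapsTo hinj hW h]; exact hfx
    rcases this with ⟨z, hz, hzx⟩
    rwa [← hinj hzx]

/-- every point of a finite invariant set is periodic -/
lemma exists_period {f : ℤ → ℤ} (hinj : Function.Injective f) (hW : W.Finite)
    (h : ∀ x ∈ W, f x ∈ W) {x : ℤ} (hx : x ∈ W) : ∃ m, 0 < m ∧ f^[m] x = x := by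
  have hiter : ∀ k : ℕ, f^[k] x ∈ W := by
    intro k
    induction k with
    | zero => exact hx
    | succ n ih => rw [Function.iterate_succ_apply']; exact h _ ih
  have : ¬ Function.Injective (fun k : ℕ => f^[k] x) := by
    intro hcontra
    have hsub : Set.range (fun k : ℕ => f^[k] x) ⊆ W := by
      rintro y ⟨k, rfl⟩; exact hiter k
    exact ((Set.infinite_range_of_injective hcontra).mono hsub) hW
  rw [Function.not_injective_iff] at this
  obtain ⟨a, b, hab, hne⟩ := this
  rcases Nat.lt_or_ge a b with hlt | hge
  · refine ⟨b - a, by omega, ?_⟩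
    have : f^[a] (f^[b-a] x) = f^[a] x := by
      rw [← Function.iterate_add_apply]
      have : a + (b - a) = b := by omega
      rw [this, hab]
    have := Function.Injective.iterate hinj a this
    exact this
  · have hlt : b < a := by omega
    refine ⟨a - b, by omega, ?_⟩
    have : f^[b] (f^[a-b] x) = f^[b] x := by
      rw [← Function.iterate_add_apply]
      have : b + (a - b) = a := by omega
      rw [this, hab]
    exact Function.Injective.iterate hinj b this

end NCAux

namespace NCAux

variable {A W : Set ℤ}

lemma R_mul_swap_le_join (f : Perm ℤ) (c d : ℤ) {x y : ℤ}
    (h : R ⇑(f * Equiv.swap c d) x y) : joinRel (R ⇑f) c d x y := by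
  have hre := R_equiv (⇑f)
  refine eqvGen_le (joinRel_equivalence hre c d) ?_ h
  intro a b hab
  change (f * Equiv.swap c d) a = b at hab
  rw [Equiv.Perm.mul_apply] at hab
  by_cases hac : a = c
  · subst hac
    rw [Equiv.swap_apply_left] at hab
    exact Or.inr (Or.inl ⟨hre.refl a, hab ▸ R_gen d⟩)
  · by_cases had : a = d
    · subst had
      rw [Equiv.swap_apply_right] at hab
      exact Or.inr (Or.inr ⟨hre.refl a, hab ▸ R_gen c⟩)
    · rw [Equiv.swap_apply_of_ne_of_ne hac had] at hab
      exact Or.inl (hab ▸ R_gen a)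

lemma mul_swap_swap (f : Perm ℤ) (c d : ℤ) : (f * Equiv.swap c d) * Equiv.swap c d = f := by
  rw [mul_assoc, Equiv.swap_mul_self, mul_one]

lemma R_le_join_mul_swap (f : Perm ℤ) (c d : ℤ) {x y : ℤ}
    (h : R ⇑f x y) : joinRel (R ⇑(f * Equiv.swap c d)) c d x y := by
  have := R_mul_swap_le_join (f * Equiv.swap c d) c d (x := x) (y := y)
  rw [mul_swap_swap] at this
  exact this h

lemma cnt_le_cnt_mul_swap_add_one (f : Perm ℤ) {c d : ℤ} (hA : A.Finite)
    (hc : c ∈ A) (hd : d ∈ A) :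
    cnt (R ⇑f) A ≤ cnt (R ⇑(f * Equiv.swap c d)) A + 1 := by
  have hrf := R_equiv ⇑f
  have h1 : cnt (joinRel (R ⇑f) c d) A ≤ cnt (R ⇑(f * Equiv.swap c d)) A :=
    cnt_le_of_le (R_equiv _) (joinRel_equivalence hrf c d)
      (fun a b hab => R_mul_swap_le_join f c d hab) hA
  by_cases hcd : R ⇑f c d
  · rw [cnt_joinRel_of_rel hrf hcd] at h1
    omega
  · have := cnt_joinRel_of_not_rel hrf hc hd hA hcd
    omega

lemma cnt_mul_swap_le_cnt_add_one (f : Perm ℤ) {c d : ℤ} (hA : A.Finite)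
    (hc : c ∈ A) (hd : d ∈ A) :
    cnt (R ⇑(f * Equiv.swap c d)) A ≤ cnt (R ⇑f) A + 1 := by
  have := cnt_le_cnt_mul_swap_add_one (f * Equiv.swap c d) (c := c) (d := d) hA hc hd
  rw [mul_swap_swap] at this
  exact this

lemma R_mul_swap_reach (f : Perm ℤ) {c d : ℤ} (hcd : ¬ R ⇑f c d)
    (hper : ∃ m, 0 < m ∧ (⇑f)^[m] d = d) : R ⇑(f * Equiv.swap c d) c d := by
  classical
  set g := f * Equiv.swap c d with hg
  have hgc : g c = f d := by rw [hg]; simp [Equiv.Perm.mul_apply]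
  have hgx : ∀ x, x ≠ c → x ≠ d → g x = f x := by
    intro x h1 h2
    rw [hg]
    simp [Equiv.Perm.mul_apply, Equiv.swap_apply_of_ne_of_ne h1 h2]
  have hne : ∀ i : ℕ, (⇑f)^[i] d ≠ c := by
    intro i h
    exact hcd ((R_equiv ⇑f).symm (h ▸ R_iterate (⇑f) d i))
  let k := Nat.find hper
  have hk : 0 < k ∧ (⇑f)^[k] d = d := Nat.find_spec hper
  have hkmin : ∀ i, i < k → ¬ (0 < i ∧ (⇑f)^[i] d = d) := fun i h => Nat.find_min hper h
  have key : ∀ i, 1 ≤ i → i < k → (⇑g)^[i] c = (⇑f)^[i] d := by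
    intro i
    induction i with
    | zero => omega
    | succ n ih =>
        intro _ hlt
        by_cases hn : n = 0
        · subst hn
          simpa using hgc
        · have hn1 : 1 ≤ n := by omega
          have hnk : n < k := by omega
          have hprev := ih hn1 hnk
          rw [Function.iterate_succ_apply', hprev, Function.iterate_succ_apply']
          apply hgx
          · exact hne n
          · intro h
            exact (hkmin n hnk) ⟨by omega, h⟩
  have hfinal : (⇑g)^[k] c = d := by
    by_cases hk1 : k = 1
    · rw [hk1]
      simp only [Function.iterate_one]
      rw [hgc]
      have := hk.2
      rw [hk1] at this
      simpa using this
    · have hk2 : 2 ≤ k := by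
        have := hk.1
        omega
      have hprev := key (k - 1) (by omega) (by omega)
      have : (⇑g)^[k] c = g ((⇑g)^[k-1] c) := by
        conv_lhs => rw [show k = (k-1) + 1 by omega]
        rw [Function.iterate_succ_apply']
      rw [this, hprev, hgx _ (hne _) (fun h => (hkmin (k-1) (by omega)) ⟨by omega, h⟩)]
      have : f ((⇑f)^[k-1] d) = (⇑f)^[k] d := by
        conv_rhs => rw [show k = (k-1) + 1 by omega]
        rw [Function.iterate_succ_apply']
      rw [this, hk.2]
  exact hfinal ▸ R_iterate (⇑g) c k

lemma join_iff_R_mul_swap (f : Perm ℤ) {c d : ℤ} (hreach : R ⇑(f * Equiv.swap c d) c d)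
    {x y : ℤ} : joinRel (R ⇑f) c d x y ↔ R ⇑(f * Equiv.swap c d) x y := by
  set g := f * Equiv.swap c d with hg
  have hge := R_equiv ⇑g
  constructor
  · have hRfg : ∀ a b, R ⇑f a b → R ⇑g a b := by
      intro a b hab
      refine eqvGen_le hge ?_ hab
      intro a b hab
      change f a = b at hab
      by_cases hac : a = c
      · subst hac
        have hgd : g d = b := by rw [hg]; simp [Equiv.Perm.mul_apply, hab]
        exact hge.trans hreach (hgd ▸ R_gen d)
      · by_cases had : a = d
        · subst had
          have hgc : g c = b := by rw [hg]; simp [Equiv.Perm.mul_apply, hab]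
          exact hge.trans (hge.symm hreach) (hgc ▸ R_gen c)
        · have : g a = b := by
            rw [hg]
            simp [Equiv.Perm.mul_apply, Equiv.swap_apply_of_ne_of_ne hac had, hab]
          exact this ▸ R_gen a
    rintro (h | ⟨h1, h2⟩ | ⟨h1, h2⟩)
    · exact hRfg _ _ h
    · exact hge.trans (hRfg _ _ h1) (hge.trans hreach (hRfg _ _ h2))
    · exact hge.trans (hRfg _ _ h1) (hge.trans (hge.symm hreach) (hRfg _ _ h2))
  · exact R_mul_swap_le_join f c d

lemma cnt_mul_swap_of_not_rel (f : Perm ℤ) {c d : ℤ} (hcd : ¬ R ⇑f c d)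
    (hreach : R ⇑(f * Equiv.swap c d) c d) (hA : A.Finite) (hc : c ∈ A) (hd : d ∈ A) :
    cnt (R ⇑(f * Equiv.swap c d)) A + 1 = cnt (R ⇑f) A := by
  have heq : cnt (R ⇑(f * Equiv.swap c d)) A = cnt (joinRel (R ⇑f) c d) A :=
    cnt_congr (fun x y => (join_iff_R_mul_swap f hreach).symm)
  rw [heq]
  exact cnt_joinRel_of_not_rel (R_equiv _) hc hd hA hcd

lemma reach_of_fixed (f : Perm ℤ) {c d : ℤ} (hc : f c = c) :
    R ⇑(f * Equiv.swap c d) c d := by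
  have : (f * Equiv.swap c d) d = c := by simp [Equiv.Perm.mul_apply, hc]
  exact (R_equiv _).symm (Relation.EqvGen.rel d c this)

lemma cnt_mul_swap_fixed (f : Perm ℤ) {c d : ℤ} (hc : f c = c) (hdc : d ≠ c)
    (hA : A.Finite) (hcA : c ∈ A) (hdA : d ∈ A) :
    cnt (R ⇑(f * Equiv.swap c d)) A + 1 = cnt (R ⇑f) A :=
  cnt_mul_swap_of_not_rel f (not_R_of_fixed f.injective hc hdc) (reach_of_fixed f hc)
    hA hcA hdA

/- R2 tooling -/

lemma R2_comm {f g : ℤ → ℤ} {x y : ℤ} (h : R2 f g x y) : R2 g f x y := by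
  refine eqvGen_le (R2_equiv g f) ?_ h
  rintro a b (hab | hab)
  · exact Relation.EqvGen.rel _ _ (Or.inr hab)
  · exact Relation.EqvGen.rel _ _ (Or.inl hab)

lemma R_le_R2_left {f g : ℤ → ℤ} {x y : ℤ} (h : R f x y) : R2 f g x y := by
  refine eqvGen_le (R2_equiv f g) ?_ h
  intro a b hab
  exact Relation.EqvGen.rel _ _ (Or.inl hab)

lemma R_le_R2_right {f g : ℤ → ℤ} {x y : ℤ} (h : R g x y) : R2 f g x y := by
  refine eqvGen_le (R2_equiv f g) ?_ h
  intro a b hab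
  exact Relation.EqvGen.rel _ _ (Or.inr hab)

lemma R_inv_mul_le_R2 (u v : Perm ℤ) {x y : ℤ} (h : R ⇑(u⁻¹ * v) x y) : R2 ⇑u ⇑v x y := by
  have h2 := R2_equiv ⇑u ⇑v
  refine eqvGen_le h2 ?_ h
  intro a b hab
  change u⁻¹ (v a) = b at hab
  have hub : u b = v a := by rw [← hab]; exact u.apply_symm_apply (v a)
  have h1 : R2 ⇑u ⇑v a (v a) := Relation.EqvGen.rel _ _ (Or.inr rfl)
  have h2' : R2 ⇑u ⇑v b (v a) := Relation.EqvGen.rel _ _ (Or.inl hub)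
  exact h2.trans h1 (h2.symm h2')

/-- soft: modifying the second component by a swap -/
lemma R2_mul_swap_le_join (f : Perm ℤ) (v : ℤ → ℤ) (c d : ℤ) {x y : ℤ}
    (h : R2 ⇑(f * Equiv.swap c d) v x y) : joinRel (R2 ⇑f v) c d x y := by
  have hre := R2_equiv (⇑f) v
  refine eqvGen_le (joinRel_equivalence hre c d) ?_ h
  rintro a b (hab | hab)
  · change (f * Equiv.swap c d) a = b at hab
    rw [Equiv.Perm.mul_apply] at hab
    by_cases hac : a = c
    · subst hac
      rw [Equiv.swap_apply_left] at hab
      exact Or.inr (Or.inl ⟨hre.refl a, Relation.EqvGen.rel _ _ (Or.inl hab)⟩)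
    · by_cases had : a = d
      · subst had
        rw [Equiv.swap_apply_right] at hab
        exact Or.inr (Or.inr ⟨hre.refl a, Relation.EqvGen.rel _ _ (Or.inl hab)⟩)
      · rw [Equiv.swap_apply_of_ne_of_ne hac had] at hab
        exact Or.inl (Relation.EqvGen.rel _ _ (Or.inl hab))
  · exact Or.inl (Relation.EqvGen.rel _ _ (Or.inr hab))

lemma R2_le_join_mul_swap (f : Perm ℤ) (v : ℤ → ℤ) (c d : ℤ) {x y : ℤ}
    (h : R2 ⇑f v x y) : joinRel (R2 ⇑(f * Equiv.swap c d) v) c d x y := by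
  have := R2_mul_swap_le_join (f * Equiv.swap c d) v c d (x := x) (y := y)
  rw [mul_swap_swap] at this
  exact this h

lemma cnt_R2_le_mul_swap_add_one (f : Perm ℤ) (v : ℤ → ℤ) {c d : ℤ} (hA : A.Finite)
    (hc : c ∈ A) (hd : d ∈ A) :
    cnt (R2 ⇑f v) A ≤ cnt (R2 ⇑(f * Equiv.swap c d) v) A + 1 := by
  have hrf := R2_equiv ⇑f v
  have h1 : cnt (joinRel (R2 ⇑f v) c d) A ≤ cnt (R2 ⇑(f * Equiv.swap c d) v) A :=
    cnt_le_of_le (R2_equiv _ _) (joinRel_equivalence hrf c d)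
      (fun a b hab => R2_mul_swap_le_join f v c d hab) hA
  by_cases hcd : R2 ⇑f v c d
  · rw [cnt_joinRel_of_rel hrf hcd] at h1
    omega
  · have := cnt_joinRel_of_not_rel hrf hc hd hA hcd
    omega

lemma cnt_R2_mul_swap_le_add_one (f : Perm ℤ) (v : ℤ → ℤ) {c d : ℤ} (hA : A.Finite)
    (hc : c ∈ A) (hd : d ∈ A) :
    cnt (R2 ⇑(f * Equiv.swap c d) v) A ≤ cnt (R2 ⇑f v) A + 1 := by
  have := cnt_R2_le_mul_swap_add_one (f * Equiv.swap c d) v (c := c) (d := d) hA hc hd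
  rw [mul_swap_swap] at this
  exact this

/-- if c,d are already jointly related after the swap, the joint count does not go up -/
lemma cnt_R2_le_mul_swap_of_rel (f : Perm ℤ) (v : ℤ → ℤ) {c d : ℤ} (hA : A.Finite)
    (hrel : R2 ⇑(f * Equiv.swap c d) v c d) :
    cnt (R2 ⇑(f * Equiv.swap c d) v) A ≤ cnt (R2 ⇑f v) A := by
  have hrg := R2_equiv ⇑(f * Equiv.swap c d) v
  apply cnt_le_of_le (R2_equiv (⇑f) v) (R2_equiv _ _) _ hA
  intro a b hab
  have := R2_le_join_mul_swap f v c d hab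
  rcases this with h | ⟨h1, h2⟩ | ⟨h1, h2⟩
  · exact h
  · exact hrg.trans h1 (hrg.trans hrel h2)
  · exact hrg.trans h1 (hrg.trans (hrg.symm hrel) h2)

/-- inverse-multiplication identity used in the genus induction -/
lemma inv_mul_swap_eq (f v : Perm ℤ) (c d : ℤ) :
    (f * Equiv.swap c d)⁻¹ * v = (f⁻¹ * v) * Equiv.swap (v⁻¹ (f c)) (v⁻¹ (f d)) := by
  have hswap : Equiv.swap ((v⁻¹ * f) c) ((v⁻¹ * f) d)
      = (v⁻¹ * f) * Equiv.swap c d * (v⁻¹ * f)⁻¹ := Equiv.swap_apply_apply (v⁻¹ * f) c d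
  have : Equiv.swap (v⁻¹ (f c)) (v⁻¹ (f d)) = (v⁻¹ * f) * Equiv.swap c d * (v⁻¹ * f)⁻¹ := by
    simpa [Equiv.Perm.mul_apply] using hswap
  rw [this]
  simp [mul_inv_rev, Equiv.swap_inv, mul_assoc]

end NCAux

namespace NCAux

variable {W : Set ℤ}

lemma mapsTo_inv {u : Perm ℤ} (hW : W.Finite) (hu : ∀ x ∈ W, u x ∈ W) :
    ∀ x ∈ W, u⁻¹ x ∈ W := by
  intro x hx
  have hiff := mem_iff_of_mapsTo' u.injective hW hu (u⁻¹ x)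
  rw [(show ∀ y, u (u⁻¹ y) = y from u.apply_symm_apply)] at hiff
  exact hiff.2 hx

/-- the second collapse lemma -/
lemma cnt_R2_ge_of_rel (f : Perm ℤ) (v : ℤ → ℤ) {c d : ℤ} {A : Set ℤ} (hA : A.Finite)
    (hrel : R2 ⇑f v c d) :
    cnt (R2 ⇑f v) A ≤ cnt (R2 ⇑(f * Equiv.swap c d) v) A := by
  have hrf := R2_equiv (⇑f) v
  apply cnt_le_of_le (R2_equiv (⇑(f * Equiv.swap c d)) v) (R2_equiv (⇑f) v) _ hA
  intro a b hab
  have := R2_mul_swap_le_join f v c d hab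
  rcases this with h | ⟨h1, h2⟩ | ⟨h1, h2⟩
  · exact h
  · exact hrf.trans h1 (hrf.trans hrel h2)
  · exact hrf.trans h1 (hrf.trans (hrf.symm hrel) h2)

/-- joint orbits with an identity-on-W first component -/
lemma R2_eq_R_of_fixed_left {u : Perm ℤ} {v : ℤ → ℤ} (hW : W.Finite)
    (hu : ∀ x ∈ W, u x ∈ W) (hviff : ∀ x, x ∈ W ↔ v x ∈ W)
    (hfix : ∀ x ∈ W, u x = x) {x y : ℤ} (hx : x ∈ W) :
    R2 ⇑u v x y ↔ R v x y := by
  have hiffu := mem_iff_of_mapsTo' u.injective hW hu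
  constructor
  · intro h
    have main : ∀ a b, R2 ⇑u v a b → (a ∈ W → R v a b) ∧ (a ∈ W ↔ b ∈ W) := by
      intro a b hab
      induction hab with
      | rel a b hab =>
          rcases hab with hab | hab
          · constructor
            · intro ha
              rw [← hab, hfix a ha]
              exact (R_equiv v).refl a
            · rw [← hab]; exact hiffu a
          · exact ⟨fun _ => hab ▸ R_gen a, by rw [← hab]; exact hviff a⟩
      | refl a => exact ⟨fun _ => (R_equiv v).refl a, Iff.rfl⟩
      | symm a b hab ih => exact ⟨fun hb => (R_equiv v).symm (ih.1 (ih.2.2 hb)), ih.2.symm⟩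
      | trans a b c hab hbc ih1 ih2 =>
          exact ⟨fun ha => (R_equiv v).trans (ih1.1 ha) (ih2.1 (ih1.2.1 ha)),
            ih1.2.trans ih2.2⟩
    exact (main x y h).1 hx
  · exact fun h => R_le_R2_right h

end NCAux

namespace NCAux

theorem genus_ineq (W : Set ℤ) (hW : W.Finite) (v : Perm ℤ) (hv : ∀ x ∈ W, v x ∈ W)
    (u : Perm ℤ) (hu : ∀ x ∈ W, u x ∈ W) :
    cnt (R ⇑u) W + cnt (R ⇑(u⁻¹ * v)) W + cnt (R ⇑v) W
      ≤ W.ncard + 2 * cnt (R2 ⇑u ⇑v) W := by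
  generalize hn : ({x | x ∈ W ∧ u x ≠ x}).ncard = n
  induction n using Nat.strong_induction_on generalizing u with
  | _ n IH =>
  have hviff := mem_iff_of_mapsTo' v.injective hW hv
  by_cases hbase : ∀ x ∈ W, u x = x
  · -- base case : u = id on W
    have huiff := mem_iff_of_mapsTo' u.injective hW hu
    have h1 : cnt (R ⇑u) W = W.ncard :=
      cnt_of_singletons (fun x hx => cls_R_fixed u.injective (hbase x hx))
    have huv : ∀ x ∈ W, (u⁻¹ * v) x ∈ W := by
      intro x hx
      exact mapsTo_inv hW hu _ (hv x hx)
    have huviff := mem_iff_of_mapsTo' (u⁻¹ * v).injective hW huv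
    have h2 : cnt (R ⇑(u⁻¹ * v)) W = cnt (R ⇑v) W := by
      apply cnt_R_congr_on _ huviff hviff
      intro x hx
      change u⁻¹ (v x) = v x
      have hvx : v x ∈ W := hv x hx
      have : u (v x) = v x := hbase _ hvx
      rw [← this, (show ∀ y, u⁻¹ (u y) = y from u.symm_apply_apply), this]
    have h3 : cnt (R2 ⇑u ⇑v) W = cnt (R ⇑v) W :=
      cnt_congr_on (fun x hx y => R2_eq_R_of_fixed_left hW hu hviff hbase hx)
    rw [h1, h2, h3]
    omega
  · -- inductive step
    push_neg at hbase
    obtain ⟨a, haW, hua⟩ := hbase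
    have huaW : u a ∈ W := hu a haW
    set t := Equiv.swap a (u a) with ht
    set u' := t * u with hu'def
    have hu'a : u' a = a := by
      rw [hu'def]
      simp [Equiv.Perm.mul_apply, ht]
    have hu'W : ∀ x ∈ W, u' x ∈ W := by
      intro x hx
      rw [hu'def]
      simp only [Equiv.Perm.mul_apply]
      by_cases h1 : u x = a
      · rw [ht, h1, Equiv.swap_apply_left]; exact huaW
      · by_cases h2 : u x = u a
        · rw [ht, h2, Equiv.swap_apply_right]; exact haW
        · rw [ht, Equiv.swap_apply_of_ne_of_ne h1 h2]; exact hu x hx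
    -- measure decreases
    have hmeas : ({x | x ∈ W ∧ u' x ≠ x}).ncard < n := by
      have hsub : {x | x ∈ W ∧ u' x ≠ x} ⊆ {x | x ∈ W ∧ u x ≠ x} \ {a} := by
        rintro x ⟨hxW, hx⟩
        constructor
        · refine ⟨hxW, ?_⟩
          intro hfix
          apply hx
          rw [hu'def]
          simp only [Equiv.Perm.mul_apply, hfix]
          rw [ht]
          by_cases h1 : x = a
          · exact absurd (h1 ▸ hfix) hua
          · by_cases h2 : x = u a
            · exfalso
              apply hua
              have : u (u a) = u a := h2 ▸ hfix
              exact u.injective this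
            · rw [Equiv.swap_apply_of_ne_of_ne h1 h2]
        · simp only [Set.mem_singleton_iff]
          intro hxa
          subst hxa
          exact hx hu'a
      have hfin : ({x | x ∈ W ∧ u x ≠ x}).Finite := hW.subset (fun x hx => hx.1)
      have haS : a ∈ {x | x ∈ W ∧ u x ≠ x} := ⟨haW, hua⟩
      calc ({x | x ∈ W ∧ u' x ≠ x}).ncard
          ≤ (({x | x ∈ W ∧ u x ≠ x}) \ {a}).ncard := Set.ncard_le_ncard hsub hfin.diff
        _ < ({x | x ∈ W ∧ u x ≠ x}).ncard := Set.ncard_diff_singleton_lt_of_mem haS hfin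
        _ = n := hn
    have IHu' := IH _ hmeas u' hu'W rfl
    -- algebra
    set d := u⁻¹ a with hd
    have hdW : d ∈ W := mapsTo_inv hW hu a haW
    have hda : d ≠ a := by
      rw [hd]
      intro h
      apply hua
      have := congrArg u h
      rw [(show ∀ y, u (u⁻¹ y) = y from u.apply_symm_apply)] at this
      exact this.symm
    have hu'd : u' d = u a := by
      rw [hu'def, hd]
      simp only [Equiv.Perm.mul_apply, (show ∀ y, u (u⁻¹ y) = y from u.apply_symm_apply), ht, Equiv.swap_apply_left]
    have hueq : u = u' * Equiv.swap a d := by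
      ext x
      simp only [Equiv.Perm.mul_apply]
      by_cases h1 : x = a
      · subst h1
        rw [Equiv.swap_apply_left, hu'd]
      · by_cases h2 : x = d
        · subst h2
          rw [Equiv.swap_apply_right, hu'a, hd, (show ∀ y, u (u⁻¹ y) = y from u.apply_symm_apply)]
        · rw [Equiv.swap_apply_of_ne_of_ne h1 h2, hu'def]
          simp only [Equiv.Perm.mul_apply, ht]
          have hxa : u x ≠ a := by
            intro h
            apply h2
            rw [hd, ← h, (show ∀ y, u⁻¹ (u y) = y from u.symm_apply_apply)]
          have hxua : u x ≠ u a := fun h => h1 (u.injective h)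
          rw [Equiv.swap_apply_of_ne_of_ne hxa hxua]
    -- count of u
    have hcntu : cnt (R ⇑u) W + 1 = cnt (R ⇑u') W := by
      conv_lhs => rw [hueq]
      exact cnt_mul_swap_fixed u' hu'a hda hW haW hdW
    -- inverse side points
    set c' := v⁻¹ a with hc'
    set d' := v⁻¹ (u a) with hd'
    have hc'W : c' ∈ W := mapsTo_inv hW hv a haW
    have hd'W : d' ∈ W := mapsTo_inv hW hv _ huaW
    have hinva : u⁻¹ * v = (u'⁻¹ * v) * Equiv.swap c' d' := by
      conv_lhs => rw [hueq]
      rw [inv_mul_swap_eq u' v a d, hu'a, hu'd]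
    have hu'invW : ∀ x ∈ W, (u'⁻¹ * v) x ∈ W := by
      intro x hx
      exact mapsTo_inv hW hu'W _ (hv x hx)
    -- d always jointly related to u a under (u', v) : u' d = u a
    have hjoin_d_ua : R2 ⇑u' ⇑v d (u a) := Relation.EqvGen.rel _ _ (Or.inl hu'd)
    by_cases hjoin : R2 ⇑u' ⇑v a (u a)
    · -- connected case
      have hrel_ad : R2 ⇑u' ⇑v a d :=
        (R2_equiv _ _).trans hjoin ((R2_equiv _ _).symm hjoin_d_ua)
      have h2le : cnt (R2 ⇑u' ⇑v) W ≤ cnt (R2 ⇑u ⇑v) W := by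
        have := cnt_R2_ge_of_rel u' (⇑v) hW hrel_ad
        rwa [← hueq] at this
      have hmid : cnt (R ⇑(u⁻¹ * v)) W ≤ cnt (R ⇑(u'⁻¹ * v)) W + 1 := by
        conv_lhs => rw [hinva]
        exact cnt_mul_swap_le_cnt_add_one (u'⁻¹ * v) hW hc'W hd'W
      omega
    · -- disconnected case
      have h2ge : cnt (R2 ⇑u' ⇑v) W ≤ cnt (R2 ⇑u ⇑v) W + 1 := by
        have := cnt_R2_le_mul_swap_add_one u' (⇑v) (c := a) (d := d) hW haW hdW
        rwa [← hueq] at this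
      have hnotrel : ¬ R ⇑(u'⁻¹ * v) c' d' := by
        intro h
        apply hjoin
        have h2 := R_inv_mul_le_R2 u' v h
        have hca : R2 ⇑u' ⇑v c' a := Relation.EqvGen.rel _ _ (Or.inr (by
          rw [hc']; exact v.apply_symm_apply a))
        have hdua : R2 ⇑u' ⇑v d' (u a) := Relation.EqvGen.rel _ _ (Or.inr (by
          rw [hd']; exact v.apply_symm_apply (u a)))
        have hre := R2_equiv (⇑u') (⇑v)
        exact hre.trans (hre.symm hca) (hre.trans h2 hdua)
      have hper : ∃ m, 0 < m ∧ (⇑(u'⁻¹ * v))^[m] d' = d' :=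
        exists_period (u'⁻¹ * v).injective hW hu'invW hd'W
      have hreach := R_mul_swap_reach (u'⁻¹ * v) hnotrel hper
      have hmid : cnt (R ⇑(u⁻¹ * v)) W + 1 = cnt (R ⇑(u'⁻¹ * v)) W := by
        conv_lhs => rw [hinva]
        exact cnt_mul_swap_of_not_rel (u'⁻¹ * v) hnotrel hreach hW hc'W hd'W
      omega

end NCAux

namespace NCAux

/-- local copy of the file's dArrow -/
def dA (f : ℤ → ℤ) (A : Set ℤ) : ℤ → ℤ := fun a =>
  if a ∈ A then f^[sInf {k : ℕ | 0 < k ∧ f^[k] a ∈ A}] a else a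

variable {A W : Set ℤ} {f : ℤ → ℤ} {a : ℤ}

lemma dA_not_mem (h : a ∉ A) : dA f A a = a := if_neg h

lemma dA_mem_eq (ha : a ∈ A) : dA f A a = f^[sInf {k : ℕ | 0 < k ∧ f^[k] a ∈ A}] a := if_pos ha

/-- with return hypothesis : basic properties of the return time -/
lemma retTime_spec (hne : ∃ k, 0 < k ∧ f^[k] a ∈ A) :
    0 < sInf {k : ℕ | 0 < k ∧ f^[k] a ∈ A} ∧
    f^[sInf {k : ℕ | 0 < k ∧ f^[k] a ∈ A}] a ∈ A ∧
    ∀ i, 0 < i → i < sInf {k : ℕ | 0 < k ∧ f^[k] a ∈ A} → f^[i] a ∉ A := by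
  have hmem := Nat.sInf_mem (s := {k : ℕ | 0 < k ∧ f^[k] a ∈ A}) hne
  refine ⟨hmem.1, hmem.2, ?_⟩
  intro i h0 hlt hA
  have : sInf {k : ℕ | 0 < k ∧ f^[k] a ∈ A} ≤ i :=
    Nat.sInf_le (show i ∈ {k : ℕ | 0 < k ∧ f^[k] a ∈ A} from ⟨h0, hA⟩)
  omega

lemma dA_mem (ha : a ∈ A) (hne : ∃ k, 0 < k ∧ f^[k] a ∈ A) : dA f A a ∈ A := by
  rw [dA_mem_eq ha]
  exact (retTime_spec hne).2.1

lemma dA_mem_iff (hret : ∀ x ∈ A, ∃ k, 0 < k ∧ f^[k] x ∈ A) :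
    ∀ x, x ∈ A ↔ dA f A x ∈ A := by
  intro x
  constructor
  · intro hx; exact dA_mem hx (hret x hx)
  · intro h
    by_contra hx
    rw [dA_not_mem hx] at h
    exact hx h

lemma dA_eq_self_of_mapsTo (hmaps : ∀ x ∈ A, f x ∈ A) (ha : a ∈ A) : dA f A a = f a := by
  rw [dA_mem_eq ha]
  have h1 : 1 ∈ {k : ℕ | 0 < k ∧ f^[k] a ∈ A} := by
    refine ⟨Nat.one_pos, ?_⟩
    simpa using hmaps a ha
  have : sInf {k : ℕ | 0 < k ∧ f^[k] a ∈ A} = 1 := by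
    have hle := Nat.sInf_le h1
    have hpos := (Nat.sInf_mem ⟨1, h1⟩).1
    omega
  rw [this]
  simp

/-- first-return orbits absorb every A-point on the forward orbit -/
lemma R_dA_of_iterate_mem (hret : ∀ x ∈ A, ∃ k, 0 < k ∧ f^[k] x ∈ A) :
    ∀ j, ∀ a ∈ A, f^[j] a ∈ A → R (dA f A) a (f^[j] a) := by
  intro j
  induction j using Nat.strong_induction_on with
  | _ j IH =>
  intro a ha hj
  by_cases hj0 : j = 0
  · subst hj0; exact (R_equiv _).refl _
  set T := sInf {k : ℕ | 0 < k ∧ f^[k] a ∈ A} with hT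
  obtain ⟨hT0, hTmem, hTmin⟩ := retTime_spec (hret a ha)
  have hjT : T ≤ j := by
    by_contra h
    push_neg at h
    exact hTmin j (by omega) h hj
  have hsplit : f^[j] a = f^[j - T] (f^[T] a) := by
    rw [← Function.iterate_add_apply]
    congr 1
    omega
  have hgen : R (dA f A) a (f^[T] a) := by
    have : dA f A a = f^[T] a := dA_mem_eq ha
    exact this ▸ R_gen a
  have hrec : R (dA f A) (f^[T] a) (f^[j - T] (f^[T] a)) := by
    apply IH (j - T) (by omega) _ hTmem
    rw [← hsplit]
    exact hj
  rw [hsplit]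
  exact (R_equiv _).trans hgen hrec

end NCAux

namespace NCAux

variable {A W : Set ℤ}

lemma iterate_mem {f : ℤ → ℤ} (hf : ∀ x ∈ W, f x ∈ W) {a : ℤ} (ha : a ∈ W) :
    ∀ k, f^[k] a ∈ W := by
  intro k
  induction k with
  | zero => exact ha
  | succ n ih => rw [Function.iterate_succ_apply']; exact hf _ ih

lemma cnt_R2_comm (f g : ℤ → ℤ) : cnt (R2 f g) A = cnt (R2 g f) A :=
  cnt_congr (fun x y => ⟨R2_comm, R2_comm⟩)

lemma surgery_exists (ρ : Perm ℤ) (hW : W.Finite) (hρW : ∀ x ∈ W, ρ x ∈ W)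
    (hAW : A ⊆ W) {a : ℤ} (ha : a ∈ A) (hcross : ρ a ∉ A) :
    ∃ b : ℤ, b ∈ W ∧ b ∉ A ∧ b ≠ a ∧
      (∀ x ∈ W, (ρ * Equiv.swap a b) x ∈ W) ∧
      (∀ x ∈ A, dA ⇑(ρ * Equiv.swap a b) A x = dA ⇑ρ A x) ∧
      (cnt (R ⇑ρ) W) + 1 = cnt (R ⇑(ρ * Equiv.swap a b)) W ∧
      {x | x ∈ A ∧ (ρ * Equiv.swap a b) x ∉ A} = {x | x ∈ A ∧ ρ x ∉ A} \ {a} := by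
  classical
  have hret : ∀ x ∈ A, ∃ k, 0 < k ∧ (⇑ρ)^[k] x ∈ A := by
    intro x hx
    obtain ⟨m, hm, hmx⟩ := exists_period ρ.injective hW hρW (hAW hx)
    refine ⟨m, hm, ?_⟩
    rw [hmx]
    exact hx
  obtain ⟨hT0, hTA, hTmin⟩ := retTime_spec (hret a ha)
  set T := sInf {k : ℕ | 0 < k ∧ (⇑ρ)^[k] a ∈ A} with hTdef
  have hT2 : 2 ≤ T := by
    rcases Nat.lt_or_ge T 2 with h | h
    · exfalso
      have hT1 : T = 1 := by omega
      rw [hT1] at hTA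
      simp only [Function.iterate_one] at hTA
      exact hcross hTA
    · exact h
  set b := (⇑ρ)^[T - 1] a with hbdef
  have hbW : b ∈ W := iterate_mem hρW (hAW ha) _
  have hbA : b ∉ A := hTmin (T - 1) (by omega) (by omega)
  have hba : b ≠ a := fun h => hbA (by rw [h]; exact ha)
  set ρ' := ρ * Equiv.swap a b with hρ'def
  have hTsucc : (⇑ρ)^[T] a = ρ ((⇑ρ)^[T - 1] a) := by
    conv_lhs => rw [show T = (T - 1) + 1 by omega]
    rw [Function.iterate_succ_apply']
  have hρ'a : ρ' a = (⇑ρ)^[T] a := by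
    rw [hρ'def]
    simp only [Equiv.Perm.mul_apply, Equiv.swap_apply_left]
    rw [hTsucc, ← hbdef]
  have hρ'b : ρ' b = ρ a := by
    rw [hρ'def]
    simp only [Equiv.Perm.mul_apply, Equiv.swap_apply_right]
  have hρ'x : ∀ x, x ≠ a → x ≠ b → ρ' x = ρ x := by
    intro x h1 h2
    rw [hρ'def]
    simp only [Equiv.Perm.mul_apply, Equiv.swap_apply_of_ne_of_ne h1 h2]
  have hρ'W : ∀ x ∈ W, ρ' x ∈ W := by
    intro x hx
    by_cases h1 : x = a
    · rw [h1, hρ'a]; exact iterate_mem hρW (hAW ha) _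
    · by_cases h2 : x = b
      · rw [h2, hρ'b]; exact hρW a (hAW ha)
      · rw [hρ'x x h1 h2]; exact hρW x hx
  have hseg_ne_a : ∀ i, 0 < i → i < T → (⇑ρ)^[i] a ≠ a :=
    fun i h0 hi h => hTmin i h0 hi (by rw [h]; exact ha)
  -- (1) dA preservation
  have hpres : ∀ x ∈ A, dA ⇑ρ' A x = dA ⇑ρ A x := by
    intro x hx
    by_cases hxa : x = a
    · rw [hxa]
      have h1mem : (1 : ℕ) ∈ {k : ℕ | 0 < k ∧ (⇑ρ')^[k] a ∈ A} := by
        refine ⟨Nat.one_pos, ?_⟩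
        simp only [Function.iterate_one]
        rw [hρ'a]
        exact hTA
      have hsInf1 : sInf {k : ℕ | 0 < k ∧ (⇑ρ')^[k] a ∈ A} = 1 := by
        have hle := Nat.sInf_le h1mem
        have hpos := (Nat.sInf_mem (⟨1, h1mem⟩ :
          Set.Nonempty {k : ℕ | 0 < k ∧ (⇑ρ')^[k] a ∈ A})).1
        omega
      rw [dA_mem_eq ha, dA_mem_eq ha, hsInf1]
      simp only [Function.iterate_one]
      rw [hρ'a, hTdef]
    · -- x ≠ a
      set S := sInf {k : ℕ | 0 < k ∧ (⇑ρ)^[k] x ∈ A} with hSdef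
      obtain ⟨hS0, hSA, hSmin⟩ := retTime_spec (hret x hx)
      have hiter_eq : ∀ i, i ≤ S → (⇑ρ')^[i] x = (⇑ρ)^[i] x := by
        intro i
        induction i with
        | zero => intro _; rfl
        | succ m ih =>
            intro hm
            have hmS : m < S := by omega
            have hprev := ih (by omega)
            rw [Function.iterate_succ_apply', Function.iterate_succ_apply', hprev]
            apply hρ'x
            · intro h
              rcases Nat.eq_zero_or_pos m with hm0 | hm0
              · rw [hm0] at h; exact hxa h
              · exact (hSmin m hm0 hmS) (by rw [h]; exact ha)
            · intro h
              rw [hbdef] at h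
              rcases Nat.lt_or_ge m (T - 1) with hcase | hcase
              · have heq : (⇑ρ)^[m] ((⇑ρ)^[T - 1 - m] a) = (⇑ρ)^[m] x := by
                  rw [← Function.iterate_add_apply]
                  have hmm : m + (T - 1 - m) = T - 1 := by omega
                  rw [hmm, ← h]
                have hxeq : (⇑ρ)^[T - 1 - m] a = x :=
                  (ρ.injective.iterate m) heq
                have hnA : (⇑ρ)^[T - 1 - m] a ∉ A := hTmin _ (by omega) (by omega)
                rw [hxeq] at hnA
                exact hnA hx
              · have heq : (⇑ρ)^[T - 1] ((⇑ρ)^[m - (T - 1)] x) = (⇑ρ)^[T - 1] a := by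
                  rw [← Function.iterate_add_apply]
                  have hmm : (T - 1) + (m - (T - 1)) = m := by omega
                  rw [hmm, h]
                have hxeq : (⇑ρ)^[m - (T - 1)] x = a :=
                  (ρ.injective.iterate (T - 1)) heq
                rcases Nat.eq_zero_or_pos (m - (T - 1)) with hm0 | hm0
                · rw [hm0] at hxeq; exact hxa hxeq
                · exact (hSmin _ hm0 (by omega)) (by rw [hxeq]; exact ha)
      have hSmem' : S ∈ {k : ℕ | 0 < k ∧ (⇑ρ')^[k] x ∈ A} := by
        refine ⟨hS0, ?_⟩
        rw [hiter_eq S le_rfl]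
        exact hSA
      have hsInfS : sInf {k : ℕ | 0 < k ∧ (⇑ρ')^[k] x ∈ A} = S := by
        have hle := Nat.sInf_le hSmem'
        obtain ⟨hpos, hmem⟩ := Nat.sInf_mem (⟨S, hSmem'⟩ :
          Set.Nonempty {k : ℕ | 0 < k ∧ (⇑ρ')^[k] x ∈ A})
        by_contra hne
        have hlt : sInf {k : ℕ | 0 < k ∧ (⇑ρ')^[k] x ∈ A} < S := by omega
        rw [hiter_eq _ (by omega)] at hmem
        exact (hSmin _ hpos hlt) hmem
      rw [dA_mem_eq hx, dA_mem_eq hx, hsInfS, ← hSdef, hiter_eq S le_rfl]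
  -- (2) sharp split of counts
  have hsplit : cnt (R ⇑ρ) W + 1 = cnt (R ⇑ρ') W := by
    set Sg : Set ℤ := (fun i : ℕ => (⇑ρ)^[i] a) '' (Set.Icc 1 (T - 1)) with hSg
    have hSgfin : Sg.Finite := (Set.finite_Icc 1 (T - 1)).image _
    have hbSg : b ∈ Sg := ⟨T - 1, by constructor <;> omega, rfl⟩
    have haSg : a ∉ Sg := by
      rintro ⟨i, ⟨hi1, hi2⟩, h⟩
      exact hseg_ne_a i (by omega) (by omega) h
    have hSgmap : ∀ y ∈ Sg, ρ' y ∈ Sg := by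
      rintro y ⟨i, ⟨hi1, hi2⟩, rfl⟩
      by_cases hib : i = T - 1
      · subst hib
        show ρ' ((⇑ρ)^[T - 1] a) ∈ Sg
        rw [← hbdef, hρ'b]
        refine ⟨1, by constructor <;> omega, ?_⟩
        simp
      · have hia : (⇑ρ)^[i] a ≠ a := hseg_ne_a i (by omega) (by omega)
        have hib' : (⇑ρ)^[i] a ≠ b := by
          rw [hbdef]
          intro h
          have heq : (⇑ρ)^[i] ((⇑ρ)^[T - 1 - i] a) = (⇑ρ)^[i] a := by
            rw [← Function.iterate_add_apply]
            have hmm : i + (T - 1 - i) = T - 1 := by omega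
            rw [hmm, ← h]
          have := (ρ.injective.iterate i) heq
          exact hseg_ne_a (T - 1 - i) (by omega) (by omega) this
        show ρ' ((⇑ρ)^[i] a) ∈ Sg
        rw [hρ'x _ hia hib']
        refine ⟨i + 1, by constructor <;> omega, ?_⟩
        simp only
        rw [Function.iterate_succ_apply']
    have hSgiff := mem_iff_of_mapsTo' ρ'.injective hSgfin hSgmap
    have hnotR : ¬ R ⇑ρ' a b := by
      intro h
      have := R_mem_iff hSgiff h
      exact haSg (this.2 hbSg)
    have hper : ∃ m, 0 < m ∧ (⇑ρ')^[m] b = b :=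
      exists_period ρ'.injective hW hρ'W hbW
    have hreach := R_mul_swap_reach ρ' hnotR hper
    have hfinal := cnt_mul_swap_of_not_rel ρ' hnotR hreach hW (hAW ha) hbW
    rw [hρ'def, mul_swap_swap] at hfinal
    rw [hρ'def]
    exact hfinal
  -- (3) crossing set
  have hcrossing : {x | x ∈ A ∧ ρ' x ∉ A} = {x | x ∈ A ∧ ρ x ∉ A} \ {a} := by
    ext x
    simp only [Set.mem_setOf_eq, Set.mem_diff, Set.mem_singleton_iff]
    constructor
    · rintro ⟨hxA, hx⟩
      by_cases hxa : x = a
      · exfalso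
        apply hx
        rw [hxa, hρ'a]
        exact hTA
      · have hxb : x ≠ b := fun h => hbA (by rw [← h]; exact hxA)
        rw [hρ'x x hxa hxb] at hx
        exact ⟨⟨hxA, hx⟩, hxa⟩
    · rintro ⟨⟨hxA, hx⟩, hxa⟩
      have hxb : x ≠ b := fun h => hbA (by rw [← h]; exact hxA)
      refine ⟨hxA, ?_⟩
      rw [hρ'x x hxa hxb]
      exact hx
  exact ⟨b, hbW, hbA, hba, hρ'W, hpres, hsplit, hcrossing⟩

end NCAux

namespace NCAux

theorem surgery_main (W : Set ℤ) (hW : W.Finite) (σ : Perm ℤ) (hσW : ∀ x ∈ W, σ x ∈ W)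
    (A : Set ℤ) (hAW : A ⊆ W) :
    ∀ n (ρ : Perm ℤ), (∀ x ∈ W, ρ x ∈ W) → ({x | x ∈ A ∧ ρ x ∉ A}).ncard = n →
    ∃ ρt : Perm ℤ, (∀ x ∈ W, ρt x ∈ W) ∧ (∀ x ∈ A, ρt x ∈ A) ∧
      (∀ x ∈ A, ρt x = dA ⇑ρ A x) ∧
      cnt (R ⇑(σ⁻¹ * ρ)) W + cnt (R ⇑ρ) W + 2 * cnt (R2 ⇑σ ⇑ρt) W
        ≤ cnt (R ⇑(σ⁻¹ * ρt)) W + cnt (R ⇑ρt) W + 2 * cnt (R2 ⇑σ ⇑ρ) W := by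
  intro n
  induction n using Nat.strong_induction_on with
  | _ n IH =>
  intro ρ hρW hn
  rcases Nat.eq_zero_or_pos n with hn0 | hnpos
  · -- base : no crossings
    subst hn0
    have hempty : {x | x ∈ A ∧ ρ x ∉ A} = ∅ := by
      have hfin : ({x | x ∈ A ∧ ρ x ∉ A}).Finite :=
        (hW.subset hAW).subset (fun x hx => hx.1)
      exact (Set.ncard_eq_zero hfin).1 hn
    have hmaps : ∀ x ∈ A, ρ x ∈ A := by
      intro x hx
      by_contra h
      have : x ∈ {x | x ∈ A ∧ ρ x ∉ A} := ⟨hx, h⟩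
      rw [hempty] at this
      exact this
    refine ⟨ρ, hρW, hmaps, ?_, le_rfl⟩
    intro x hx
    exact (dA_eq_self_of_mapsTo hmaps hx).symm
  · -- step
    have hne : {x | x ∈ A ∧ ρ x ∉ A}.Nonempty := by
      rw [← Set.ncard_pos ((hW.subset hAW).subset (fun x hx => hx.1))] at *
      omega
    obtain ⟨a, haA, hacross⟩ := hne
    obtain ⟨b, hbW, hbA, hba, hρ'W, hpres, hsplitcnt, hcrossing⟩ :=
      surgery_exists ρ hW hρW hAW haA hacross
    set ρ' := ρ * Equiv.swap a b with hρ'def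
    have hcross' : ({x | x ∈ A ∧ ρ' x ∉ A}).ncard = n - 1 := by
      rw [hρ'def, hcrossing]
      have hfin : ({x | x ∈ A ∧ ρ x ∉ A}).Finite :=
        (hW.subset hAW).subset (fun x hx => hx.1)
      have hmem : a ∈ {x | x ∈ A ∧ ρ x ∉ A} := ⟨haA, hacross⟩
      rw [Set.ncard_diff_singleton_of_mem hmem, hn]
    obtain ⟨ρt, hρtW, hρtA, hρtd, hIH⟩ := IH (n - 1) (by omega) ρ' hρ'W hcross'
    have hρtd' : ∀ x ∈ A, ρt x = dA ⇑ρ A x := by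
      intro x hx
      rw [hρtd x hx, hρ'def, hpres x hx]
    refine ⟨ρt, hρtW, hρtA, hρtd', ?_⟩
    -- one-step inequality : G(σ,ρ') ≤ G(σ,ρ)
    have haW : a ∈ W := hAW haA
    have hinv : σ⁻¹ * ρ' = (σ⁻¹ * ρ) * Equiv.swap a b := by
      rw [hρ'def, mul_assoc]
    have hstep : cnt (R ⇑(σ⁻¹ * ρ)) W + cnt (R ⇑ρ) W + 2 * cnt (R2 ⇑σ ⇑ρ') W
        ≤ cnt (R ⇑(σ⁻¹ * ρ')) W + cnt (R ⇑ρ') W + 2 * cnt (R2 ⇑σ ⇑ρ) W := by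
      have hcntρ : cnt (R ⇑ρ) W + 1 = cnt (R ⇑ρ') W := by
        rw [hρ'def]; exact hsplitcnt
      by_cases hc : R2 ⇑ρ' ⇑σ a b
      · -- joint-connected case
        have hc' : R2 ⇑(ρ * Equiv.swap a b) ⇑σ a b := by rwa [← hρ'def]
        have h2le : cnt (R2 ⇑ρ' ⇑σ) W ≤ cnt (R2 ⇑ρ ⇑σ) W := by
          rw [hρ'def]
          exact cnt_R2_le_mul_swap_of_rel ρ (⇑σ) hW hc'
        have hsoft : cnt (R ⇑(σ⁻¹ * ρ)) W ≤ cnt (R ⇑(σ⁻¹ * ρ')) W + 1 := by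
          rw [hinv]
          exact cnt_le_cnt_mul_swap_add_one (σ⁻¹ * ρ) hW haW hbW
        rw [cnt_R2_comm (⇑σ) (⇑ρ'), cnt_R2_comm (⇑σ) (⇑ρ)]
        omega
      · -- disconnected case
        have hnotrel : ¬ R ⇑(σ⁻¹ * ρ') a b := by
          intro h
          exact hc (R2_comm (R_inv_mul_le_R2 σ ρ' h))
        have hσρ'W : ∀ x ∈ W, (σ⁻¹ * ρ') x ∈ W := by
          intro x hx
          exact mapsTo_inv hW hσW _ (hρ'W x hx)
        have hper : ∃ m, 0 < m ∧ (⇑(σ⁻¹ * ρ'))^[m] b = b :=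
          exists_period (σ⁻¹ * ρ').injective hW hσρ'W hbW
        have hreach := R_mul_swap_reach (σ⁻¹ * ρ') hnotrel hper
        have hsharp := cnt_mul_swap_of_not_rel (σ⁻¹ * ρ') hnotrel hreach hW haW hbW
        have hmid : cnt (R ⇑(σ⁻¹ * ρ)) W + 1 = cnt (R ⇑(σ⁻¹ * ρ')) W := by
          have : (σ⁻¹ * ρ') * Equiv.swap a b = σ⁻¹ * ρ := by
            rw [hinv, mul_swap_swap]
          rw [this] at hsharp
          exact hsharp
        have hsoft2 : cnt (R2 ⇑ρ' ⇑σ) W ≤ cnt (R2 ⇑ρ ⇑σ) W + 1 := by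
          rw [hρ'def]
          exact cnt_R2_mul_swap_le_add_one ρ (⇑σ) hW haW hbW
        rw [cnt_R2_comm (⇑σ) (⇑ρ'), cnt_R2_comm (⇑σ) (⇑ρ)]
        omega
    omega

end NCAux


namespace NCAux
open AnnularNC

variable {p q : ℕ}

def lY (p : ℕ) : List ℤ :=
  ((List.range p).map (fun k : ℕ => ((k + 1 : ℕ) : ℤ))) ++
    ((List.range p).map (fun k : ℕ => -((k + 1 : ℕ) : ℤ)))

def lZ (p q : ℕ) : List ℤ :=
  ((List.range q).map (fun k : ℕ => ((p + k + 1 : ℕ) : ℤ))) ++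
    ((List.range q).map (fun k : ℕ => -((p + k + 1 : ℕ) : ℤ)))

lemma gammaB_eq : gammaB p q = (lY p).formPerm * (lZ p q).formPerm := rfl

lemma mem_lY {x : ℤ} : x ∈ lY p ↔ (x ≠ 0 ∧ x.natAbs ≤ p) := by
  simp only [lY, List.mem_append, List.mem_map, List.mem_range]
  constructor
  · rintro (⟨k, hk, rfl⟩ | ⟨k, hk, rfl⟩) <;> constructor <;> push_cast <;> omega
  · rintro ⟨h0, hle⟩
    rcases lt_or_gt_of_ne h0 with hneg | hpos
    · right
      refine ⟨x.natAbs - 1, by omega, ?_⟩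
      push_cast
      omega
    · left
      refine ⟨x.natAbs - 1, by omega, ?_⟩
      push_cast
      omega

lemma mem_lZ {x : ℤ} : x ∈ lZ p q ↔ (x ≠ 0 ∧ p < x.natAbs ∧ x.natAbs ≤ p + q) := by
  simp only [lZ, List.mem_append, List.mem_map, List.mem_range]
  constructor
  · rintro (⟨k, hk, rfl⟩ | ⟨k, hk, rfl⟩) <;> refine ⟨?_, ?_, ?_⟩ <;> push_cast <;> omega
  · rintro ⟨h0, hgt, hle⟩
    rcases lt_or_gt_of_ne h0 with hneg | hpos
    · right
      refine ⟨x.natAbs - p - 1, by omega, ?_⟩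
      push_cast
      omega
    · left
      refine ⟨x.natAbs - p - 1, by omega, ?_⟩
      push_cast
      omega

lemma nodup_lY : (lY p).Nodup := by
  apply List.Nodup.append
  · refine List.Nodup.map ?_ (List.nodup_range)
    intro a b h
    push_cast at h
    omega
  · refine List.Nodup.map ?_ (List.nodup_range)
    intro a b h
    push_cast at h
    omega
  · intro x hx hy
    simp only [List.mem_map, List.mem_range] at hx hy
    obtain ⟨k, _, rfl⟩ := hx
    obtain ⟨m, _, hm⟩ := hy
    push_cast at hm
    omega

lemma nodup_lZ : (lZ p q).Nodup := by
  apply List.Nodup.append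
  · refine List.Nodup.map ?_ (List.nodup_range)
    intro a b h
    push_cast at h
    omega
  · refine List.Nodup.map ?_ (List.nodup_range)
    intro a b h
    push_cast at h
    omega
  · intro x hx hy
    simp only [List.mem_map, List.mem_range] at hx hy
    obtain ⟨k, _, rfl⟩ := hx
    obtain ⟨m, _, hm⟩ := hy
    push_cast at hm
    omega

lemma not_mem_lZ_of_mem_lY {x : ℤ} (hx : x ∈ lY p) : x ∉ lZ p q := by
  rw [mem_lY] at hx
  rw [mem_lZ]
  omega

lemma not_mem_lY_of_mem_lZ {x : ℤ} (hx : x ∈ lZ p q) : x ∉ lY p := by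
  rw [mem_lZ] at hx
  rw [mem_lY]
  omega

lemma gamma_apply_of_mem_lY {x : ℤ} (hx : x ∈ lY p) :
    gammaB p q x = (lY p).formPerm x := by
  rw [gammaB_eq, Equiv.Perm.mul_apply,
    List.formPerm_apply_of_notMem (not_mem_lZ_of_mem_lY hx)]

lemma gamma_mem_lY {x : ℤ} (hx : x ∈ lY p) : gammaB p q x ∈ lY p := by
  rw [gamma_apply_of_mem_lY hx]
  exact List.formPerm_apply_mem_of_mem hx

lemma gamma_apply_of_mem_lZ {x : ℤ} (hx : x ∈ lZ p q) :
    gammaB p q x = (lZ p q).formPerm x := by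
  rw [gammaB_eq, Equiv.Perm.mul_apply]
  exact List.formPerm_apply_of_notMem
    (not_mem_lY_of_mem_lZ (List.formPerm_apply_mem_of_mem hx))

lemma gamma_mem_lZ {x : ℤ} (hx : x ∈ lZ p q) : gammaB p q x ∈ lZ p q := by
  rw [gamma_apply_of_mem_lZ hx]
  exact List.formPerm_apply_mem_of_mem hx

lemma gamma_apply_of_not_mem {x : ℤ} (hx1 : x ∉ lY p) (hx2 : x ∉ lZ p q) :
    gammaB p q x = x := by
  rw [gammaB_eq, Equiv.Perm.mul_apply, List.formPerm_apply_of_notMem hx2,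
    List.formPerm_apply_of_notMem hx1]

lemma Yset_iff {x : ℤ} : x ∈ Yset p ↔ x ∈ lY p := by
  rw [mem_lY]
  exact Iff.rfl

lemma Zset_iff {x : ℤ} : x ∈ Zset p q ↔ x ∈ lZ p q := by
  rw [mem_lZ]
  constructor
  · rintro ⟨⟨h0, hle⟩, hnot⟩
    refine ⟨h0, ?_, hle⟩
    by_contra h
    exact hnot ⟨h0, by omega⟩
  · rintro ⟨h0, hgt, hle⟩
    exact ⟨⟨h0, hle⟩, fun h => absurd h.2 (by omega)⟩

lemma Xset_iff {n : ℕ} {x : ℤ} : x ∈ Xset n ↔ (x ≠ 0 ∧ x.natAbs ≤ n) := Iff.rfl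

lemma gamma_maps_X : ∀ x ∈ Xset (p + q), gammaB p q x ∈ Xset (p + q) := by
  intro x hx
  by_cases h1 : x ∈ lY p
  · have := gamma_mem_lY (q := q) h1
    rw [mem_lY] at this
    rw [Xset_iff]
    exact ⟨this.1, by omega⟩
  · by_cases h2 : x ∈ lZ p q
    · have := gamma_mem_lZ h2
      rw [mem_lZ] at this
      rw [Xset_iff]
      exact ⟨this.1, by omega⟩
    · rw [gamma_apply_of_not_mem h1 h2]
      exact hx

lemma formPerm_reach {l : List ℤ} (hl : l.Nodup) {x y : ℤ} (hx : x ∈ l) (hy : y ∈ l) :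
    ∃ j, (⇑l.formPerm)^[j] x = y := by
  obtain ⟨i, hi, rfl⟩ := List.getElem_of_mem hx
  obtain ⟨j, hj, rfl⟩ := List.getElem_of_mem hy
  refine ⟨j + l.length - i, ?_⟩
  rw [← Equiv.Perm.coe_pow]
  rw [List.formPerm_pow_apply_getElem _ hl _ _ hi]
  have hidx : (i + (j + l.length - i)) % l.length = j := by
    have h1 : i + (j + l.length - i) = j + l.length := by omega
    rw [h1, Nat.add_mod_right, Nat.mod_eq_of_lt hj]
  simp only [hidx]

lemma gamma_iterate_lY {x : ℤ} (hx : x ∈ lY p) (j : ℕ) :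
    (⇑(gammaB p q))^[j] x = (⇑(lY p).formPerm)^[j] x := by
  induction j with
  | zero => rfl
  | succ m ih =>
      have hmem : (⇑(lY p).formPerm)^[m] x ∈ {y | y ∈ lY p} :=
        iterate_mem (W := {y | y ∈ lY p}) (fun y hy => List.formPerm_apply_mem_of_mem hy) hx m
      rw [Function.iterate_succ_apply', Function.iterate_succ_apply', ih]
      exact gamma_apply_of_mem_lY hmem

lemma gamma_iterate_lZ {x : ℤ} (hx : x ∈ lZ p q) (j : ℕ) :
    (⇑(gammaB p q))^[j] x = (⇑(lZ p q).formPerm)^[j] x := by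
  induction j with
  | zero => rfl
  | succ m ih =>
      have hmem : (⇑(lZ p q).formPerm)^[m] x ∈ {y | y ∈ lZ p q} :=
        iterate_mem (W := {y | y ∈ lZ p q}) (fun y hy => List.formPerm_apply_mem_of_mem hy) hx m
      rw [Function.iterate_succ_apply', Function.iterate_succ_apply', ih]
      exact gamma_apply_of_mem_lZ hmem

lemma gamma_reach_lY {x y : ℤ} (hx : x ∈ lY p) (hy : y ∈ lY p) :
    ∃ j, (⇑(gammaB p q))^[j] x = y := by
  obtain ⟨j, hj⟩ := formPerm_reach nodup_lY hx hy
  exact ⟨j, by rw [gamma_iterate_lY hx]; exact hj⟩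

lemma gamma_reach_lZ {x y : ℤ} (hx : x ∈ lZ p q) (hy : y ∈ lZ p q) :
    ∃ j, (⇑(gammaB p q))^[j] x = y := by
  obtain ⟨j, hj⟩ := formPerm_reach nodup_lZ hx hy
  exact ⟨j, by rw [gamma_iterate_lZ hx]; exact hj⟩

lemma Xset_eq_coe (n : ℕ) : Xset n = (((Finset.Icc (-(n : ℤ)) n).erase 0 : Finset ℤ) : Set ℤ) := by
  ext x
  simp only [Xset, Set.mem_setOf_eq, Finset.coe_erase, Set.mem_diff, Finset.mem_coe,
    Finset.mem_Icc, Set.mem_singleton_iff]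
  omega

lemma Xset_finite (n : ℕ) : (Xset n).Finite := by
  rw [Xset_eq_coe]
  exact (Finset.finite_toSet _)

lemma Xset_ncard (n : ℕ) : (Xset n).ncard = 2 * n := by
  rw [Xset_eq_coe, Set.ncard_coe_finset]
  rw [Finset.card_erase_of_mem (by simp only [Finset.mem_Icc]; omega), Int.card_Icc]
  omega

lemma nOrb_eq (f : ℤ → ℤ) (A : Set ℤ) : nOrb f A = cnt (R f) A := by
  unfold AnnularNC.nOrb cnt AnnularNC.orbSet
  congr 1
  ext O
  constructor
  · rintro ⟨a, ha, rfl⟩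
    exact ⟨a, ha, rfl⟩
  · rintro ⟨a, ha, rfl⟩
    exact ⟨a, ha, rfl⟩

lemma nOrb2_eq (f g : ℤ → ℤ) (A : Set ℤ) : nOrb2 f g A = cnt (R2 f g) A := by
  unfold AnnularNC.nOrb2 cnt AnnularNC.orbSet2
  congr 1
  ext O
  constructor
  · rintro ⟨a, ha, rfl⟩
    exact ⟨a, ha, rfl⟩
  · rintro ⟨a, ha, rfl⟩
    exact ⟨a, ha, rfl⟩

lemma dArrow_eq : AnnularNC.dArrow = dA := rfl

end NCAux

/-- **Lemma 4.14.** Let `B, C ∈ O^B_nc(p,q)` with `B = −B ⊆ Y`, `C = −C ⊆ Z`, and set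
`A = B ∪ C`. If `σ ∈ S^B_nc(p,q)` is such that `A` is a union of orbits of `σ`, then
`σ ↓ A ∈ S_nc(A, γ ↓ A)`:
`#(σ↓A) + #((σ↓A)⁻¹ ∘ (γ↓A)) + 2 = |A| + 2·#(σ↓A, γ↓A)`. -/
theorem induced_nc_wrt_gamma (p q : ℕ) (hp : 0 < p) (hq : 0 < q)
    (B C : Set ℤ) (hB : B ∈ AnnularNC.OncB p q) (hC : C ∈ AnnularNC.OncB p q)
    (hBz : AnnularNC.IsZeroBlock B) (hBY : B ⊆ AnnularNC.Yset p)
    (hCz : AnnularNC.IsZeroBlock C) (hCZ : C ⊆ AnnularNC.Zset p q)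
    (σ : Equiv.Perm ℤ) (hσ : σ ∈ AnnularNC.SBnc p q)
    (hunion : ∃ S ⊆ AnnularNC.Om (p + q) σ, ⋃₀ S = B ∪ C) :
    AnnularNC.nOrb (AnnularNC.dArrow ⇑σ (B ∪ C)) (B ∪ C) +
        AnnularNC.nOrb
          ((AnnularNC.dArrow ⇑σ⁻¹ (B ∪ C)) ∘
            (AnnularNC.dArrow ⇑(AnnularNC.gammaB p q) (B ∪ C))) (B ∪ C) + 2 =
      (B ∪ C).ncard +
        2 * AnnularNC.nOrb2 (AnnularNC.dArrow ⇑σ (B ∪ C))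
          (AnnularNC.dArrow ⇑(AnnularNC.gammaB p q) (B ∪ C)) (B ∪ C) := by
  classical
  open NCAux in
  obtain ⟨hσSnc, hσB⟩ := hσ
  obtain ⟨hσSX, hσeq⟩ := hσSnc
  set γ := AnnularNC.gammaB p q with hγdef
  have hXfin := NCAux.Xset_finite (p + q)
  -- σ preserves X
  have hσX : ∀ x ∈ AnnularNC.Xset (p + q), σ x ∈ AnnularNC.Xset (p + q) := by
    intro x hx
    by_contra h
    have h1 : σ (σ x) = σ x := hσSX _ h
    have h2 := σ.injective h1
    rw [h2] at h
    exact h hx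
  have hγX : ∀ x ∈ AnnularNC.Xset (p + q), γ x ∈ AnnularNC.Xset (p + q) :=
    NCAux.gamma_maps_X
  -- A facts
  have hBlY : ∀ x ∈ B, x ∈ NCAux.lY p := fun x hx => NCAux.Yset_iff.1 (hBY hx)
  have hClZ : ∀ x ∈ C, x ∈ NCAux.lZ p q := fun x hx => NCAux.Zset_iff.1 (hCZ hx)
  have hAX : B ∪ C ⊆ AnnularNC.Xset (p + q) := by
    rintro x (hx | hx)
    · have := NCAux.mem_lY.1 (hBlY x hx)
      exact ⟨this.1, by omega⟩
    · have := NCAux.mem_lZ.1 (hClZ x hx)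
      exact ⟨this.1, by omega⟩
  have hAfin : (B ∪ C).Finite := hXfin.subset hAX
  have hA'fin : (AnnularNC.Xset (p + q) \ (B ∪ C)).Finite := hXfin.diff
  -- A is σ-invariant
  obtain ⟨S, hS_sub, hS_eq⟩ := hunion
  have hσA : ∀ x ∈ B ∪ C, σ x ∈ B ∪ C := by
    intro x hx
    rw [← hS_eq] at hx ⊢
    obtain ⟨O, hO, hxO⟩ := hx
    obtain ⟨a0, ha0X, hOeq⟩ := hS_sub hO
    refine ⟨O, hO, ?_⟩
    rw [hOeq] at hxO ⊢
    have hrel : NCAux.R ⇑σ a0 x := hxO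
    exact (NCAux.R_equiv ⇑σ).trans hrel (NCAux.R_gen x)
  have hσiffA : ∀ x, x ∈ B ∪ C ↔ σ x ∈ B ∪ C :=
    NCAux.mem_iff_of_mapsTo' σ.injective hAfin hσA
  -- surgery
  obtain ⟨ρt, hρtX, hρtA, hρtd, hineq⟩ :=
    NCAux.surgery_main (AnnularNC.Xset (p + q)) hXfin σ hσX (B ∪ C) hAX
      ({x | x ∈ B ∪ C ∧ γ x ∉ B ∪ C}).ncard γ hγX rfl
  have hρtiffA : ∀ x, x ∈ B ∪ C ↔ ρt x ∈ B ∪ C :=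
    NCAux.mem_iff_of_mapsTo' ρt.injective hAfin hρtA
  -- genus-zero on X
  have hgenus0 : NCAux.cnt (NCAux.R ⇑σ) (AnnularNC.Xset (p + q))
      + NCAux.cnt (NCAux.R ⇑(σ⁻¹ * γ)) (AnnularNC.Xset (p + q))
      + NCAux.cnt (NCAux.R ⇑γ) (AnnularNC.Xset (p + q))
      = 2 * (p + q) + 2 * NCAux.cnt (NCAux.R2 ⇑σ ⇑γ) (AnnularNC.Xset (p + q)) := by
    have h := hσeq
    rw [NCAux.nOrb_eq, NCAux.nOrb_eq, NCAux.nOrb_eq, NCAux.nOrb2_eq] at h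
    exact h
  -- splitting over A and A'
  have hXU : AnnularNC.Xset (p + q)
      = (B ∪ C) ∪ (AnnularNC.Xset (p + q) \ (B ∪ C)) :=
    (Set.union_diff_cancel hAX).symm
  have hσA' : ∀ x ∈ AnnularNC.Xset (p + q) \ (B ∪ C),
      σ x ∈ AnnularNC.Xset (p + q) \ (B ∪ C) := by
    rintro x ⟨hx1, hx2⟩
    exact ⟨hσX x hx1, fun h => hx2 ((hσiffA x).2 h)⟩
  have hρtA' : ∀ x ∈ AnnularNC.Xset (p + q) \ (B ∪ C),
      ρt x ∈ AnnularNC.Xset (p + q) \ (B ∪ C) := by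
    rintro x ⟨hx1, hx2⟩
    exact ⟨hρtX x hx1, fun h => hx2 ((hρtiffA x).2 h)⟩
  have hσρtA : ∀ x ∈ B ∪ C, (σ⁻¹ * ρt) x ∈ B ∪ C := by
    intro x hx
    exact NCAux.mapsTo_inv hAfin hσA _ (hρtA x hx)
  have hσρtiffA : ∀ x, x ∈ B ∪ C ↔ (σ⁻¹ * ρt) x ∈ B ∪ C :=
    NCAux.mem_iff_of_mapsTo' (σ⁻¹ * ρt).injective hAfin hσρtA
  have hsepR : ∀ {f : ℤ → ℤ}, (∀ x, x ∈ B ∪ C ↔ f x ∈ B ∪ C) →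
      ∀ x ∈ B ∪ C, ∀ y ∈ AnnularNC.Xset (p + q) \ (B ∪ C), ¬ NCAux.R f x y :=
    fun hiff x hx y hy h => hy.2 ((NCAux.R_mem_iff hiff h).1 hx)
  have hsplit1 : NCAux.cnt (NCAux.R ⇑σ) (AnnularNC.Xset (p + q))
      = NCAux.cnt (NCAux.R ⇑σ) (B ∪ C)
        + NCAux.cnt (NCAux.R ⇑σ) (AnnularNC.Xset (p + q) \ (B ∪ C)) := by
    conv_lhs => rw [hXU]
    exact NCAux.cnt_union_of_sep (NCAux.R_equiv _) hAfin hA'fin (hsepR hσiffA)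
  have hsplit2 : NCAux.cnt (NCAux.R ⇑(σ⁻¹ * ρt)) (AnnularNC.Xset (p + q))
      = NCAux.cnt (NCAux.R ⇑(σ⁻¹ * ρt)) (B ∪ C)
        + NCAux.cnt (NCAux.R ⇑(σ⁻¹ * ρt)) (AnnularNC.Xset (p + q) \ (B ∪ C)) := by
    conv_lhs => rw [hXU]
    exact NCAux.cnt_union_of_sep (NCAux.R_equiv _) hAfin hA'fin (hsepR hσρtiffA)
  have hsplit3 : NCAux.cnt (NCAux.R ⇑ρt) (AnnularNC.Xset (p + q))
      = NCAux.cnt (NCAux.R ⇑ρt) (B ∪ C)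
        + NCAux.cnt (NCAux.R ⇑ρt) (AnnularNC.Xset (p + q) \ (B ∪ C)) := by
    conv_lhs => rw [hXU]
    exact NCAux.cnt_union_of_sep (NCAux.R_equiv _) hAfin hA'fin (hsepR hρtiffA)
  have hsplit4 : NCAux.cnt (NCAux.R2 ⇑σ ⇑ρt) (AnnularNC.Xset (p + q))
      = NCAux.cnt (NCAux.R2 ⇑σ ⇑ρt) (B ∪ C)
        + NCAux.cnt (NCAux.R2 ⇑σ ⇑ρt) (AnnularNC.Xset (p + q) \ (B ∪ C)) := by
    conv_lhs => rw [hXU]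
    refine NCAux.cnt_union_of_sep (NCAux.R2_equiv _ _) hAfin hA'fin ?_
    intro x hx y hy h
    exact hy.2 ((NCAux.R2_mem_iff hσiffA hρtiffA h).1 hx)
  have hncardX : (AnnularNC.Xset (p + q)).ncard
      = (B ∪ C).ncard + (AnnularNC.Xset (p + q) \ (B ∪ C)).ncard := by
    conv_lhs => rw [hXU]
    exact Set.ncard_union_eq Set.disjoint_sdiff_right hAfin hA'fin
  have hXn : (AnnularNC.Xset (p + q)).ncard = 2 * (p + q) := NCAux.Xset_ncard (p + q)
  -- genus inequalities on the two pieces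
  have hgenusA' := NCAux.genus_ineq (AnnularNC.Xset (p + q) \ (B ∪ C)) hA'fin
    ρt hρtA' σ hσA'
  have hgenusA := NCAux.genus_ineq (B ∪ C) hAfin ρt hρtA σ hσA
  -- the A-side equality
  have hAeq : NCAux.cnt (NCAux.R ⇑σ) (B ∪ C) + NCAux.cnt (NCAux.R ⇑(σ⁻¹ * ρt)) (B ∪ C)
      + NCAux.cnt (NCAux.R ⇑ρt) (B ∪ C)
      = (B ∪ C).ncard + 2 * NCAux.cnt (NCAux.R2 ⇑σ ⇑ρt) (B ∪ C) := by
    omega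
  -- return property for γ on A
  have hretγ : ∀ x ∈ B ∪ C, ∃ k, 0 < k ∧ (⇑γ)^[k] x ∈ B ∪ C := by
    intro x hx
    obtain ⟨m, hm, hmx⟩ := NCAux.exists_period γ.injective hXfin hγX (hAX hx)
    refine ⟨m, hm, ?_⟩
    rw [hmx]
    exact hx
  have hdγiff : ∀ x, x ∈ B ∪ C ↔ NCAux.dA ⇑γ (B ∪ C) x ∈ B ∪ C := NCAux.dA_mem_iff hretγ
  -- cnt (R ρt) A = 2
  have hcnt_ρt_A : NCAux.cnt (NCAux.R ⇑ρt) (B ∪ C) = 2 := by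
    have htrans : NCAux.cnt (NCAux.R ⇑ρt) (B ∪ C)
        = NCAux.cnt (NCAux.R (NCAux.dA ⇑γ (B ∪ C))) (B ∪ C) :=
      NCAux.cnt_R_congr_on hρtd hρtiffA hdγiff
    rw [htrans]
    -- pick base points
    obtain ⟨τB, hτB, hBOm⟩ := hB
    obtain ⟨b0, hb0X, hBeq⟩ := hBOm
    have hb0B : b0 ∈ B := by
      rw [hBeq]
      exact (NCAux.R_equiv ⇑τB).refl b0
    obtain ⟨τC, hτC, hCOm⟩ := hC
    obtain ⟨c0, hc0X, hCeq⟩ := hCOm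
    have hc0C : c0 ∈ C := by
      rw [hCeq]
      exact (NCAux.R_equiv ⇑τC).refl c0
    -- B is invariant under dA γ A
    have hval_lY : ∀ x ∈ B, NCAux.dA ⇑γ (B ∪ C) x ∈ NCAux.lY p := by
      intro x hx
      rw [NCAux.dA_mem_eq (Or.inl hx)]
      exact NCAux.iterate_mem (W := {y | y ∈ NCAux.lY p})
        (fun y hy => NCAux.gamma_mem_lY hy) (hBlY x hx) _
    have hval_lZ : ∀ x ∈ C, NCAux.dA ⇑γ (B ∪ C) x ∈ NCAux.lZ p q := by
      intro x hx
      rw [NCAux.dA_mem_eq (Or.inr hx)]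
      exact NCAux.iterate_mem (W := {y | y ∈ NCAux.lZ p q})
        (fun y hy => NCAux.gamma_mem_lZ hy) (hClZ x hx) _
    have hmemB : ∀ x ∈ B ∪ C, x ∈ NCAux.lY p → x ∈ B := by
      rintro x (hx | hx) hlY
      · exact hx
      · exact absurd hlY (NCAux.not_mem_lY_of_mem_lZ (hClZ x hx))
    have hmemC : ∀ x ∈ B ∪ C, x ∈ NCAux.lZ p q → x ∈ C := by
      rintro x (hx | hx) hlZ
      · exact absurd (hBlY x hx) (NCAux.not_mem_lY_of_mem_lZ hlZ)
      · exact hx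
    have hBiff : ∀ x, x ∈ B ↔ NCAux.dA ⇑γ (B ∪ C) x ∈ B := by
      intro x
      constructor
      · intro hx
        exact hmemB _ (NCAux.dA_mem (Or.inl hx) (hretγ x (Or.inl hx))) (hval_lY x hx)
      · intro h
        by_contra hx
        by_cases hxC : x ∈ C
        · have := hmemC _ (NCAux.dA_mem (Or.inr hxC) (hretγ x (Or.inr hxC))) (hval_lZ x hxC)
          exact absurd (hBlY _ h) (NCAux.not_mem_lY_of_mem_lZ (hClZ _ this))
        · have hxA : x ∉ B ∪ C := by
            rintro (h1 | h1)
            exacts [hx h1, hxC h1]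
          rw [NCAux.dA_not_mem hxA] at h
          exact hx h
    have hnotbc : ¬ NCAux.R (NCAux.dA ⇑γ (B ∪ C)) b0 c0 := by
      intro h
      have := (NCAux.R_mem_iff hBiff h).1 hb0B
      exact absurd (hBlY _ this) (NCAux.not_mem_lY_of_mem_lZ (hClZ _ hc0C))
    have hpart : ∀ x ∈ B ∪ C, NCAux.R (NCAux.dA ⇑γ (B ∪ C)) b0 x
        ∨ NCAux.R (NCAux.dA ⇑γ (B ∪ C)) c0 x := by
      rintro x (hx | hx)
      · left
        obtain ⟨j, hj⟩ := NCAux.gamma_reach_lY (hBlY b0 hb0B) (hBlY x hx)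
        have := NCAux.R_dA_of_iterate_mem hretγ j b0 (Or.inl hb0B)
          (by rw [hj]; exact Or.inl hx)
        rwa [hj] at this
      · right
        obtain ⟨j, hj⟩ := NCAux.gamma_reach_lZ (hClZ c0 hc0C) (hClZ x hx)
        have := NCAux.R_dA_of_iterate_mem hretγ j c0 (Or.inr hc0C)
          (by rw [hj]; exact Or.inr hx)
        rwa [hj] at this
    exact NCAux.cnt_pair (NCAux.R_equiv _) (Or.inl hb0B) (Or.inr hc0C) hpart hnotbc
  -- transfers to the dArrow formulation
  rw [NCAux.nOrb_eq, NCAux.nOrb_eq, NCAux.nOrb2_eq, NCAux.dArrow_eq]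
  have hσAd : ∀ x ∈ B ∪ C, NCAux.dA ⇑σ (B ∪ C) x = σ x :=
    fun x hx => NCAux.dA_eq_self_of_mapsTo hσA hx
  have hdσiff : ∀ x, x ∈ B ∪ C ↔ NCAux.dA ⇑σ (B ∪ C) x ∈ B ∪ C := by
    intro x
    constructor
    · intro hx
      rw [hσAd x hx]
      exact hσA x hx
    · intro h
      by_contra hx
      rw [NCAux.dA_not_mem hx] at h
      exact hx h
  have hσinvA : ∀ x ∈ B ∪ C, σ⁻¹ x ∈ B ∪ C := NCAux.mapsTo_inv hAfin hσA
  have hcompA : ∀ x ∈ B ∪ C,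
      ((NCAux.dA ⇑σ⁻¹ (B ∪ C)) ∘ (NCAux.dA ⇑γ (B ∪ C))) x = (σ⁻¹ * ρt) x := by
    intro x hx
    have h1 : NCAux.dA ⇑γ (B ∪ C) x ∈ B ∪ C := (hdγiff x).1 hx
    simp only [Function.comp_apply]
    rw [NCAux.dA_eq_self_of_mapsTo hσinvA h1, Equiv.Perm.mul_apply]
    congr 1
    rw [hρtd x hx]
  have hcompiff : ∀ x, x ∈ B ∪ C ↔
      ((NCAux.dA ⇑σ⁻¹ (B ∪ C)) ∘ (NCAux.dA ⇑γ (B ∪ C))) x ∈ B ∪ C := by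
    intro x
    constructor
    · intro hx
      rw [hcompA x hx]
      exact hσρtA x hx
    · intro h
      by_contra hx
      simp only [Function.comp_apply] at h
      rw [NCAux.dA_not_mem hx, NCAux.dA_not_mem hx] at h
      exact hx h
  have t1 : NCAux.cnt (NCAux.R (NCAux.dA ⇑σ (B ∪ C))) (B ∪ C)
      = NCAux.cnt (NCAux.R ⇑σ) (B ∪ C) :=
    NCAux.cnt_R_congr_on hσAd hdσiff hσiffA
  have t2 : NCAux.cnt (NCAux.R ((NCAux.dA ⇑σ⁻¹ (B ∪ C)) ∘ (NCAux.dA ⇑γ (B ∪ C)))) (B ∪ C)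
      = NCAux.cnt (NCAux.R ⇑(σ⁻¹ * ρt)) (B ∪ C) :=
    NCAux.cnt_R_congr_on hcompA hcompiff hσρtiffA
  have t3 : NCAux.cnt (NCAux.R2 (NCAux.dA ⇑σ (B ∪ C)) (NCAux.dA ⇑γ (B ∪ C))) (B ∪ C)
      = NCAux.cnt (NCAux.R2 ⇑σ ⇑ρt) (B ∪ C) :=
    NCAux.cnt_R2_congr_on hσAd (fun x hx => (hρtd x hx).symm) hdσiff hdγiff hσiffA hρtiffA
  rw [t1, t2, t3]
  omega
end
end
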